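/- arXiv:2508.07447 — 9 statements merged into one kernel-verified Lean document; each statement's English description precedes it below -/
import Mathlib

section
/- Let p be an odd prime, N ≥ 1 and e ≥ 1 integers. If B ∈ GL_N(ℤ/p^eℤ) satisfies B^p = I and B ≡ I (mod p) (i.e., B reduces to the identity in GL_N(ℤ/pℤ)), then B ≡ I (mod p^{e-1}), i.e., B reduces to the identity in GL_N(ℤ/p^{e-1}ℤ). -/
open Finset in
/-- Key inductive step: if `M^p ≡ 1 (mod p^e)` and `M ≡ 1 (mod p^j)` with
`1 ≤ j` and `j + 2 ≤ e`, then `M ≡ 1 (mod p^(j+1))`. -/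
lemma stmt0_key (p : ℕ) (hp : p.Prime) (hodd : Odd p) {N : ℕ}
    (M : Matrix (Fin N) (Fin N) ℤ) (e j : ℕ) (hj1 : 1 ≤ j) (hje : j + 2 ≤ e)
    (hMp : ∀ i k, (p : ℤ) ^ e ∣ (M ^ p - 1) i k)
    (hMj : ∀ i k, (p : ℤ) ^ j ∣ (M - 1) i k) :
    ∀ i k, (p : ℤ) ^ (j + 1) ∣ (M - 1) i k := by
  have hp3 : 3 ≤ p := by
    have h1 := Nat.odd_iff.mp hodd
    have h2 := hp.two_le
    omega
  -- define A with M - 1 = p^j • A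
  set A : Matrix (Fin N) (Fin N) ℤ := Matrix.of fun i k => (M - 1) i k / (p : ℤ) ^ j with hA
  have hMA : M - 1 = ((p : ℤ) ^ j) • A := by
    ext i k
    simp only [hA, Matrix.smul_apply, Matrix.of_apply, smul_eq_mul]
    exact (Int.mul_ediv_cancel' (hMj i k)).symm
  have hM : M = ((p : ℤ) ^ j) • A + 1 := by rw [← hMA]; abel
  -- binomial expansion
  have hexp : M ^ p = ∑ m ∈ range (p + 1),
      (((p : ℤ) ^ j) • A) ^ m * 1 ^ (p - m) * (p.choose m : Matrix (Fin N) (Fin N) ℤ) := by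
    conv_lhs => rw [hM, (Commute.one_right (((p : ℤ) ^ j) • A)).add_pow]
  intro i k
  set f : ℕ → ℤ := fun m => (p : ℤ) ^ (j * m) * (p.choose m : ℤ) * ((A ^ m) i k) with hf
  have hentry : (M ^ p) i k = ∑ m ∈ range (p + 1), f m := by
    rw [hexp, Matrix.sum_apply]
    refine Finset.sum_congr rfl fun m _ => ?_
    rw [one_pow, mul_one, ← Matrix.diagonal_natCast, Matrix.mul_diagonal, smul_pow,
      Matrix.smul_apply, hf]
    simp only [smul_eq_mul, ← pow_mul]
    ring
  -- split the sum
  have hsplit : ∑ m ∈ range (p + 1), f m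
      = (∑ m ∈ range (p - 1), f (m + 2)) + f 1 + f 0 := by
    rw [Finset.sum_range_succ']
    congr 1
    have hpe : p = (p - 1) + 1 := by omega
    rw [hpe, Finset.sum_range_succ']
    simp
  have hf0 : f 0 = (1 : Matrix (Fin N) (Fin N) ℤ) i k := by
    simp [hf]
  have hf1 : f 1 = (p : ℤ) ^ (j + 1) * A i k := by
    simp only [hf, mul_one, Nat.choose_one_right, pow_one]
    ring
  -- each higher term is divisible by p^(j+2)
  have hdvd : ∀ m ∈ range (p - 1), (p : ℤ) ^ (j + 2) ∣ f (m + 2) := by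
    intro m hm
    rw [Finset.mem_range] at hm
    rcases eq_or_lt_of_le (by omega : m + 2 ≤ p) with hmp | hmp
    · refine dvd_mul_of_dvd_left (dvd_mul_of_dvd_left ?_ _) _
      exact pow_dvd_pow _ (by nlinarith)
    · refine dvd_mul_of_dvd_left ?_ _
      have h1 : (p : ℤ) ^ (j + 1) ∣ (p : ℤ) ^ (j * (m + 2)) :=
        pow_dvd_pow _ (by nlinarith)
      have h2 : (p : ℤ) ∣ (p.choose (m + 2) : ℤ) := by
        exact_mod_cast Int.natCast_dvd_natCast.mpr
          (hp.dvd_choose_self (by omega) hmp)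
      calc (p : ℤ) ^ (j + 2) = (p : ℤ) ^ (j + 1) * p := by ring
        _ ∣ _ := mul_dvd_mul h1 h2
  have hsum : (p : ℤ) ^ (j + 2) ∣ ∑ m ∈ range (p - 1), f (m + 2) :=
    Finset.dvd_sum hdvd
  have hMp' : (p : ℤ) ^ (j + 2) ∣ (M ^ p - 1) i k :=
    dvd_trans (pow_dvd_pow _ hje) (hMp i k)
  have hA1 : (p : ℤ) ^ (j + 2) ∣ (p : ℤ) ^ (j + 1) * A i k := by
    have : (p : ℤ) ^ (j + 1) * A i k
        = (M ^ p - 1) i k - ∑ m ∈ range (p - 1), f (m + 2) := by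
      rw [Matrix.sub_apply, hentry, hsplit, hf0, hf1]; ring
    rw [this]
    exact dvd_sub hMp' hsum
  have hpA : (p : ℤ) ∣ A i k := by
    have hne : ((p : ℤ) ^ (j + 1)) ≠ 0 :=
      pow_ne_zero _ (by exact_mod_cast hp.ne_zero)
    have : (p : ℤ) ^ (j + 2) = (p : ℤ) ^ (j + 1) * p := by ring
    rw [this, mul_dvd_mul_iff_left hne] at hA1
    exact hA1
  have : (M - 1) i k = (p : ℤ) ^ j * A i k := by
    rw [hMA, Matrix.smul_apply, smul_eq_mul]
  rw [this, pow_succ]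
  exact mul_dvd_mul_left _ hpA

/-- Let `p` be an odd prime, `N ≥ 1`, `e ≥ 1`. If `B ∈ GL_N(ℤ/p^eℤ)`
satisfies `B^p = I` and `B ≡ I (mod p)`, then `B ≡ I (mod p^(e-1))`. -/
theorem stmt_0 (p N e : ℕ) (hp : p.Prime) (hodd : Odd p) (hN : 1 ≤ N) (he : 1 ≤ e)
    (B : GL (Fin N) (ZMod (p ^ e)))
    (hBp : B ^ p = 1)
    (hB1 : Matrix.GeneralLinearGroup.map
      (ZMod.castHom (dvd_pow_self p (by omega : e ≠ 0)) (ZMod p)) B = 1) :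
    Matrix.GeneralLinearGroup.map
      (ZMod.castHom (pow_dvd_pow p (Nat.sub_le e 1)) (ZMod (p ^ (e - 1)))) B = 1 := by
  haveI : NeZero (p ^ e) := ⟨pow_ne_zero _ hp.ne_zero⟩
  by_cases he1 : e = 1
  · subst he1
    haveI : Subsingleton (ZMod (p ^ (1 - 1))) := by
      rw [show p ^ (1 - 1) = 1 by norm_num]
      infer_instance
    apply Units.ext
    exact Subsingleton.elim _ _
  have he2 : 2 ≤ e := by omega
  -- integer lift of B
  set M : Matrix (Fin N) (Fin N) ℤ :=
    Matrix.of (fun i k => (((B : Matrix (Fin N) (Fin N) (ZMod (p ^ e))) i k).val : ℤ)) with hMdef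
  have hMcast : M.map (Int.cast : ℤ → ZMod (p ^ e))
      = (B : Matrix (Fin N) (Fin N) (ZMod (p ^ e))) := by
    ext i k
    simp [hMdef, Matrix.map_apply, ZMod.natCast_val, ZMod.cast_id]
  have hcastM : ∀ {n : ℕ} (h : n ∣ p ^ e) (i k : Fin N),
      ZMod.castHom h (ZMod n) ((B : Matrix (Fin N) (Fin N) (ZMod (p ^ e))) i k)
        = ((M i k : ℤ) : ZMod n) := by
    intro n h i k
    conv_lhs => rw [show (B : Matrix (Fin N) (Fin N) (ZMod (p ^ e))) i k
      = ((((B : Matrix (Fin N) (Fin N) (ZMod (p ^ e))) i k).val : ℕ) : ZMod (p ^ e)) by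
        rw [ZMod.natCast_val, ZMod.cast_id]]
    rw [map_natCast]
    simp [hMdef]
  -- B^p = 1 at the matrix level
  have hBpval : (B : Matrix (Fin N) (Fin N) (ZMod (p ^ e))) ^ p = 1 := by
    have := congrArg Units.val hBp
    simpa using this
  have hMp : ∀ i k, (p : ℤ) ^ e ∣ (M ^ p - 1) i k := by
    intro i k
    have h0 : (((M ^ p - 1) i k : ℤ) : ZMod (p ^ e)) = 0 := by
      have h1 : (Int.castRingHom (ZMod (p ^ e))).mapMatrix (M ^ p - 1) = 0 := by
        rw [map_sub, map_pow, map_one]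
        simp only [RingHom.mapMatrix_apply, Int.coe_castRingHom]
        rw [hMcast, hBpval]
        simp
      have h2 : ((Int.castRingHom (ZMod (p ^ e))).mapMatrix (M ^ p - 1)) i k
          = (0 : Matrix (Fin N) (Fin N) (ZMod (p ^ e))) i k := by rw [h1]
      simpa [RingHom.mapMatrix_apply, Matrix.map_apply] using h2
    have := (ZMod.intCast_zmod_eq_zero_iff_dvd _ _).mp h0
    exact_mod_cast this
  -- B ≡ 1 mod p at the matrix level
  have hM1 : ∀ i k, (p : ℤ) ^ 1 ∣ (M - 1) i k := by
    intro i k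
    have h1 := congrArg Units.val hB1
    have h2 : ((B : Matrix (Fin N) (Fin N) (ZMod (p ^ e))).map
        (ZMod.castHom (dvd_pow_self p (by omega : e ≠ 0)) (ZMod p))) = 1 := by
      simpa [Matrix.GeneralLinearGroup.map, RingHom.mapMatrix_apply] using h1
    have h3 : ((B : Matrix (Fin N) (Fin N) (ZMod (p ^ e))).map
        (ZMod.castHom (dvd_pow_self p (by omega : e ≠ 0)) (ZMod p))) i k
          = (1 : Matrix (Fin N) (Fin N) (ZMod p)) i k := by rw [h2]
    rw [Matrix.map_apply, hcastM] at h3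
    have h0 : (((M - 1) i k : ℤ) : ZMod p) = 0 := by
      rw [Matrix.sub_apply]
      push_cast
      rw [h3]
      rcases eq_or_ne i k with h | h <;> simp [Matrix.one_apply, h]
    have := (ZMod.intCast_zmod_eq_zero_iff_dvd _ _).mp h0
    rw [pow_one]
    exact_mod_cast this
  -- induction
  have key : ∀ j, 1 ≤ j → j ≤ e - 1 → ∀ i k, (p : ℤ) ^ j ∣ (M - 1) i k := by
    intro j
    induction j with
    | zero => omega
    | succ n ih =>
      intro h1 h2
      rcases Nat.eq_zero_or_pos n with hn | hn
      · subst hn; exact hM1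
      · exact stmt0_key p hp hodd M e n hn (by omega) hMp (ih hn (by omega))
  have hfin := key (e - 1) (by omega) le_rfl
  -- conclude
  apply Units.ext
  show ((B : Matrix (Fin N) (Fin N) (ZMod (p ^ e))).map
      (ZMod.castHom (pow_dvd_pow p (Nat.sub_le e 1)) (ZMod (p ^ (e - 1))))) = 1
  ext i k
  rw [Matrix.map_apply, hcastM]
  have h0 : (((M - 1) i k : ℤ) : ZMod (p ^ (e - 1))) = 0 := by
    rw [ZMod.intCast_zmod_eq_zero_iff_dvd]
    exact_mod_cast hfin i k
  rw [Matrix.sub_apply] at h0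
  push_cast at h0
  rw [sub_eq_zero] at h0
  rw [h0]
  rcases eq_or_ne i k with h | h <;> simp [Matrix.one_apply, h]
end

section
/- Let e ≥ 2 and N ≥ 1 be integers. If B ∈ GL_N(ℤ/2^eℤ) satisfies B^2 = I and B ≡ I (mod 4), then B ≡ I (mod 2^{e-1}). -/
/-- Let `e ≥ 2`, `N ≥ 1`. If `B ∈ GL_N(ℤ/2^eℤ)` satisfies `B^2 = I`
and `B ≡ I (mod 4)`, then `B ≡ I (mod 2^(e-1))`. -/
theorem stmt_1 (N e : ℕ) (hN : 1 ≤ N) (he : 2 ≤ e)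
    (B : GL (Fin N) (ZMod (2 ^ e)))
    (hB2 : B ^ 2 = 1)
    (hB4 : Matrix.GeneralLinearGroup.map
      (ZMod.castHom (pow_dvd_pow 2 he) (ZMod (2 ^ 2))) B = 1) :
    Matrix.GeneralLinearGroup.map
      (ZMod.castHom (pow_dvd_pow 2 (Nat.sub_le e 1)) (ZMod (2 ^ (e - 1)))) B = 1 := by
  haveI : NeZero ((2:ℕ) ^ e) := ⟨pow_ne_zero _ two_ne_zero⟩
  set M : Matrix (Fin N) (Fin N) ℤ := fun i k => ((B i k).val : ℤ) with hM
  set A : Matrix (Fin N) (Fin N) ℤ := M - 1 with hA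
  have hcast : ∀ i k, ((M i k : ℤ) : ZMod (2^e)) = B i k := by
    intro i k
    simp [hM, ZMod.natCast_val, ZMod.intCast_cast, ZMod.cast_id]
  -- mod 4: 4 ∣ A i k
  have h4 : ∀ i k, ((2:ℤ)^2) ∣ A i k := by
    intro i k
    have h1 : Matrix.GeneralLinearGroup.map
        (ZMod.castHom (pow_dvd_pow 2 he) (ZMod (2 ^ 2))) B i k = (1 : GL (Fin N) (ZMod (2^2))) i k := by
      rw [hB4]
    rw [Matrix.GeneralLinearGroup.map_apply] at h1
    have h2 : ((M i k : ℤ) : ZMod (2^2)) = ((1 : Matrix (Fin N) (Fin N) ℤ) i k : ℤ) := by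
      have : ((M i k : ℤ) : ZMod (2^2)) = ZMod.castHom (pow_dvd_pow 2 he) (ZMod (2 ^ 2)) (B i k) := by
        simp [hM, ZMod.natCast_val, ZMod.intCast_cast]
      rw [this, h1]
      by_cases h : i = k <;> simp [h, Matrix.one_apply, Units.val_one]
    have h3 : (((A i k : ℤ)) : ZMod (2^2)) = 0 := by
      simp only [hA, Matrix.sub_apply]
      push_cast
      rw [h2]
      ring
    have := (ZMod.intCast_zmod_eq_zero_iff_dvd _ (2^2)).mp h3
    exact_mod_cast this
  -- squared relation: 2^e ∣ (A*A + 2•A) i k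
  have hrel : ∀ i k, ((2:ℤ)^e) ∣ (A * A + 2 • A) i k := by
    intro i k
    have hsq : ((M * M - 1 : Matrix (Fin N) (Fin N) ℤ).map (Int.cast : ℤ → ZMod (2^e))) = 0 := by
      have hB2' : (B : Matrix (Fin N) (Fin N) (ZMod (2^e))) * B = 1 := by
        have := congrArg (Units.val) hB2
        simpa [pow_two] using this
      have hmm : (M.map (Int.cast : ℤ → ZMod (2^e))) = (B : Matrix (Fin N) (Fin N) (ZMod (2^e))) := by
        ext i' k'; simp [Matrix.map_apply, hcast]
      have : ((Int.castRingHom (ZMod (2^e))).mapMatrix (M * M - 1)) = 0 := by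
        simp only [map_sub, map_mul, map_one]
        have : ((Int.castRingHom (ZMod (2^e))).mapMatrix M) = (B : Matrix (Fin N) (Fin N) (ZMod (2^e))) := hmm
        rw [this, hB2']
        simp
      exact this
    have hentry : (((M * M - 1) i k : ℤ) : ZMod (2^e)) = 0 := by
      have := congrFun (congrFun hsq i) k
      simpa [Matrix.map_apply] using this
    have hid : (M * M - 1 : Matrix (Fin N) (Fin N) ℤ) = A * A + 2 • A := by
      rw [hA]; noncomm_ring
    rw [hid] at hentry
    have := (ZMod.intCast_zmod_eq_zero_iff_dvd _ (2^e)).mp hentry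
    exact_mod_cast this
  -- induction
  have key : ∀ j, j ≤ e - 1 → ∀ i k, ((2:ℤ)^j) ∣ A i k := by
    intro j
    induction j with
    | zero => intro _ i k; simp
    | succ j ih =>
      intro hj i k
      by_cases hj2 : j + 1 ≤ 2
      · exact dvd_trans (pow_dvd_pow 2 hj2) (h4 i k)
      · push_neg at hj2
        have hj' : 2 ≤ j := by omega
        have hje : j + 2 ≤ e := by omega
        have ihA : ∀ i' k', ((2:ℤ)^j) ∣ A i' k' := ih (by omega)
        -- 2^(j+2) ∣ (A*A) i k
        have hAA : ((2:ℤ)^(j+2)) ∣ (A * A) i k := by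
          rw [Matrix.mul_apply]
          apply Finset.dvd_sum
          intro l _
          calc ((2:ℤ)^(j+2)) ∣ (2:ℤ)^(j+j) := pow_dvd_pow 2 (by omega)
            _ = (2:ℤ)^j * (2:ℤ)^j := by rw [pow_add]
            _ ∣ A i l * A l k := mul_dvd_mul (ihA i l) (ihA l k)
        have h2A : ((2:ℤ)^(j+2)) ∣ 2 * A i k := by
          have h1 : ((2:ℤ)^(j+2)) ∣ (A * A + 2 • A) i k :=
            dvd_trans (pow_dvd_pow 2 hje) (hrel i k)
          have : (A * A + 2 • A) i k = (A*A) i k + 2 * A i k := by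
            simp [Matrix.add_apply, Matrix.smul_apply, two_smul]; ring
          rw [this] at h1
          have := dvd_sub h1 hAA
          simpa using this
        have : ((2:ℤ)^(j+1) * 2) ∣ (A i k * 2) := by
          have : ((2:ℤ)^(j+2)) = (2:ℤ)^(j+1) * 2 := by ring
          rw [← this]
          rw [mul_comm] at h2A
          exact h2A
        exact (mul_dvd_mul_iff_right (two_ne_zero)).mp this
  -- conclude
  apply Units.ext
  apply Matrix.ext
  intro i k
  have hd := key (e-1) le_rfl i k
  have h0 : (((A i k : ℤ)) : ZMod (2^(e-1))) = 0 := by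
    rw [ZMod.intCast_zmod_eq_zero_iff_dvd]
    exact_mod_cast hd
  have hMk : ((M i k : ℤ) : ZMod (2^(e-1))) = ((1 : Matrix (Fin N) (Fin N) ℤ) i k : ℤ) := by
    have : ((A i k : ℤ) : ZMod (2^(e-1))) = ((M i k : ℤ) : ZMod (2^(e-1))) - (((1 : Matrix (Fin N) (Fin N) ℤ) i k : ℤ) : ZMod (2^(e-1))) := by
      simp [hA, Matrix.sub_apply]
    rw [this] at h0
    linear_combination h0
  have hlhs : (Matrix.GeneralLinearGroup.map
      (ZMod.castHom (pow_dvd_pow 2 (Nat.sub_le e 1)) (ZMod (2 ^ (e - 1)))) B : Matrix (Fin N) (Fin N) (ZMod (2^(e-1)))) i k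
      = ZMod.castHom (pow_dvd_pow 2 (Nat.sub_le e 1)) (ZMod (2 ^ (e - 1))) (B i k) :=
    Matrix.GeneralLinearGroup.map_apply _ i k B
  rw [hlhs]
  have : ((M i k : ℤ) : ZMod (2^(e-1))) = ZMod.castHom (pow_dvd_pow 2 (Nat.sub_le e 1)) (ZMod (2 ^ (e - 1))) (B i k) := by
    simp [hM, ZMod.natCast_val, ZMod.intCast_cast]
  rw [← this, hMk]
  by_cases h : i = k <;> simp [h, Matrix.one_apply, Units.val_one]
end

section
/- Let p be a prime, N ≥ 1, e ≥ 1, and 1 ≤ j ≤ e-2. If A ∈ M_N(ℤ/p^eℤ) and B = I + p^j A satisfies B^p = I, with the additional assumption j ≥ 2 when p = 2, then p divides A, i.e., A ∈ p·M_N(ℤ/p^eℤ). -/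
lemma key_scalar (p e j : ℕ) (hp : p.Prime) (hje : j + 2 ≤ e) (a b : ZMod (p^e))
    (h : (p:ZMod (p^e))^(j+1) * a = (p:ZMod (p^e))^(j+2) * b) : ∃ c, a = p * c := by
  haveI : NeZero (p^e) := ⟨pow_ne_zero _ hp.pos.ne'⟩
  set x : ZMod (p^e) := a - p * b with hx
  have h0 : (p:ZMod (p^e))^(j+1) * x = 0 := by
    rw [hx]; linear_combination h
  have h1 : ((p^(j+1) * x.val : ℕ) : ZMod (p^e)) = 0 := by
    push_cast
    rw [ZMod.natCast_val, ZMod.cast_id]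
    exact h0
  rw [ZMod.natCast_eq_zero_iff] at h1
  have he' : e = (j+1) + (e - (j+1)) := by omega
  have h2 : p^(e-(j+1)) ∣ x.val := by
    have hd : p^(j+1) * p^(e-(j+1)) ∣ p^(j+1) * x.val := by
      rw [← pow_add, ← he']; exact h1
    exact (mul_dvd_mul_iff_left (pow_ne_zero (j+1) hp.pos.ne')).mp hd
  have h3 : p ∣ x.val := dvd_trans (dvd_pow_self p (by omega : e - (j+1) ≠ 0)) h2
  obtain ⟨c0, hc0⟩ := h3
  refine ⟨c0 + b, ?_⟩
  have hxv : (x.val : ZMod (p^e)) = x := by rw [ZMod.natCast_val, ZMod.cast_id]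
  have : x = p * c0 := by rw [← hxv, hc0]; push_cast; ring
  rw [hx] at this
  linear_combination this

lemma key_dvd (p j k : ℕ) (hp : p.Prime) (hj1 : 1 ≤ j) (hp2 : p = 2 → 2 ≤ j)
    (hk2 : 2 ≤ k) (hkp : k ≤ p) : p^(j+2) ∣ p^(j*k) * p.choose k := by
  rcases eq_or_lt_of_le hkp with h | h
  · have : j + 2 ≤ j * k := by
      rcases eq_or_lt_of_le hp.two_le with h2 | h3
      · have := hp2 h2.symm; nlinarith
      · have : 3 ≤ k := by omega
        nlinarith
    exact Dvd.dvd.mul_right (pow_dvd_pow p this) _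
  · have hc : p ∣ p.choose k := hp.dvd_choose_self (by omega) h
    have hpow : p^(j+1) ∣ p^(j*k) := pow_dvd_pow p (by nlinarith)
    calc p^(j+2) = p^(j+1) * p := by ring
    _ ∣ p^(j*k) * p.choose k := mul_dvd_mul hpow hc


/-- Let `p` be a prime, `N ≥ 1`, `e ≥ 1`, `1 ≤ j ≤ e-2` (with `j ≥ 2` when
`p = 2`). If `A ∈ M_N(ℤ/p^eℤ)` and `B = I + p^j A` satisfies `B^p = I`, then `p ∣ A`. -/
theorem stmt_2 (p N e j : ℕ) (hp : p.Prime) (hN : 1 ≤ N) (he : 1 ≤ e)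
    (hj1 : 1 ≤ j) (hje : j ≤ e - 2) (hp2 : p = 2 → 2 ≤ j)
    (A : Matrix (Fin N) (Fin N) (ZMod (p ^ e)))
    (hB : ((1 : Matrix (Fin N) (Fin N) (ZMod (p ^ e))) + (p : ZMod (p ^ e)) ^ j • A) ^ p = 1) :
    ∃ C : Matrix (Fin N) (Fin N) (ZMod (p ^ e)), A = (p : ZMod (p ^ e)) • C := by
  have hp2' := hp.two_le
  have hje' : j + 2 ≤ e := by omega
  have hcomm : Commute ((p : ZMod (p^e))^j • A) (1 : Matrix (Fin N) (Fin N) (ZMod (p^e))) :=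
    Commute.one_right _
  rw [add_comm, hcomm.add_pow] at hB
  simp only [one_pow, mul_one] at hB
  obtain ⟨q, hq⟩ : ∃ q, p = q + 2 := ⟨p-2, by omega⟩
  rw [Finset.sum_range_succ',
      show Finset.range p = Finset.range (q+1+1) from by rw [hq],
      Finset.sum_range_succ'] at hB
  simp only [zero_add, pow_zero, pow_one, Nat.choose_zero_right, Nat.choose_one_right,
    Nat.cast_one, mul_one] at hB
  -- hB : ∑ k in range (q+1), (p^j•A)^(k+2) * ↑(choose p (k+2)) + (p^j•A) * ↑p + 1 = 1
  have hT : ((p : ZMod (p^e))^j • A) * (p : Matrix (Fin N) (Fin N) (ZMod (p^e)))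
      = (p : ZMod (p^e))^(j+1) • A := by
    rw [smul_mul_assoc, ← nsmul_eq_mul', ← Nat.cast_smul_eq_nsmul (ZMod (p^e)),
      smul_smul, pow_succ]
  -- express each summand
  have hg : ∀ k ∈ Finset.range (q+1),
      ((p : ZMod (p^e))^j • A)^(k+1+1) * ((p.choose (k+1+1) : ℕ) : Matrix (Fin N) (Fin N) (ZMod (p^e)))
      = (p : ZMod (p^e))^(j+2) • ((((p^(j*(k+2)) * p.choose (k+2)) / p^(j+2) : ℕ) : ZMod (p^e)) • A^(k+2)) := by
    intro k hk
    have hk' := Finset.mem_range.mp hk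
    have hdvd := key_dvd p j (k+2) hp hj1 hp2 (by omega) (by omega)
    rw [smul_pow, smul_mul_assoc, ← nsmul_eq_mul', ← Nat.cast_smul_eq_nsmul (ZMod (p^e)),
      smul_smul, smul_smul]
    congr 1
    rw [← pow_mul, ← Nat.cast_pow, ← Nat.cast_mul, ← Nat.cast_pow, ← Nat.cast_mul,
      Nat.mul_div_cancel' hdvd]
  rw [Finset.sum_congr rfl hg, hT, ← Finset.smul_sum] at hB
  set D0 : Matrix (Fin N) (Fin N) (ZMod (p^e)) :=
    ∑ k ∈ Finset.range (q+1), ((((p^(j*(k+2)) * p.choose (k+2)) / p^(j+2) : ℕ) : ZMod (p^e)) • A^(k+2))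
  rw [add_eq_right] at hB
  have hmain : (p : ZMod (p^e))^(j+1) • A = (p : ZMod (p^e))^(j+2) • (-D0) := by
    rw [smul_neg]
    exact eq_neg_of_add_eq_zero_right hB
  have hent : ∀ i i' : Fin N, ∃ c, A i i' = (p : ZMod (p^e)) * c := by
    intro i i'
    apply key_scalar p e j hp hje' (A i i') ((-D0) i i')
    have := congrFun (congrFun hmain i) i'
    simpa [Matrix.smul_apply] using this
  choose C hC using fun i => (fun i' => hent i i')
  exact ⟨Matrix.of C, by ext i i'; simpa [Matrix.smul_apply] using hC i i'⟩
end

section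
/- Let p be an odd prime and e ≥ 1. Then rank_p(SL_2(ℤ/p^eℤ)) ≤ 3, where rank_p denotes the largest r such that (ℤ/pℤ)^r embeds as a subgroup. -/
section Helpers

variable {p e : ℕ}

private lemma ne0 (hp : 1 < p) : NeZero (p ^ e) := ⟨pow_ne_zero e (by omega)⟩

private lemma red_apply (hp : 1 < p) (hd : p ∣ p ^ e) (z : ZMod (p ^ e)) :
    ZMod.castHom hd (ZMod p) z = ((z.val : ℕ) : ZMod p) := by
  haveI := ne0 (e := e) hp
  rw [ZMod.castHom_apply, ← ZMod.natCast_val]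

private lemma red_eq_zero_iff (hp : 1 < p) (hd : p ∣ p ^ e) (z : ZMod (p ^ e)) :
    ZMod.castHom hd (ZMod p) z = 0 ↔ ∃ w, z = (p : ZMod (p ^ e)) * w := by
  haveI := ne0 (e := e) hp
  constructor
  · intro h
    rw [red_apply hp] at h
    obtain ⟨m, hm⟩ := (ZMod.natCast_eq_zero_iff z.val p).mp h
    refine ⟨(m : ZMod (p ^ e)), ?_⟩
    have hz : ((z.val : ℕ) : ZMod (p ^ e)) = z := by
      rw [ZMod.natCast_val, ZMod.cast_id]
    rw [← hz, hm]
    push_cast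
    ring
  · rintro ⟨w, rfl⟩
    rw [map_mul, map_natCast]
    simp

private lemma pow_mul_eq_zero_iff (hp : 1 < p) {k : ℕ} (hk : k ≤ e) (z : ZMod (p ^ e)) :
    (p : ZMod (p ^ e)) ^ k * z = 0 ↔ ∃ w, z = (p : ZMod (p ^ e)) ^ (e - k) * w := by
  haveI := ne0 (e := e) hp
  constructor
  · intro h
    have hz : ((z.val : ℕ) : ZMod (p ^ e)) = z := by
      rw [ZMod.natCast_val, ZMod.cast_id]
    rw [← hz] at h
    rw [← Nat.cast_pow, ← Nat.cast_mul, ZMod.natCast_eq_zero_iff] at h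
    have hpk : 0 < p ^ k := pow_pos (by omega) k
    have h2 : k + (e - k) = e := by omega
    have h' : p ^ (e - k) ∣ z.val :=
      (Nat.mul_dvd_mul_iff_left hpk).mp (by rw [← pow_add, h2]; exact h)
    obtain ⟨m, hm⟩ := h'
    refine ⟨(m : ZMod (p ^ e)), ?_⟩
    rw [← hz, hm]
    push_cast
    ring
  · rintro ⟨w, rfl⟩
    rw [← mul_assoc, ← pow_add]
    have h2 : k + (e - k) = e := by omega
    rw [h2, ← Nat.cast_pow, ZMod.natCast_self, zero_mul]

end Helpers

section Helpers2
variable {p e : ℕ}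

/-- extract `w mod p` from `p^(e-1) * w`. -/
private def gg (p e : ℕ) (z : ZMod (p ^ e)) : ZMod p := ((z.val / p ^ (e - 1) : ℕ) : ZMod p)

private lemma gg_spec (hp : 1 < p) (he : 1 ≤ e) (hd : p ∣ p ^ e) (w : ZMod (p ^ e)) :
    gg p e ((p : ZMod (p ^ e)) ^ (e - 1) * w) = ZMod.castHom hd (ZMod p) w := by
  haveI : NeZero (p ^ e) := ⟨pow_ne_zero e (by omega)⟩
  have hlt : p ^ (e - 1) < p ^ e := pow_lt_pow_right₀ hp (by omega)
  have hval : ((p : ZMod (p ^ e)) ^ (e - 1)).val = p ^ (e - 1) := by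
    rw [← Nat.cast_pow, ZMod.val_cast_of_lt hlt]
  have hsplit : p ^ e = p ^ (e - 1) * p := by rw [← pow_succ]; congr 1; omega
  have key : ∀ n : ℕ, p ^ (e - 1) * n % p ^ e / p ^ (e - 1) = n % p := by
    intro n
    rw [hsplit, Nat.mul_mod_mul_left, Nat.mul_div_cancel_left _ (pow_pos (by omega : 0 < p) (e - 1))]
  unfold gg
  rw [ZMod.val_mul, hval, key, ZMod.natCast_mod, red_apply hp]

/-- `z mod p` determines `p^(e-1) * z`. -/
private lemma pow_em1_mul_congr (hp : 1 < p) (he : 1 ≤ e) (hd : p ∣ p ^ e) {z z' : ZMod (p ^ e)}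
    (h : ZMod.castHom hd (ZMod p) z = ZMod.castHom hd (ZMod p) z') :
    (p : ZMod (p ^ e)) ^ (e - 1) * z = (p : ZMod (p ^ e)) ^ (e - 1) * z' := by
  have h0 : ZMod.castHom hd (ZMod p) (z - z') = 0 := by rw [map_sub, h, sub_self]
  obtain ⟨w, hw⟩ := (red_eq_zero_iff hp hd _).mp h0
  have hpe : (p : ZMod (p ^ e)) ^ e = 0 := by
    rw [← Nat.cast_pow]; exact ZMod.natCast_self _
  have hee : e - 1 + 1 = e := by omega
  have : (p : ZMod (p ^ e)) ^ (e - 1) * (z - z') = 0 := by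
    rw [hw, ← mul_assoc, ← pow_succ, hee, hpe, zero_mul]
  linear_combination this
end Helpers2

section MatHelpers
variable {p e : ℕ}

private abbrev Mat (p e : ℕ) := Matrix (Fin 2) (Fin 2) (ZMod (p ^ e))

private lemma mat_divide (hp : 1 < p) {k : ℕ} (hk : k ≤ e) (X : Mat p e)
    (h : ∀ i j, (p : ZMod (p ^ e)) ^ k * X i j = 0) :
    ∃ Y : Mat p e, X = (p : ZMod (p ^ e)) ^ (e - k) • Y := by
  refine ⟨fun i j => ((pow_mul_eq_zero_iff hp hk (X i j)).mp (h i j)).choose, ?_⟩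
  ext i j
  exact ((pow_mul_eq_zero_iff hp hk (X i j)).mp (h i j)).choose_spec

private lemma expand_pow {k : ℕ} (B : Mat p e) :
    ((1 : Mat p e) + (p : ZMod (p ^ e)) ^ k • B) ^ p
      = ∑ m ∈ Finset.range (p + 1),
          ((p : ZMod (p ^ e)) ^ (k * m)) • B ^ m * (p.choose m : Mat p e) := by
  rw [add_comm, Commute.add_pow (Commute.one_right _)]
  refine Finset.sum_congr rfl fun m _ => ?_
  rw [one_pow, mul_one, smul_pow, ← pow_mul]

private lemma f_val {k : ℕ} (B : Mat p e) (m : ℕ) :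
    ((p : ZMod (p ^ e)) ^ (k * m)) • B ^ m * (p.choose m : Mat p e)
      = ((p ^ (k * m) * p.choose m : ℕ) : ZMod (p ^ e)) • B ^ m := by
  rw [smul_mul_assoc, ← nsmul_eq_mul' (B ^ m) (p.choose m),
    ← Nat.cast_smul_eq_nsmul (ZMod (p ^ e)), smul_smul]
  congr 1
  push_cast
  ring

private lemma term_divisible (hp : p.Prime) (hodd : Odd p) {k : ℕ} (hk : 1 ≤ k)
    (i : ℕ) (hi : i + 2 ≤ p) :
    ∃ m : ℕ, p ^ (k * (i + 2)) * p.choose (i + 2) = p ^ (k + 2) * m := by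
  have hp3 : 3 ≤ p := by
    rcases hodd with ⟨t, ht⟩
    have := hp.two_le
    omega
  rcases Nat.lt_or_ge (i + 2) p with h | h
  · obtain ⟨c, hc⟩ := hp.dvd_choose_self (by omega) h
    have hke : k + 1 ≤ k * (i + 2) := by nlinarith
    refine ⟨p ^ (k * (i + 2) - (k + 1)) * c, ?_⟩
    rw [hc]
    have hps : p ^ (k * (i + 2)) = p ^ (k + 1) * p ^ (k * (i + 2) - (k + 1)) := by
      rw [← pow_add]; congr 1; omega
    rw [hps]; ring
  · have hke : k + 2 ≤ k * (i + 2) := by nlinarith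
    refine ⟨p ^ (k * (i + 2) - (k + 2)) * p.choose (i + 2), ?_⟩
    have hps : p ^ (k * (i + 2)) = p ^ (k + 2) * p ^ (k * (i + 2) - (k + 2)) := by
      rw [← pow_add]; congr 1; omega
    rw [hps]; ring

private lemma pow_eq_one_plus (hp : p.Prime) (hodd : Odd p) {k : ℕ} (hk : 1 ≤ k) (B : Mat p e) :
    ∃ C : Mat p e, ((1 : Mat p e) + (p : ZMod (p ^ e)) ^ k • B) ^ p
      = 1 + (p : ZMod (p ^ e)) ^ (k + 1) • (B + (p : ZMod (p ^ e)) • C) := by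
  classical
  set R := ZMod (p ^ e)
  set f : ℕ → Mat p e := fun m => ((p : R) ^ (k * m)) • B ^ m * (p.choose m : Mat p e) with hf
  have hpp : p = (p - 1) + 1 := by have := hp.two_le; omega
  have step1 : ∑ m ∈ Finset.range (p + 1), f m
      = (∑ i ∈ Finset.range p, f (i + 1)) + f 0 := Finset.sum_range_succ' f p
  have step2 : ∑ i ∈ Finset.range p, f (i + 1)
      = (∑ i ∈ Finset.range (p - 1), f (i + 2)) + f 1 := by
    have h := Finset.sum_range_succ' (fun i => f (i + 1)) (p - 1)
    rw [← hpp] at h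
    simpa using h
  have hterm : ∀ i : ℕ, ∃ mm : ℕ, i < p - 1 →
      p ^ (k * (i + 2)) * p.choose (i + 2) = p ^ (k + 2) * mm := by
    intro i
    by_cases h : i < p - 1
    · obtain ⟨mm, hmm⟩ := term_divisible hp hodd hk i (by omega)
      exact ⟨mm, fun _ => hmm⟩
    · exact ⟨0, fun hc => absurd hc h⟩
  choose mf hmf using hterm
  set C : Mat p e := ∑ i ∈ Finset.range (p - 1), (mf i : R) • B ^ (i + 2) with hC
  have tail : ∑ i ∈ Finset.range (p - 1), f (i + 2) = (p : R) ^ (k + 2) • C := by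
    rw [hC, Finset.smul_sum]
    refine Finset.sum_congr rfl fun i hi => ?_
    rw [hf]
    dsimp only
    rw [f_val, hmf i (Finset.mem_range.mp hi), smul_smul]
    congr 1
    push_cast
    ring
  have f0 : f 0 = 1 := by simp [hf]
  have f1 : f 1 = (p : R) ^ (k + 1) • B := by
    rw [hf]
    dsimp only
    rw [f_val]
    congr 1
    · push_cast [Nat.choose_one_right]
      ring
    · exact pow_one B
  refine ⟨C, ?_⟩
  rw [expand_pow, step1, step2, tail, f0, f1]
  rw [smul_add, smul_smul, ← pow_succ]
  abel
end MatHelpers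

section Climb
variable {p e : ℕ}

private lemma climb (hp : p.Prime) (hodd : Odd p) :
    ∀ d k, e - 1 ≤ k + d → 1 ≤ k → ∀ B : Mat p e,
      ((1 : Mat p e) + (p : ZMod (p ^ e)) ^ k • B) ^ p = 1 →
      ∃ A : Mat p e, (1 : Mat p e) + (p : ZMod (p ^ e)) ^ k • B
        = 1 + (p : ZMod (p ^ e)) ^ (e - 1) • A := by
  intro d
  induction d with
  | zero =>
    intro k hke hk B _
    refine ⟨(p : ZMod (p ^ e)) ^ (k - (e - 1)) • B, ?_⟩
    rw [smul_smul, ← pow_add]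
    congr 3
    omega
  | succ d ih =>
    intro k hke hk B hpow
    by_cases hcase : e - 1 ≤ k + d
    · exact ih k hcase hk B hpow
    · obtain ⟨C, hC⟩ := pow_eq_one_plus hp hodd hk B
      have hz : (p : ZMod (p ^ e)) ^ (k + 1) • (B + (p : ZMod (p ^ e)) • C) = 0 := by
        have h1 : (1 : Mat p e)
            + (p : ZMod (p ^ e)) ^ (k + 1) • (B + (p : ZMod (p ^ e)) • C) = 1 := by
          rw [← hC]; exact hpow
        rwa [add_eq_left] at h1
      have hzz : ∀ i j, (p : ZMod (p ^ e)) ^ (k + 1) * (B + (p : ZMod (p ^ e)) • C) i j = 0 := by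
        intro i j
        have h2 := congrFun (congrFun hz i) j
        simpa [Matrix.smul_apply] using h2
      obtain ⟨D, hD⟩ := mat_divide hp.one_lt (show k + 1 ≤ e by omega) _ hzz
      have hB : B = (p : ZMod (p ^ e)) ^ (e - (k + 1)) • D - (p : ZMod (p ^ e)) • C :=
        eq_sub_of_add_eq hD
      have hkB : (p : ZMod (p ^ e)) ^ k • B
          = (p : ZMod (p ^ e)) ^ (k + 1) • ((p : ZMod (p ^ e)) ^ (e - (k + 1) - 1) • D - C) := by
        have e1 : k + (e - (k + 1)) = (k + 1) + (e - (k + 1) - 1) := by omega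
        rw [hB, smul_sub, smul_sub, smul_smul, smul_smul, smul_smul, ← pow_add, ← pow_add, e1,
          ← pow_succ]
      have heq : (1 : Mat p e) + (p : ZMod (p ^ e)) ^ k • B
          = 1 + (p : ZMod (p ^ e)) ^ (k + 1)
              • ((p : ZMod (p ^ e)) ^ (e - (k + 1) - 1) • D - C) := by rw [hkB]
      obtain ⟨A, hA⟩ := ih (k + 1) (by omega) (by omega) _ (by rw [← heq]; exact hpow)
      exact ⟨A, heq.trans hA⟩

private lemma unipotent_structure (hp : p.Prime) (hodd : Odd p) (he : 1 ≤ e) (hd : p ∣ p ^ e)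
    (x : Mat p e) (hdet : x.det = 1)
    (hred : ∀ i j, ZMod.castHom hd (ZMod p) ((x - 1) i j) = 0) (hpow : x ^ p = 1) :
    ∃ A : Mat p e, x = 1 + (p : ZMod (p ^ e)) ^ (e - 1) • A ∧
      ZMod.castHom hd (ZMod p) (A 0 0) + ZMod.castHom hd (ZMod p) (A 1 1) = 0 := by
  have hp1 : 1 < p := hp.one_lt
  -- step 0 : x = 1 + p • B
  have hstep : ∃ B : Mat p e, x = 1 + (p : ZMod (p ^ e)) ^ 1 • B := by
    refine ⟨fun i j => ((red_eq_zero_iff hp1 hd _).mp (hred i j)).choose, ?_⟩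
    ext i j
    have hcs := ((red_eq_zero_iff hp1 hd ((x - 1) i j)).mp (hred i j)).choose_spec
    change x i j - (1 : Mat p e) i j = _ at hcs
    simp only [Matrix.add_apply, Matrix.smul_apply, smul_eq_mul, pow_one]
    change x i j = (1 : Mat p e) i j + (p : ZMod (p ^ e)) * _
    linear_combination hcs
  obtain ⟨B, hB⟩ := hstep
  obtain ⟨A, hA⟩ := climb hp hodd e 1 (by omega) le_rfl B (by rw [← hB]; exact hpow)
  have hxA : x = 1 + (p : ZMod (p ^ e)) ^ (e - 1) • A := hB.trans hA
  refine ⟨A, hxA, ?_⟩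
  rcases Nat.lt_or_ge e 2 with he1 | he2
  · -- e = 1 : A = x - 1 (as matrices), entries reduce to 0
    have he' : e = 1 := by omega
    have h0 : (p : ZMod (p ^ e)) ^ (e - 1) = 1 := by rw [he']; norm_num
    have hxA' : ∀ i j, (x - 1) i j = A i j := by
      intro i j
      have h3 := congrFun (congrFun hxA i) j
      rw [Matrix.add_apply, Matrix.smul_apply, h0, one_smul] at h3
      rw [Matrix.sub_apply, h3]
      ring
    have h00 := hred 0 0
    have h11 := hred 1 1
    rw [hxA' 0 0] at h00
    rw [hxA' 1 1] at h11
    rw [h00, h11, add_zero]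
  · -- e ≥ 2 : use the determinant
    set c : ZMod (p ^ e) := (p : ZMod (p ^ e)) ^ (e - 1) with hc
    have hc2 : c * c = 0 := by
      rw [hc, ← pow_add]
      have h2 : (e - 1) + (e - 1) = e + (e - 2) := by omega
      rw [h2, pow_add, ← Nat.cast_pow, ZMod.natCast_self, zero_mul]
    have hdet2 : (1 + c • A).det = 1 + c * (A 0 0 + A 1 1) := by
      rw [Matrix.det_fin_two]
      simp only [Matrix.add_apply, Matrix.smul_apply, Matrix.one_apply_eq,
        Matrix.one_apply_ne (by norm_num : (0 : Fin 2) ≠ 1),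
        Matrix.one_apply_ne (by norm_num : (1 : Fin 2) ≠ 0), smul_eq_mul]
      linear_combination (A 0 0 * A 1 1 - A 0 1 * A 1 0) * hc2
    rw [hxA, hdet2] at hdet
    rw [add_eq_left] at hdet
    have hcc : c * (A 0 0 + A 1 1) = 0 := hdet
    rw [hc] at hcc
    obtain ⟨w, hw⟩ := (pow_mul_eq_zero_iff hp1 (show e - 1 ≤ e by omega) _).mp hcc
    have h1 : e - (e - 1) = 1 := by omega
    rw [h1, pow_one] at hw
    have : ZMod.castHom hd (ZMod p) (A 0 0 + A 1 1) = 0 := by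
      rw [(red_eq_zero_iff hp1 hd _)]
      exact ⟨w, hw⟩
    rw [← map_add]
    exact this
end Climb

section FieldSide
variable {p : ℕ} [Fact p.Prime]

private lemma cayley2 {R : Type*} [CommRing R] (N : Matrix (Fin 2) (Fin 2) R) :
    N * N = (N 0 0 + N 1 1) • N - N.det • 1 := by
  ext i j
  fin_cases i <;> fin_cases j <;>
    simp [Matrix.mul_apply, Fin.sum_univ_two, Matrix.det_fin_two, Matrix.one_apply] <;> ring

private lemma sq_zero_of_pow_zero (N : Matrix (Fin 2) (Fin 2) (ZMod p))
    (hpow : N ^ p = 0) (hne : N ≠ 0) : N * N = 0 := by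
  have hdet : N.det = 0 := by
    have h1 : (N.det) ^ p = 0 := by rw [← Matrix.det_pow, hpow]; simp
    exact pow_eq_zero_iff (Nat.Prime.ne_zero Fact.out) |>.mp h1
  have h2 : N * N = (N 0 0 + N 1 1) • N := by
    rw [cayley2, hdet, zero_smul, sub_zero]
  have hpowt : ∀ j : ℕ, N ^ (j + 1) = (N 0 0 + N 1 1) ^ j • N := by
    intro j
    induction j with
    | zero => simp
    | succ j ih =>
      rw [pow_succ, ih, smul_mul_assoc, h2, smul_smul, pow_succ]
  have hp1 : p = (p - 1) + 1 := by have := (Fact.out : p.Prime).two_le; omega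
  have h3 : (N 0 0 + N 1 1) ^ (p - 1) • N = 0 := by
    rw [← hpowt, ← hp1, hpow]
  rcases smul_eq_zero.mp h3 with h | h
  · have ht0 : N 0 0 + N 1 1 = 0 :=
      pow_eq_zero_iff (by have := (Fact.out : p.Prime).two_le; omega : p - 1 ≠ 0) |>.mp h
    rw [h2, ht0, zero_smul]
  · exact absurd h hne

private lemma centralizer_span (N Y : Matrix (Fin 2) (Fin 2) (ZMod p))
    (hN2 : N * N = 0) (hN0 : N ≠ 0) (hcomm : Y * N = N * Y) :
    ∃ a b : ZMod p, Y = a • 1 + b • N := by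
  have eq00 := congrFun (congrFun hN2 0) 0
  have eq11 := congrFun (congrFun hN2 1) 1
  simp only [Matrix.mul_apply, Fin.sum_univ_two, Matrix.zero_apply] at eq00 eq11
  have c00 := congrFun (congrFun hcomm 0) 0
  have c01 := congrFun (congrFun hcomm 0) 1
  have c10 := congrFun (congrFun hcomm 1) 0
  simp only [Matrix.mul_apply, Fin.sum_univ_two] at c00 c01 c10
  by_cases h1 : N 0 1 ≠ 0
  · refine ⟨Y 0 0 - (Y 0 1 / N 0 1) * N 0 0, Y 0 1 / N 0 1, ?_⟩
    ext i j
    fin_cases i <;> fin_cases j <;>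
      simp only [Fin.zero_eta, Fin.mk_one, Matrix.add_apply, Matrix.smul_apply,
        Matrix.one_apply_eq, Matrix.one_apply_ne, smul_eq_mul,
        Matrix.one_apply_ne (by norm_num : (0 : Fin 2) ≠ 1),
        Matrix.one_apply_ne (by norm_num : (1 : Fin 2) ≠ 0), Matrix.cons_val_zero]
    · field_simp; ring
    · field_simp; ring
    · field_simp
      linear_combination -c00
    · field_simp
      linear_combination -c01
  · push_neg at h1
    by_cases h2 : N 1 0 ≠ 0
    · refine ⟨Y 0 0 - (Y 1 0 / N 1 0) * N 0 0, Y 1 0 / N 1 0, ?_⟩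
      ext i j
      fin_cases i <;> fin_cases j <;>
        simp only [Fin.zero_eta, Fin.mk_one, Matrix.add_apply, Matrix.smul_apply,
          Matrix.one_apply_eq, Matrix.one_apply_ne, smul_eq_mul,
          Matrix.one_apply_ne (by norm_num : (0 : Fin 2) ≠ 1),
          Matrix.one_apply_ne (by norm_num : (1 : Fin 2) ≠ 0), Matrix.cons_val_zero]
      · field_simp; ring
      · -- Y 0 1 = 0
        have h3 : Y 0 1 * N 1 0 = 0 := by
          rw [h1] at c00
          linear_combination c00
        have h4 : Y 0 1 = 0 := by
          rcases mul_eq_zero.mp h3 with h | h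
          · exact h
          · exact absurd h h2
        rw [h1, h4]
        ring
      · field_simp; ring
      · field_simp
        linear_combination c10
    · push_neg at h2
      exfalso
      apply hN0
      have hn0 : N 0 0 = 0 := by
        rw [h1] at eq00
        exact mul_self_eq_zero.mp (by linear_combination eq00)
      have hn3 : N 1 1 = 0 := by
        rw [h1] at eq11
        exact mul_self_eq_zero.mp (by linear_combination eq11)
      ext i j
      fin_cases i <;> fin_cases j <;> assumption

end FieldSide

section Corollaries
variable {p : ℕ} [Fact p.Prime]

private lemma trace_zero_of_sq_zero (N : Matrix (Fin 2) (Fin 2) (ZMod p))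
    (hN2 : N * N = 0) (hN0 : N ≠ 0) : N 1 1 = -N 0 0 := by
  have eq00 := congrFun (congrFun hN2 0) 0
  have eq01 := congrFun (congrFun hN2 0) 1
  have eq10 := congrFun (congrFun hN2 1) 0
  have eq11 := congrFun (congrFun hN2 1) 1
  simp only [Matrix.mul_apply, Fin.sum_univ_two, Matrix.zero_apply] at eq00 eq01 eq10 eq11
  by_contra hne'
  have hsum : N 0 0 + N 1 1 ≠ 0 := fun h => hne' (by linear_combination h)
  have hn1 : N 0 1 = 0 := by
    have h : N 0 1 * (N 0 0 + N 1 1) = 0 := by linear_combination eq01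
    rcases mul_eq_zero.mp h with h | h
    · exact h
    · exact absurd h hsum
  have hn2 : N 1 0 = 0 := by
    have h : N 1 0 * (N 0 0 + N 1 1) = 0 := by linear_combination eq10
    rcases mul_eq_zero.mp h with h | h
    · exact h
    · exact absurd h hsum
  have hn0 : N 0 0 = 0 := mul_self_eq_zero.mp (by rw [hn1] at eq00; linear_combination eq00)
  have hn3 : N 1 1 = 0 := mul_self_eq_zero.mp (by rw [hn2] at eq11; linear_combination eq11)
  exact hsum (by rw [hn0, hn3, add_zero])

/-- An SL₂ element of order dividing `p` commuting with a nonzero square-zero `N`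
is `1 + b • N`. -/
private lemma comm_unit_form (hodd : Odd p) (N Y : Matrix (Fin 2) (Fin 2) (ZMod p))
    (hN2 : N * N = 0) (hN0 : N ≠ 0) (hcomm : Y * N = N * Y)
    (hdet : Y.det = 1) (hpow : Y ^ p = 1) : ∃ b : ZMod p, Y = 1 + b • N := by
  obtain ⟨a, b, hab⟩ := centralizer_span N Y hN2 hN0 hcomm
  have htr := trace_zero_of_sq_zero N hN2 hN0
  have eq00 := congrFun (congrFun hN2 0) 0
  simp only [Matrix.mul_apply, Fin.sum_univ_two, Matrix.zero_apply] at eq00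
  have hdet2 : Y.det = a * a := by
    rw [hab, Matrix.det_fin_two]
    simp only [Matrix.add_apply, Matrix.smul_apply, Matrix.one_apply_eq,
      Matrix.one_apply_ne (by norm_num : (0 : Fin 2) ≠ 1),
      Matrix.one_apply_ne (by norm_num : (1 : Fin 2) ≠ 0), smul_eq_mul]
    rw [htr]
    linear_combination (-(b * b)) * eq00
  have hNp : N ^ p = 0 := by
    have hsplit : p = (p - 2) + 2 := by have := (Fact.out : p.Prime).two_le; omega
    calc N ^ p = N ^ (p - 2) * (N * N) := by rw [← pow_two, ← pow_add, ← hsplit]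
    _ = 0 := by rw [hN2, mul_zero]
  have hYp : Y ^ p = a • 1 := by
    rw [hab, add_pow_char_of_commute _ (((Commute.one_left N).smul_left a).smul_right b)]
    rw [smul_pow, smul_pow, one_pow, hNp, smul_zero, add_zero, ZMod.pow_card]
  have ha : a = 1 := by
    have h := hYp.symm.trans hpow
    have := congrFun (congrFun h 0) 0
    simpa [Matrix.smul_apply] using this
  exact ⟨b, by rw [hab, ha, one_smul]⟩

/-- A trace-zero matrix commuting with a nonzero square-zero `N` is `b • N`. -/
private lemma comm_tracezero_form (hodd : Odd p) (N A : Matrix (Fin 2) (Fin 2) (ZMod p))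
    (hN2 : N * N = 0) (hN0 : N ≠ 0) (hcomm : A * N = N * A)
    (htrA : A 0 0 + A 1 1 = 0) : ∃ b : ZMod p, A = b • N := by
  obtain ⟨a, b, hab⟩ := centralizer_span N A hN2 hN0 hcomm
  have htr := trace_zero_of_sq_zero N hN2 hN0
  have h2 : a * 2 = 0 := by
    have h00 := congrFun (congrFun hab 0) 0
    have h11 := congrFun (congrFun hab 1) 1
    simp only [Matrix.add_apply, Matrix.smul_apply, Matrix.one_apply_eq, smul_eq_mul] at h00 h11
    rw [htr] at h11
    linear_combination htrA - h00 - h11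
  have h2ne : (2 : ZMod p) ≠ 0 := by
    intro hc
    have hdvd : p ∣ 2 := (ZMod.natCast_eq_zero_iff 2 p).mp (by exact_mod_cast hc)
    have hp2 : p = 2 := (Nat.prime_dvd_prime_iff_eq Fact.out Nat.prime_two).mp hdvd
    rcases hodd with ⟨t, ht⟩
    omega
  have ha : a = 0 := by
    rcases mul_eq_zero.mp h2 with h | h
    · exact h
    · exact absurd h h2ne
  exact ⟨b, by rw [hab, ha, zero_smul, zero_add]⟩

end Corollaries

section MatGlue
variable {p e : ℕ}

private lemma mat_red_congr (hp : 1 < p) (he : 1 ≤ e) (hd : p ∣ p ^ e) {A A' : Mat p e}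
    (h : ∀ i j, ZMod.castHom hd (ZMod p) (A i j) = ZMod.castHom hd (ZMod p) (A' i j)) :
    (p : ZMod (p ^ e)) ^ (e - 1) • A = (p : ZMod (p ^ e)) ^ (e - 1) • A' := by
  ext i j
  simp only [Matrix.smul_apply, smul_eq_mul]
  exact pow_em1_mul_congr hp he hd (h i j)

end MatGlue

/-- The `p`-rank of a group: the largest `r` such that `(ℤ/pℤ)^r` embeds as a subgroup. -/
noncomputable def pRank (p : ℕ) (G : Type*) [Group G] : ℕ :=
  sSup {r : ℕ | ∃ H : Subgroup G, Nonempty (H ≃* (Fin r → Multiplicative (ZMod p)))}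

/-- For `p` an odd prime and `e ≥ 1`, `rank_p(SL_2(ℤ/p^eℤ)) ≤ 3`. -/
theorem stmt_6 (p e : ℕ) (hp : p.Prime) (hodd : Odd p) (he : 1 ≤ e) :
    pRank p (Matrix.SpecialLinearGroup (Fin 2) (ZMod (p ^ e))) ≤ 3 := by
  classical
  haveI : Fact p.Prime := ⟨hp⟩
  have hp1 : 1 < p := hp.one_lt
  haveI : NeZero (p ^ e) := ⟨pow_ne_zero e (by omega)⟩
  have hdp : p ∣ p ^ e := dvd_pow_self p (by omega)
  apply csSup_le'
  rintro r ⟨H, ⟨f⟩⟩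
  -- cardinality of H
  have hcard : Nat.card H = p ^ r := by
    rw [Nat.card_congr f.toEquiv, Nat.card_pi]
    simp [Nat.card_eq_fintype_card]
  -- exponent p
  have hxp : ∀ x : H, x ^ p = 1 := by
    intro x
    apply f.injective
    rw [map_pow, map_one]
    funext i
    show (f x i) ^ p = 1
    apply Multiplicative.toAdd.injective
    rw [toAdd_pow, toAdd_one, nsmul_eq_mul, ZMod.natCast_self, zero_mul]
  -- commutativity
  have hcomm : ∀ x y : H, x * y = y * x := fun x y =>
    f.injective (by rw [map_mul, map_mul, mul_comm])
  -- matrix facts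
  have hMpow : ∀ x : H, ((x : Matrix.SpecialLinearGroup (Fin 2) (ZMod (p ^ e))) :
      Mat p e) ^ p = 1 := by
    intro x
    have h0 : ((x : Matrix.SpecialLinearGroup (Fin 2) (ZMod (p ^ e)))) ^ p = 1 := by
      have h00 := congrArg (H.subtype) (hxp x)
      rw [map_pow, map_one] at h00
      simpa using h00
    rw [← Matrix.SpecialLinearGroup.coe_pow, h0, Matrix.SpecialLinearGroup.coe_one]
  have hMdet : ∀ x : H, ((x : Matrix.SpecialLinearGroup (Fin 2) (ZMod (p ^ e))) :
      Mat p e).det = 1 := fun x => Matrix.SpecialLinearGroup.det_coe _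
  -- reduction hom
  set φ : H →* Matrix.SpecialLinearGroup (Fin 2) (ZMod p) :=
    (Matrix.SpecialLinearGroup.map (ZMod.castHom hdp (ZMod p))).comp H.subtype with hφ
  have hφcoe : ∀ x : H, ((φ x : Matrix.SpecialLinearGroup (Fin 2) (ZMod p)) :
      Matrix (Fin 2) (Fin 2) (ZMod p))
      = (ZMod.castHom hdp (ZMod p)).mapMatrix
        ((x : Matrix.SpecialLinearGroup (Fin 2) (ZMod (p ^ e))) : Mat p e) := by
    intro x
    rw [hφ]
    rfl
  -- final goal reduction
  suffices hle : p ^ r ≤ p ^ 3 by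
    exact (Nat.pow_le_pow_iff_right hp1).mp hle
  rw [← hcard]
  by_cases hA : ∀ x : H, φ x = 1
  · -- CASE A : everything reduces to 1 mod p
    have hred : ∀ x : H, ∀ i j, ZMod.castHom hdp (ZMod p)
        ((((x : Matrix.SpecialLinearGroup (Fin 2) (ZMod (p ^ e))) : Mat p e) - 1) i j) = 0 := by
      intro x i j
      have h1 : (ZMod.castHom hdp (ZMod p)).mapMatrix
          ((((x : Matrix.SpecialLinearGroup (Fin 2) (ZMod (p ^ e))) : Mat p e)) - 1) = 0 := by
        rw [map_sub, ← hφcoe, hA x, map_one, Matrix.SpecialLinearGroup.coe_one, sub_self]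
      have h2 := congrFun (congrFun h1 i) j
      rwa [RingHom.mapMatrix_apply, Matrix.map_apply, Matrix.zero_apply] at h2
    have hU : ∀ x : H, ∃ A : Mat p e,
        (((x : Matrix.SpecialLinearGroup (Fin 2) (ZMod (p ^ e))) : Mat p e))
          = 1 + (p : ZMod (p ^ e)) ^ (e - 1) • A ∧
        ZMod.castHom hdp (ZMod p) (A 0 0) + ZMod.castHom hdp (ZMod p) (A 1 1) = 0 :=
      fun x => unipotent_structure hp hodd he hdp _ (hMdet x) (hred x) (hMpow x)
    choose Af hAf1 hAf2 using hU
    set ψ : H → ZMod p × ZMod p × ZMod p := fun x =>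
      (gg p e (((((x : Matrix.SpecialLinearGroup (Fin 2) (ZMod (p ^ e))) : Mat p e)) - 1) 0 0),
       gg p e (((((x : Matrix.SpecialLinearGroup (Fin 2) (ZMod (p ^ e))) : Mat p e)) - 1) 0 1),
       gg p e (((((x : Matrix.SpecialLinearGroup (Fin 2) (ZMod (p ^ e))) : Mat p e)) - 1) 1 0))
      with hψ
    have hent : ∀ (x : H) i j,
        (((((x : Matrix.SpecialLinearGroup (Fin 2) (ZMod (p ^ e))) : Mat p e)) - 1) i j)
          = (p : ZMod (p ^ e)) ^ (e - 1) * Af x i j := by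
      intro x i j
      rw [Matrix.sub_apply]
      have h3 := congrFun (congrFun (hAf1 x) i) j
      rw [Matrix.add_apply, Matrix.smul_apply, smul_eq_mul] at h3
      rw [h3]
      ring
    have hgg : ∀ (x : H) i j,
        gg p e ((((( x : Matrix.SpecialLinearGroup (Fin 2) (ZMod (p ^ e))) : Mat p e)) - 1) i j)
          = ZMod.castHom hdp (ZMod p) (Af x i j) := by
      intro x i j
      rw [hent x i j, gg_spec hp1 he hdp]
    have hinj : Function.Injective ψ := by
      intro x y hxy
      rw [hψ] at hxy
      simp only [Prod.mk.injEq] at hxy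
      obtain ⟨h00, h01, h10⟩ := hxy
      rw [hgg x, hgg y] at h00 h01 h10
      have hall : ∀ i j, ZMod.castHom hdp (ZMod p) (Af x i j)
          = ZMod.castHom hdp (ZMod p) (Af y i j) := by
        intro i j
        fin_cases i <;> fin_cases j
        · exact h00
        · exact h01
        · exact h10
        · have hx2 := hAf2 x
          have hy2 := hAf2 y
          simp only [Fin.mk_one]
          linear_combination hx2 - hy2 - h00
      have hsm := mat_red_congr hp1 he hdp hall
      have hmat : (((x : Matrix.SpecialLinearGroup (Fin 2) (ZMod (p ^ e))) : Mat p e))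
          = (((y : Matrix.SpecialLinearGroup (Fin 2) (ZMod (p ^ e))) : Mat p e)) := by
        rw [hAf1 x, hAf1 y, hsm]
      exact Subtype.ext (Subtype.ext hmat)
    calc Nat.card H ≤ Nat.card (ZMod p × ZMod p × ZMod p) :=
          Nat.card_le_card_of_injective ψ hinj
      _ = p ^ 3 := by
          rw [Nat.card_prod, Nat.card_prod, Nat.card_zmod]
          ring
  · -- CASE B : some element is not ≡ 1 mod p
    push_neg at hA
    obtain ⟨h0, hh0⟩ := hA
    set m : Matrix (Fin 2) (Fin 2) (ZMod p) :=
      ((φ h0 : Matrix.SpecialLinearGroup (Fin 2) (ZMod p)) : Matrix (Fin 2) (Fin 2) (ZMod p))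
      with hm
    set N : Matrix (Fin 2) (Fin 2) (ZMod p) := m - 1 with hN
    have hN0 : N ≠ 0 := by
      rw [hN]
      intro hc
      apply hh0
      have hm1 : m = 1 := sub_eq_zero.mp hc
      exact Subtype.ext (by rw [← Matrix.SpecialLinearGroup.coe_one] at hm1; exact hm1)
    have hmp : m ^ p = 1 := by
      have h1 : (φ h0) ^ p = 1 := by rw [← map_pow, hxp h0, map_one]
      rw [hm, ← Matrix.SpecialLinearGroup.coe_pow, h1, Matrix.SpecialLinearGroup.coe_one]
    have hNp : N ^ p = 0 := by
      rw [hN, sub_pow_char_of_commute p (Commute.one_right m), hmp, one_pow, sub_self]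
    have hN2 : N * N = 0 := sq_zero_of_pow_zero N hNp hN0
    -- range bound
    have hrange : ∀ Y : φ.range, ∃ b : ZMod p,
        ((Y : Matrix.SpecialLinearGroup (Fin 2) (ZMod p)) :
          Matrix (Fin 2) (Fin 2) (ZMod p)) = 1 + b • N := by
      rintro ⟨Y, x, rfl⟩
      have hYm : ((φ x : Matrix.SpecialLinearGroup (Fin 2) (ZMod p)) :
          Matrix (Fin 2) (Fin 2) (ZMod p)) * m
          = m * ((φ x : Matrix.SpecialLinearGroup (Fin 2) (ZMod p)) :
          Matrix (Fin 2) (Fin 2) (ZMod p)) := by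
        have h1 : φ x * φ h0 = φ h0 * φ x := by rw [← map_mul, ← map_mul, hcomm]
        have h2 := congrArg
          (fun z : Matrix.SpecialLinearGroup (Fin 2) (ZMod p) =>
            (z : Matrix (Fin 2) (Fin 2) (ZMod p))) h1
        simpa [Matrix.SpecialLinearGroup.coe_mul, hm] using h2
      apply comm_unit_form hodd N _ hN2 hN0
      · rw [hN, mul_sub, sub_mul, mul_one, one_mul, hYm]
      · exact Matrix.SpecialLinearGroup.det_coe _
      · have h1 : (φ x) ^ p = 1 := by rw [← map_pow, hxp x, map_one]
        rw [← Matrix.SpecialLinearGroup.coe_pow, h1, Matrix.SpecialLinearGroup.coe_one]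
    choose bR hbR using hrange
    have hinjR : Function.Injective bR := by
      intro Y Y' hYY
      have h1 := hbR Y
      have h2 := hbR Y'
      rw [hYY] at h1
      exact Subtype.ext (Subtype.ext (h1.symm ▸ h2.symm ▸ rfl))
    have hcardR : Nat.card φ.range ≤ p := by
      have := Nat.card_le_card_of_injective bR hinjR
      rwa [Nat.card_zmod] at this
    -- kernel bound
    have hker : ∀ x : φ.ker, ∃ b : ZMod p, ∃ A : Mat p e,
        ((((x : H) : Matrix.SpecialLinearGroup (Fin 2) (ZMod (p ^ e))) : Mat p e))
          = 1 + (p : ZMod (p ^ e)) ^ (e - 1) • A ∧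
        (ZMod.castHom hdp (ZMod p)).mapMatrix A = b • N := by
      rintro ⟨x, hx⟩
      rw [MonoidHom.mem_ker] at hx
      have hred : ∀ i j, ZMod.castHom hdp (ZMod p)
          ((((x : Matrix.SpecialLinearGroup (Fin 2) (ZMod (p ^ e))) : Mat p e) - 1) i j) = 0 := by
        intro i j
        have h1 : (ZMod.castHom hdp (ZMod p)).mapMatrix
            ((((x : Matrix.SpecialLinearGroup (Fin 2) (ZMod (p ^ e))) : Mat p e)) - 1) = 0 := by
          rw [map_sub, ← hφcoe, hx, map_one, Matrix.SpecialLinearGroup.coe_one, sub_self]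
        have h2 := congrFun (congrFun h1 i) j
        rwa [RingHom.mapMatrix_apply, Matrix.map_apply, Matrix.zero_apply] at h2
      obtain ⟨A, hA1, hA2⟩ :=
        unipotent_structure hp hodd he hdp _ (hMdet x) hred (hMpow x)
      -- commutation of the reduction of A with m
      set Mh : Mat p e := ((h0 : Matrix.SpecialLinearGroup (Fin 2) (ZMod (p ^ e))) : Mat p e)
        with hMh
      have hcm : (((x : Matrix.SpecialLinearGroup (Fin 2) (ZMod (p ^ e))) : Mat p e)) * Mh
          = Mh * (((x : Matrix.SpecialLinearGroup (Fin 2) (ZMod (p ^ e))) : Mat p e)) := by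
        have h1 : x * h0 = h0 * x := hcomm x h0
        have h2 := congrArg (fun z : H =>
          (((z : Matrix.SpecialLinearGroup (Fin 2) (ZMod (p ^ e))) : Mat p e))) h1
        simpa [Matrix.SpecialLinearGroup.coe_mul] using h2
      have hAcm : ∀ i j, ZMod.castHom hdp (ZMod p) ((A * Mh) i j)
          = ZMod.castHom hdp (ZMod p) ((Mh * A) i j) := by
        intro i j
        rw [hA1] at hcm
        have h3 : (p : ZMod (p ^ e)) ^ (e - 1) • (A * Mh)
            = (p : ZMod (p ^ e)) ^ (e - 1) • (Mh * A) := by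
          have h4 : (1 + (p : ZMod (p ^ e)) ^ (e - 1) • A) * Mh
              = Mh * (1 + (p : ZMod (p ^ e)) ^ (e - 1) • A) := hcm
          rw [add_mul, mul_add, one_mul, mul_one, smul_mul_assoc, mul_smul_comm] at h4
          exact add_left_cancel h4
        have h6 := congrFun (congrFun h3 i) j
        simp only [Matrix.smul_apply, smul_eq_mul] at h6
        have h7 : (p : ZMod (p ^ e)) ^ (e - 1) * ((A * Mh) i j - (Mh * A) i j) = 0 := by
          linear_combination h6
        obtain ⟨w, hw⟩ := (pow_mul_eq_zero_iff hp1 (by omega : e - 1 ≤ e) _).mp h7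
        have h8 : e - (e - 1) = 1 := by omega
        rw [h8, pow_one] at hw
        have h9 : ZMod.castHom hdp (ZMod p) ((A * Mh) i j - (Mh * A) i j) = 0 := by
          rw [(red_eq_zero_iff hp1 hdp _)]
          exact ⟨w, hw⟩
        rw [map_sub, sub_eq_zero] at h9
        exact h9
      have hρcomm : (ZMod.castHom hdp (ZMod p)).mapMatrix A * m
          = m * (ZMod.castHom hdp (ZMod p)).mapMatrix A := by
        have hρMh : (ZMod.castHom hdp (ZMod p)).mapMatrix Mh = m := (hφcoe h0).symm
        have h1 : (ZMod.castHom hdp (ZMod p)).mapMatrix (A * Mh)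
            = (ZMod.castHom hdp (ZMod p)).mapMatrix (Mh * A) := by
          ext i j
          simpa only [RingHom.mapMatrix_apply, Matrix.map_apply] using hAcm i j
        rwa [map_mul, map_mul, hρMh] at h1
      have hNcomm : (ZMod.castHom hdp (ZMod p)).mapMatrix A * N
          = N * (ZMod.castHom hdp (ZMod p)).mapMatrix A := by
        rw [hN, mul_sub, sub_mul, mul_one, one_mul, hρcomm]
      have htrA : ((ZMod.castHom hdp (ZMod p)).mapMatrix A) 0 0
          + ((ZMod.castHom hdp (ZMod p)).mapMatrix A) 1 1 = 0 := by
        simpa only [RingHom.mapMatrix_apply, Matrix.map_apply] using hA2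
      obtain ⟨b, hb⟩ := comm_tracezero_form hodd N _ hN2 hN0 hNcomm htrA
      exact ⟨b, A, hA1, hb⟩
    choose bK hbK using hker
    have hinjK : Function.Injective bK := by
      intro x y hxy
      obtain ⟨A, hA1, hA2⟩ := hbK x
      obtain ⟨A', hA1', hA2'⟩ := hbK y
      rw [hxy] at hA2
      have hall : ∀ i j, ZMod.castHom hdp (ZMod p) (A i j)
          = ZMod.castHom hdp (ZMod p) (A' i j) := by
        intro i j
        have := congrFun (congrFun (hA2.trans hA2'.symm) i) j
        simpa only [RingHom.mapMatrix_apply, Matrix.map_apply] using this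
      have hsm := mat_red_congr hp1 he hdp hall
      have hmat := hA1.trans (by rw [hsm, ← hA1'])
      exact Subtype.ext (Subtype.ext (Subtype.ext hmat))
    have hcardK : Nat.card φ.ker ≤ p := by
      have := Nat.card_le_card_of_injective bK hinjK
      rwa [Nat.card_zmod] at this
    -- assemble
    have hfact : Nat.card H = Nat.card (H ⧸ φ.ker) * Nat.card φ.ker :=
      Subgroup.card_eq_card_quotient_mul_card_subgroup φ.ker
    have hquot : Nat.card (H ⧸ φ.ker) = Nat.card φ.range :=
      Nat.card_congr (QuotientGroup.quotientKerEquivRange φ).toEquiv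
    calc Nat.card H = Nat.card φ.range * Nat.card φ.ker := by rw [hfact, hquot]
      _ ≤ p * p := Nat.mul_le_mul hcardR hcardK
      _ ≤ p ^ 3 := by nlinarith [hp.two_le]
end

section
/- Let p be an odd prime and e ≥ 2. Then rank_p(SL_2(ℤ/p^eℤ)) = 3. -/
lemma nat_div_fact {p : ℕ} (hp : p.Prime) (hp3 : 3 ≤ p) {m : ℕ} (hm : m < p - 1) :
    p ^ 3 ∣ p.choose m * p ^ (p - m) := by
  rcases Nat.eq_zero_or_pos m with h0 | h0
  · subst h0
    simp only [Nat.choose_zero_right, one_mul, Nat.sub_zero]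
    exact pow_dvd_pow p hp3
  · have h1 : p ∣ p.choose m := hp.dvd_choose_self (by omega) (by omega)
    have h2 : p ^ 2 ∣ p ^ (p - m) := pow_dvd_pow p (by omega)
    obtain ⟨c, hc⟩ := h1
    obtain ⟨d, hd⟩ := h2
    exact ⟨c * d, by rw [hc, hd]; ring⟩

lemma core_binomial_comm {p : ℕ} (hp : p.Prime) (hp3 : 3 ≤ p) {A : Type*} [CommRing A] (y : A) :
    ∃ V : A, (1 + (p : A) * y) ^ p = 1 + (p : A) ^ 2 * (y * (1 + (p : A) * V)) := by
  refine ⟨∑ m ∈ Finset.range (p - 1), ((p.choose m * p ^ (p - m) / p ^ 3 : ℕ) : A) * y ^ (p - m - 1), ?_⟩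
  rw [add_pow]
  simp only [one_pow, one_mul]
  have hsplit : p + 1 = (p - 1) + 1 + 1 := by omega
  rw [hsplit, Finset.sum_range_succ, Finset.sum_range_succ]
  have hterm_p : ((p : A) * y) ^ (p - (p - 1 + 1)) * (p.choose (p - 1 + 1) : A) = 1 := by
    rw [show p - 1 + 1 = p from by omega]
    simp
  have hterm_p1 : ((p : A) * y) ^ (p - (p - 1)) * (p.choose (p - 1) : A) = (p : A) ^ 2 * y := by
    rw [show p - (p - 1) = 1 from by omega, Nat.choose_symm (by omega : 1 ≤ p),
      Nat.choose_one_right]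
    ring
  rw [hterm_p, hterm_p1]
  have hsum : (∑ m ∈ Finset.range (p - 1), ((p : A) * y) ^ (p - m) * (p.choose m : A)) =
      (p : A) ^ 3 * (y * ∑ m ∈ Finset.range (p - 1),
        ((p.choose m * p ^ (p - m) / p ^ 3 : ℕ) : A) * y ^ (p - m - 1)) := by
    rw [Finset.mul_sum, Finset.mul_sum]
    refine Finset.sum_congr rfl (fun m hm => ?_)
    have hm' : m < p - 1 := Finset.mem_range.mp hm
    have hdvd := nat_div_fact hp hp3 hm'
    calc ((p : A) * y) ^ (p - m) * (p.choose m : A)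
        = ((p.choose m * p ^ (p - m) : ℕ) : A) * y ^ (p - m) := by push_cast; ring
      _ = ((p ^ 3 * (p.choose m * p ^ (p - m) / p ^ 3) : ℕ) : A) * y ^ (p - m) := by
          rw [Nat.mul_div_cancel' hdvd]
      _ = (p : A) ^ 3 * (y * (((p.choose m * p ^ (p - m) / p ^ 3 : ℕ) : A) * y ^ (p - m - 1))) := by
          push_cast
          rw [show p - m = (p - m - 1) + 1 from by omega]
          ring_nf
          rw [show 1 + (p - m - 1) - 1 = p - m - 1 from by omega]
  rw [hsum]
  ring

lemma core_binomial {p : ℕ} (hp : p.Prime) (hp3 : 3 ≤ p) {R : Type*} [CommRing R]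
    (y : Matrix (Fin 2) (Fin 2) R) :
    ∃ V : Matrix (Fin 2) (Fin 2) R,
      (1 + (p : Matrix (Fin 2) (Fin 2) R) * y) ^ p =
        1 + (p : Matrix (Fin 2) (Fin 2) R) ^ 2 * (y * (1 + (p : Matrix (Fin 2) (Fin 2) R) * V)) := by
  obtain ⟨V, hV⟩ := core_binomial_comm hp hp3 (Polynomial.X : Polynomial R)
  refine ⟨Polynomial.aeval y V, ?_⟩
  have := congrArg (Polynomial.aeval y) hV
  simpa only [map_add, map_mul, map_pow, map_one, map_natCast, Polynomial.aeval_X] using this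

section Consequences
variable {p e : ℕ} (hp : p.Prime) (hp3 : 3 ≤ p) (he : 2 ≤ e)

local notation "R" => ZMod (p ^ e)
local notation "Mat" => Matrix (Fin 2) (Fin 2) (ZMod (p ^ e))

include hp hp3 he in
lemma pcast_pow_e_eq_zero : ((p : Mat)) ^ e = 0 := by
  rw [← Nat.cast_pow]
  have h1 : ((p ^ e : ℕ) : R) = 0 := ZMod.natCast_self _
  calc ((p ^ e : ℕ) : Mat) = algebraMap R Mat ((p ^ e : ℕ) : R) := (map_natCast _ _).symm
    _ = 0 := by rw [h1, map_zero]

include hp hp3 he in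
lemma unit_one_add_p_mul (V : Mat) : IsUnit (1 + (p : Mat) * V) := by
  refine IsNilpotent.isUnit_one_add ⟨e, ?_⟩
  rw [(Nat.cast_commute p V).mul_pow, pcast_pow_e_eq_zero hp hp3 he, zero_mul]

include hp hp3 he in
lemma L1 (y : Mat) (hord : (1 + (p : Mat) * y) ^ p = 1) : (p : Mat) ^ 2 * y = 0 := by
  obtain ⟨V, hV⟩ := core_binomial hp hp3 y
  rw [hord] at hV
  have h0 : ((p : Mat) ^ 2 * y) * (1 + (p : Mat) * V) = 0 := by
    rw [mul_assoc]
    exact (left_eq_add.mp hV).symm ▸ rfl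
  exact ((unit_one_add_p_mul hp hp3 he V).mul_left_eq_zero).mp h0

include hp hp3 he in
lemma L2 (y : Mat) (hord : (1 + (p : Mat) * y) ^ p = -1) : False := by
  obtain ⟨V, hV⟩ := core_binomial hp hp3 y
  rw [hord] at hV
  have hdvd : (p : ℕ) ^ 2 ∣ p ^ e := pow_dvd_pow p he
  set φ : Mat →+* Matrix (Fin 2) (Fin 2) (ZMod (p ^ 2)) := (ZMod.castHom hdvd (ZMod (p ^ 2))).mapMatrix with hφ
  have := congrArg φ hV
  simp only [map_neg, map_one, map_add, map_mul, map_pow, map_natCast] at this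
  have hp2 : ((p : Matrix (Fin 2) (Fin 2) (ZMod (p ^ 2)))) ^ 2 = 0 := by
    rw [← Nat.cast_pow]
    calc ((p ^ 2 : ℕ) : Matrix (Fin 2) (Fin 2) (ZMod (p ^ 2))) =
        algebraMap (ZMod (p ^ 2)) _ ((p ^ 2 : ℕ) : ZMod (p ^ 2)) := (map_natCast _ _).symm
      _ = 0 := by rw [ZMod.natCast_self, map_zero]
  rw [hp2, zero_mul, add_zero] at this
  have h11 : (1 : Matrix (Fin 2) (Fin 2) (ZMod (p ^ 2))) + 1 = 0 := by
    nth_rewrite 1 [← this]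
    exact neg_add_cancel 1
  have hz : ((2 : ℕ) : ZMod (p ^ 2)) = 0 := by
    have h00 := congrFun (congrFun h11 0) 0
    simp only [Matrix.add_apply, Matrix.one_apply_eq, Matrix.zero_apply] at h00
    push_cast
    linear_combination h00
  rw [ZMod.natCast_eq_zero_iff] at hz
  have := Nat.le_of_dvd (by norm_num) hz
  nlinarith [hp3]

end Consequences

section Helpers
variable {p e : ℕ}

local notation "R" => ZMod (p ^ e)
local notation "Mat" => Matrix (Fin 2) (Fin 2) (ZMod (p ^ e))

lemma cast_zero_iff (m : ℕ) (h : m ∣ p ^ e) [NeZero (p ^ e)] (a : ZMod (p ^ e)) :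
    ZMod.castHom h (ZMod m) a = 0 ↔ m ∣ a.val := by
  rw [ZMod.castHom_apply, ← ZMod.natCast_val, ZMod.natCast_eq_zero_iff]

lemma mul_pow_eq_zero_iff (hp : p.Prime) (k : ℕ) (hk : k ≤ e) [NeZero (p ^ e)] (a : ZMod (p ^ e)) :
    ((p ^ k : ℕ) : ZMod (p ^ e)) * a = 0 ↔ p ^ (e - k) ∣ a.val := by
  conv_lhs => rw [← ZMod.natCast_rightInverse a]
  rw [← Nat.cast_mul, ZMod.natCast_eq_zero_iff]
  have h2 := Nat.mul_dvd_mul_iff_left (a := p ^ k) (b := p ^ (e - k)) (c := a.val)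
    (pow_pos hp.pos k)
  rw [← pow_add, show k + (e - k) = e from by omega] at h2
  exact h2

lemma natCast_mul_eq_smul (n : ℕ) (w : Mat) : (n : Mat) * w = ((n : ℕ) : R) • w := by
  rw [← map_natCast (algebraMap R Mat) n, Algebra.algebraMap_eq_smul_one, smul_mul_assoc, one_mul]

lemma exists_p_factor [NeZero (p ^ e)] (g : Mat) (hg : ∀ i j, p ∣ (g i j).val) :
    ∃ w : Mat, g = (p : Mat) * w := by
  refine ⟨Matrix.of (fun i j => (((g i j).val / p : ℕ) : R)), ?_⟩
  rw [natCast_mul_eq_smul]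
  ext i j
  rw [Matrix.smul_apply, Matrix.of_apply, smul_eq_mul, ← Nat.cast_mul,
    Nat.mul_div_cancel' (hg i j), ZMod.natCast_rightInverse]

lemma L3 (hp : p.Prime) (he : 2 ≤ e) [NeZero (p ^ e)] (h : Mat) (hdet : h.det = 1)
    (hc1 : h * !![1, ((p ^ (e-1) : ℕ) : R); 0, 1] = !![1, ((p ^ (e-1) : ℕ) : R); 0, 1] * h)
    (hc2 : h * !![1, 0; ((p ^ (e-1) : ℕ) : R), 1] = !![1, 0; ((p ^ (e-1) : ℕ) : R), 1] * h) :
    h.map (ZMod.castHom (dvd_pow_self p (by omega : e ≠ 0)) (ZMod p)) = 1 ∨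
      h.map (ZMod.castHom (dvd_pow_self p (by omega : e ≠ 0)) (ZMod p)) = -1 := by
  haveI : Fact p.Prime := ⟨hp⟩
  set f := ZMod.castHom (dvd_pow_self p (by omega : e ≠ 0)) (ZMod p) with hf
  set q : R := ((p ^ (e-1) : ℕ) : R) with hq
  have pdvd : ∀ x : R, q * x = 0 → f x = 0 := by
    intro x hx
    rw [cast_zero_iff]
    have := (mul_pow_eq_zero_iff hp (e-1) (by omega) x).mp hx
    rwa [show e - (e - 1) = 1 from by omega, pow_one] at this
  have e1 := congrFun (congrFun hc1 0) 1
  have e2 := congrFun (congrFun hc1 1) 1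
  have e3 := congrFun (congrFun hc2 0) 0
  simp [Matrix.mul_apply, Fin.sum_univ_two] at e1 e2 e3
  have had : f (h 0 0) = f (h 1 1) := by
    have : q * (h 0 0 - h 1 1) = 0 := by ring_nf; linear_combination e1
    have := pdvd _ this
    rw [map_sub, sub_eq_zero] at this
    exact this
  have hb : f (h 0 1) = 0 := pdvd _ (by linear_combination e3)
  have hc : f (h 1 0) = 0 := pdvd _ (by linear_combination e2)
  have hdet2 : f (h 0 0) * f (h 1 1) - f (h 0 1) * f (h 1 0) = 1 := by
    rw [← map_mul, ← map_mul, ← map_sub, ← Matrix.det_fin_two, hdet, map_one]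
  have hsq : f (h 0 0) ^ 2 = 1 := by
    rw [hb, hc] at hdet2
    rw [← had] at hdet2
    rw [sq]
    linear_combination hdet2
  have hcases : f (h 0 0) = 1 ∨ f (h 0 0) = -1 := by
    have : (f (h 0 0) - 1) * (f (h 0 0) + 1) = 0 := by ring_nf; linear_combination hsq
    rcases mul_eq_zero.mp this with h' | h'
    · left; exact sub_eq_zero.mp h'
    · right; exact eq_neg_of_add_eq_zero_left h'
  rcases hcases with h' | h'
  · left
    rw [Matrix.eta_fin_two (h.map f)]
    simp only [Matrix.map_apply]
    rw [hb, hc, ← had, h']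
    ext i j
    fin_cases i <;> fin_cases j <;> simp
  · right
    rw [Matrix.eta_fin_two (h.map f)]
    simp only [Matrix.map_apply]
    rw [hb, hc, ← had, h']
    ext i j
    fin_cases i <;> fin_cases j <;> simp

end Helpers

section Lower
variable {p e : ℕ}

local notation "R" => ZMod (p ^ e)

variable (p e) in
noncomputable def iota (a : ZMod p) : ZMod (p ^ e) := ((p ^ (e - 1) * a.val : ℕ) : R)

variable (hp : p.Prime) (he : 2 ≤ e) [NeZero (p ^ e)] [NeZero p]

include he in
lemma iota_key (n : ℕ) : ((p ^ (e - 1) * (n % p) : ℕ) : R) = ((p ^ (e - 1) * n : ℕ) : R) := by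
  conv_rhs => rw [← Nat.mod_add_div n p]
  have h0 : ((p : R)) ^ (e - 1 + 1) = 0 := by
    rw [show e - 1 + 1 = e from by omega, ← Nat.cast_pow, ZMod.natCast_self]
  push_cast
  linear_combination (-(n / p : ℕ) : R) * h0

include he in
lemma iota_add (a b : ZMod p) : iota p e (a + b) = iota p e a + iota p e b := by
  unfold iota
  rw [ZMod.val_add, iota_key he, Nat.mul_add]
  push_cast
  ring

include he in
lemma iota_mul (a b : ZMod p) : iota p e a * iota p e b = 0 := by
  unfold iota
  have h0 : ((p : R)) ^ (e - 1) * ((p : R)) ^ (e - 1) = 0 := by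
    rw [← pow_add, show e - 1 + (e - 1) = e + (e - 2) from by omega, pow_add,
      ← Nat.cast_pow, ZMod.natCast_self, zero_mul]
  push_cast
  linear_combination ((a.val : R) * (b.val : R)) * h0

include hp he in
lemma iota_inj : Function.Injective (iota p e) := by
  intro a b hab
  unfold iota at hab
  have hlt : ∀ c : ZMod p, p ^ (e - 1) * c.val < p ^ e := by
    intro c
    calc p ^ (e - 1) * c.val < p ^ (e - 1) * p :=
      mul_lt_mul_of_pos_left (ZMod.val_lt c) (pow_pos hp.pos _)
    _ = p ^ e := by rw [← pow_succ, show e - 1 + 1 = e from by omega]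
  have := congrArg ZMod.val hab
  rw [ZMod.val_cast_of_lt (hlt a), ZMod.val_cast_of_lt (hlt b)] at this
  have := Nat.eq_of_mul_eq_mul_left (pow_pos hp.pos (e - 1)) this
  exact ZMod.val_injective p this

lemma iota_zero : iota p e 0 = 0 := by
  unfold iota
  simp

variable (p e) in
noncomputable def lowerMat (v : Fin 3 → Multiplicative (ZMod p)) : Matrix (Fin 2) (Fin 2) R :=
  !![1 + iota p e (v 0).toAdd, iota p e (v 1).toAdd;
     iota p e (v 2).toAdd, 1 - iota p e (v 0).toAdd]

include he in
lemma lowerMat_det (v : Fin 3 → Multiplicative (ZMod p)) : (lowerMat p e v).det = 1 := by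
  rw [lowerMat, Matrix.det_fin_two_of]
  linear_combination (-1 : R) * iota_mul he (v 0).toAdd (v 0).toAdd
    - iota_mul he (v 1).toAdd (v 2).toAdd

include he in
lemma lowerMat_mul (v w : Fin 3 → Multiplicative (ZMod p)) :
    lowerMat p e (v * w) = lowerMat p e v * lowerMat p e w := by
  unfold lowerMat
  rw [Matrix.mul_fin_two]
  have hadd : ∀ i, ((v * w) i).toAdd = (v i).toAdd + (w i).toAdd := fun i => rfl
  ext i j
  fin_cases i <;> fin_cases j <;> simp [hadd, iota_add he]
  · linear_combination (-1 : R) * iota_mul he (v 0).toAdd (w 0).toAdd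
      - iota_mul he (v 1).toAdd (w 2).toAdd
  · linear_combination (-1 : R) * iota_mul he (v 0).toAdd (w 1).toAdd
      + iota_mul he (v 1).toAdd (w 0).toAdd
  · linear_combination (-1 : R) * iota_mul he (v 2).toAdd (w 0).toAdd
      + iota_mul he (v 0).toAdd (w 2).toAdd
  · linear_combination (-1 : R) * iota_mul he (v 2).toAdd (w 1).toAdd
      - iota_mul he (v 0).toAdd (w 0).toAdd

lemma lowerMat_one : lowerMat p e 1 = 1 := by
  unfold lowerMat
  have h0 : ∀ i : Fin 3, ((1 : Fin 3 → Multiplicative (ZMod p)) i).toAdd = (0 : ZMod p) :=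
    fun i => rfl
  rw [h0 0, h0 1, h0 2, iota_zero]
  ext i j
  fin_cases i <;> fin_cases j <;> simp

end Lower

section Main
variable {p e : ℕ}

local notation "R" => ZMod (p ^ e)
local notation "GG" => Matrix.SpecialLinearGroup (Fin 2) (ZMod (p ^ e))

lemma d_recover (hp : p.Prime) (he : 2 ≤ e) [NeZero (p ^ e)] (u v : R)
    (hu : p ^ (e - 1) ∣ u.val) (hv : p ^ (e - 1) ∣ v.val)
    (h : ((u.val / p ^ (e - 1) : ℕ) : ZMod p) = ((v.val / p ^ (e - 1) : ℕ) : ZMod p)) :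
    u = v := by
  have hlt : ∀ w : R, w.val / p ^ (e - 1) < p := fun w => by
    apply Nat.div_lt_of_lt_mul
    calc w.val < p ^ e := ZMod.val_lt w
      _ = p ^ (e - 1) * p := by rw [← pow_succ, show e - 1 + 1 = e from by omega]
  have hvv := congrArg ZMod.val h
  rw [ZMod.val_cast_of_lt (hlt u), ZMod.val_cast_of_lt (hlt v)] at hvv
  have h1 := Nat.div_mul_cancel hu
  have h2 := Nat.div_mul_cancel hv
  apply ZMod.val_injective
  rw [← h1, ← h2, hvv]

lemma isUnit_of_cast_one (hp : p.Prime) (he : 2 ≤ e) [NeZero (p ^ e)] (a : R)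
    (h : ZMod.castHom (dvd_pow_self p (by omega : e ≠ 0)) (ZMod p) a = 1) : IsUnit a := by
  haveI : Fact p.Prime := ⟨hp⟩
  have hnd : ¬ p ∣ a.val := by
    intro hd
    rw [(cast_zero_iff p _ a).mpr hd] at h
    exact one_ne_zero h.symm
  have : a = ((a.val : ℕ) : R) := (ZMod.natCast_rightInverse a).symm
  rw [this]
  rw [ZMod.isUnit_iff_coprime]
  exact Nat.Coprime.pow_right e (Nat.coprime_comm.mp ((Nat.Prime.coprime_iff_not_dvd hp).mpr hnd))

lemma sl2_ext (g g' : GG)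
    (h00u : IsUnit ((g : Matrix (Fin 2) (Fin 2) R) 0 0))
    (h00 : (g : Matrix (Fin 2) (Fin 2) R) 0 0 = (g' : Matrix (Fin 2) (Fin 2) R) 0 0)
    (h01 : (g : Matrix (Fin 2) (Fin 2) R) 0 1 = (g' : Matrix (Fin 2) (Fin 2) R) 0 1)
    (h10 : (g : Matrix (Fin 2) (Fin 2) R) 1 0 = (g' : Matrix (Fin 2) (Fin 2) R) 1 0) :
    g = g' := by
  have hd : (g : Matrix (Fin 2) (Fin 2) R) 1 1 = (g' : Matrix (Fin 2) (Fin 2) R) 1 1 := by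
    have d1 : (g : Matrix (Fin 2) (Fin 2) R).det = 1 := g.2
    have d2 : (g' : Matrix (Fin 2) (Fin 2) R).det = 1 := g'.2
    rw [Matrix.det_fin_two] at d1 d2
    apply h00u.mul_left_cancel
    rw [h00] at d1 ⊢
    rw [h01, h10] at d1
    linear_combination d1 - d2
  apply Subtype.ext
  ext i j
  fin_cases i <;> fin_cases j <;> assumption

theorem upper_bound (hp : p.Prime) (hp3 : 3 ≤ p) (he : 2 ≤ e) [NeZero (p ^ e)] [NeZero p]
    (r : ℕ) (H : Subgroup GG) (phi : H ≃* (Fin r → Multiplicative (ZMod p))) : r ≤ 3 := by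
  haveI : Fact p.Prime := ⟨hp⟩
  classical
  -- cardinality of H
  have cardH : Nat.card H = p ^ r := by
    rw [Nat.card_congr phi.toEquiv,
      Nat.card_congr (Equiv.piCongrRight fun _ : Fin r => Multiplicative.toAdd)]
    simp [Nat.card_pi, Nat.card_zmod]
  -- exponent p
  have hexp1 : ∀ x : Multiplicative (ZMod p), x ^ p = 1 := by
    intro x
    apply Multiplicative.toAdd.injective
    rw [toAdd_pow]
    simp [nsmul_eq_mul, ZMod.natCast_self]
  have hexp : ∀ h : H, h ^ p = 1 := by
    intro h
    apply phi.injective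
    rw [map_pow, map_one]
    funext i
    rw [Pi.pow_apply]
    exact hexp1 _
  have hcomm : ∀ a b : H, a * b = b * a := fun a b =>
    phi.injective (by rw [map_mul, map_mul, mul_comm])
  -- reduction homs
  set f1 : R →+* ZMod p := ZMod.castHom (dvd_pow_self p (by omega : e ≠ 0)) (ZMod p) with hf1def
  set f2 : R →+* ZMod (p ^ (e - 1)) :=
    ZMod.castHom (pow_dvd_pow p (by omega : e - 1 ≤ e)) (ZMod (p ^ (e - 1))) with hf2def
  set π : GG →* Matrix.SpecialLinearGroup (Fin 2) (ZMod p) :=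
    Matrix.SpecialLinearGroup.map f1 with hπdef
  set π₂ : GG →* Matrix.SpecialLinearGroup (Fin 2) (ZMod (p ^ (e - 1))) :=
    Matrix.SpecialLinearGroup.map f2 with hπ₂def
  set π' : H →* Matrix.SpecialLinearGroup (Fin 2) (ZMod p) := π.comp H.subtype with hπ'def
  -- membership criteria
  have memK1 : ∀ g : GG, π g = 1 ↔
      ∀ i j, p ∣ ((((g : Matrix (Fin 2) (Fin 2) R)) - 1) i j).val := by
    intro g
    constructor
    · intro hg i j
      have hmat := Subtype.ext_iff.mp hg
      rw [Matrix.SpecialLinearGroup.map_apply_coe, RingHom.mapMatrix_apply] at hmat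
      rw [Matrix.SpecialLinearGroup.coe_one] at hmat
      have hent := congrFun (congrFun hmat i) j
      rw [Matrix.map_apply] at hent
      have : f1 ((((g : Matrix (Fin 2) (Fin 2) R)) - 1) i j) = 0 := by
        rw [Matrix.sub_apply, map_sub, hent]
        rw [Matrix.one_apply, Matrix.one_apply, apply_ite f1, map_one, map_zero]
        simp
      exact (cast_zero_iff p _ _).mp this
    · intro hd
      apply Subtype.ext
      rw [Matrix.SpecialLinearGroup.map_apply_coe, RingHom.mapMatrix_apply]
      rw [Matrix.SpecialLinearGroup.coe_one]
      ext i j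
      rw [Matrix.map_apply]
      have h0 : f1 ((((g : Matrix (Fin 2) (Fin 2) R)) - 1) i j) = 0 :=
        (cast_zero_iff p _ _).mpr (hd i j)
      rw [Matrix.sub_apply, map_sub] at h0
      have : f1 ((1 : Matrix (Fin 2) (Fin 2) R) i j) = (1 : Matrix (Fin 2) (Fin 2) (ZMod p)) i j := by
        rw [Matrix.one_apply, Matrix.one_apply, apply_ite f1, map_one, map_zero]
      rw [this] at h0
      linear_combination h0
  have memK2 : ∀ g : GG, g ∈ π₂.ker ↔
      ∀ i j, p ^ (e - 1) ∣ ((((g : Matrix (Fin 2) (Fin 2) R)) - 1) i j).val := by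
    intro g
    rw [MonoidHom.mem_ker]
    constructor
    · intro hg i j
      have hmat := Subtype.ext_iff.mp hg
      rw [Matrix.SpecialLinearGroup.map_apply_coe, RingHom.mapMatrix_apply] at hmat
      rw [Matrix.SpecialLinearGroup.coe_one] at hmat
      have hent := congrFun (congrFun hmat i) j
      rw [Matrix.map_apply] at hent
      have : f2 ((((g : Matrix (Fin 2) (Fin 2) R)) - 1) i j) = 0 := by
        rw [Matrix.sub_apply, map_sub, hent]
        rw [Matrix.one_apply, Matrix.one_apply, apply_ite f2, map_one, map_zero]
        simp
      exact (cast_zero_iff _ _ _).mp this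
    · intro hd
      apply Subtype.ext
      rw [Matrix.SpecialLinearGroup.map_apply_coe, RingHom.mapMatrix_apply]
      rw [Matrix.SpecialLinearGroup.coe_one]
      ext i j
      rw [Matrix.map_apply]
      have h0 : f2 ((((g : Matrix (Fin 2) (Fin 2) R)) - 1) i j) = 0 :=
        (cast_zero_iff _ _ _).mpr (hd i j)
      rw [Matrix.sub_apply, map_sub] at h0
      have : f2 ((1 : Matrix (Fin 2) (Fin 2) R) i j)
          = (1 : Matrix (Fin 2) (Fin 2) (ZMod (p ^ (e - 1)))) i j := by
        rw [Matrix.one_apply, Matrix.one_apply, apply_ite f2, map_one, map_zero]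
      rw [this] at h0
      linear_combination h0
  -- unit lemma for members of ker π₂
  have hunit00 : ∀ g : GG, g ∈ π₂.ker → IsUnit ((g : Matrix (Fin 2) (Fin 2) R) 0 0) := by
    intro g hg
    have hd : p ∣ ((((g : Matrix (Fin 2) (Fin 2) R)) - 1) 0 0).val :=
      dvd_trans (dvd_pow_self p (by omega : e - 1 ≠ 0)) ((memK2 g).mp hg 0 0)
    have h0 : f1 ((((g : Matrix (Fin 2) (Fin 2) R)) - 1) 0 0) = 0 := (cast_zero_iff p _ _).mpr hd
    rw [Matrix.sub_apply, map_sub, Matrix.one_apply_eq, map_one, sub_eq_zero] at h0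
    exact isUnit_of_cast_one hp he _ h0
  -- card of ker π₂
  have hK2le : Nat.card π₂.ker ≤ p ^ 3 := by
    have hinj : Function.Injective (fun g : π₂.ker =>
        ((((((((g : GG) : Matrix (Fin 2) (Fin 2) R)) - 1) 0 0).val / p ^ (e - 1) : ℕ) : ZMod p),
         (((((((g : GG) : Matrix (Fin 2) (Fin 2) R)) - 1) 0 1).val / p ^ (e - 1) : ℕ) : ZMod p),
         (((((((g : GG) : Matrix (Fin 2) (Fin 2) R)) - 1) 1 0).val / p ^ (e - 1) : ℕ) : ZMod p))) := by
      intro a b hab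
      rw [Prod.ext_iff, Prod.ext_iff] at hab
      obtain ⟨e00, e01, e10⟩ := hab
      have ha := (memK2 _).mp a.2
      have hb := (memK2 _).mp b.2
      have q00 := d_recover hp he _ _ (ha 0 0) (hb 0 0) e00
      have q01 := d_recover hp he _ _ (ha 0 1) (hb 0 1) e01
      have q10 := d_recover hp he _ _ (ha 1 0) (hb 1 0) e10
      have hext := sl2_ext (a : GG) (b : GG) (hunit00 _ a.2) ?_ ?_ ?_
      · exact Subtype.ext hext
      · have := q00
        rw [Matrix.sub_apply, Matrix.sub_apply] at this
        linear_combination this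
      · have := q01
        rw [Matrix.sub_apply, Matrix.sub_apply] at this
        linear_combination this
      · have := q10
        rw [Matrix.sub_apply, Matrix.sub_apply] at this
        linear_combination this
    calc Nat.card π₂.ker ≤ Nat.card (ZMod p × ZMod p × ZMod p) :=
          Nat.card_le_card_of_injective _ hinj
      _ = p ^ 3 := by
          rw [Nat.card_prod, Nat.card_prod, Nat.card_zmod]
          ring
  -- ker π' maps into ker π₂
  have hker_sub : ∀ h : H, h ∈ π'.ker → (h : GG) ∈ π₂.ker := by
    intro h hh
    have hπh : π (h : GG) = 1 := hh
    have hdvd := (memK1 _).mp hπh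
    obtain ⟨w, hw⟩ := exists_p_factor ((((h : GG) : Matrix (Fin 2) (Fin 2) R)) - 1) hdvd
    have hval : ((h : GG) : Matrix (Fin 2) (Fin 2) R) = 1 + (p : Matrix (Fin 2) (Fin 2) R) * w := by
      rw [← hw]; abel
    have hpow : (1 + (p : Matrix (Fin 2) (Fin 2) R) * w) ^ p = 1 := by
      rw [← hval]
      have h1 : ((h : GG) : Matrix (Fin 2) (Fin 2) R) ^ p
          = (((h ^ p : H) : GG) : Matrix (Fin 2) (Fin 2) R) := by
        rw [SubgroupClass.coe_pow, Matrix.SpecialLinearGroup.coe_pow]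
      rw [h1, hexp h]
      rfl
    have hL1 := L1 hp hp3 he w hpow
    rw [memK2]
    intro i j
    have hmul : (p : Matrix (Fin 2) (Fin 2) R) * ((((h : GG) : Matrix (Fin 2) (Fin 2) R)) - 1) = 0 := by
      rw [hw, ← mul_assoc]
      calc (p : Matrix (Fin 2) (Fin 2) R) * (p : Matrix (Fin 2) (Fin 2) R) * w
          = (p : Matrix (Fin 2) (Fin 2) R) ^ 2 * w := by rw [sq]
        _ = 0 := hL1
    rw [natCast_mul_eq_smul] at hmul
    have hent := congrFun (congrFun hmul i) j
    rw [Matrix.smul_apply, smul_eq_mul, Matrix.zero_apply] at hent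
    have hcast : ((p ^ 1 : ℕ) : R) * ((((h : GG) : Matrix (Fin 2) (Fin 2) R) - 1) i j) = 0 := by
      rw [pow_one]
      exact hent
    exact (mul_pow_eq_zero_iff hp 1 (by omega) _).mp hcast
  -- card of ker π'
  have hkerle : Nat.card π'.ker ≤ p ^ 3 := by
    have hinj : Function.Injective
        (fun h : π'.ker => (⟨((h : H) : GG), hker_sub (h : H) h.2⟩ : π₂.ker)) := by
      intro a b hab
      have := Subtype.ext_iff.mp hab
      exact Subtype.ext (Subtype.ext this)
    calc Nat.card π'.ker ≤ Nat.card π₂.ker := Nat.card_le_card_of_injective _ hinj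
      _ ≤ p ^ 3 := hK2le
  -- counting
  have c1 : p ^ r = Nat.card π'.range * Nat.card π'.ker := by
    rw [← cardH, Subgroup.card_eq_card_quotient_mul_card_subgroup π'.ker,
      Nat.card_congr (QuotientGroup.quotientKerEquivRange π').toEquiv]
  have hGLcard : Nat.card (GL (Fin 2) (ZMod p)) = (p ^ 2 - 1) * (p ^ 2 - p) := by
    rw [Matrix.card_GL_field]
    simp [ZMod.card, Fin.prod_univ_two]
  have hSLinj : Function.Injective
      (@Matrix.SpecialLinearGroup.toGL (Fin 2) _ _ (ZMod p) _) := by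
    intro a b h
    ext i j
    exact congrArg (fun u : GL (Fin 2) (ZMod p) => u.val i j) h
  have hrange_dvd : Nat.card π'.range ∣ (p ^ 2 - 1) * (p ^ 2 - p) := by
    rw [← hGLcard]
    exact dvd_trans (Subgroup.card_subgroup_dvd_card π'.range)
      (Subgroup.card_dvd_of_injective _ hSLinj)
  obtain ⟨k, hkr, hk⟩ := (Nat.dvd_prime_pow hp).mp
    (⟨Nat.card π'.ker, c1⟩ : Nat.card π'.range ∣ p ^ r)
  have hk1 : k ≤ 1 := by
    by_contra hk2
    have hp2dvd : p ^ 2 ∣ (p ^ 2 - 1) * (p ^ 2 - p) :=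
      dvd_trans (pow_dvd_pow p (by omega)) (hk ▸ hrange_dvd)
    have hsub : p ^ 2 - p = p * (p - 1) := by
      rw [Nat.mul_sub]
      ring_nf
    rw [hsub] at hp2dvd
    have hstep : p * p ∣ p * ((p ^ 2 - 1) * (p - 1)) := by
      have : (p ^ 2 - 1) * (p * (p - 1)) = p * ((p ^ 2 - 1) * (p - 1)) := by ring
      rw [this] at hp2dvd
      rwa [← sq]
    have hpdvd : p ∣ (p ^ 2 - 1) * (p - 1) :=
      (Nat.mul_dvd_mul_iff_left hp.pos).mp hstep
    rcases (Nat.Prime.dvd_mul hp).mp hpdvd with hca | hca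
    · have h1 : p ∣ p ^ 2 - (p ^ 2 - 1) := Nat.dvd_sub (dvd_pow_self p (by omega)) hca
      have h2 : p ^ 2 - (p ^ 2 - 1) = 1 := by
        have : 1 ≤ p ^ 2 := Nat.one_le_pow _ _ hp.pos
        omega
      rw [h2] at h1
      have := Nat.le_of_dvd (by norm_num) h1
      omega
    · have h1 : p ∣ p - (p - 1) := Nat.dvd_sub dvd_rfl hca
      have h2 : p - (p - 1) = 1 := by omega
      rw [h2] at h1
      have := Nat.le_of_dvd (by norm_num) h1
      omega
  have hrle : Nat.card π'.range ≤ p := by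
    rw [hk]
    calc p ^ k ≤ p ^ 1 := Nat.pow_le_pow_right hp.pos hk1
      _ = p := pow_one p
  -- r ≤ 4
  have hr4 : r ≤ 4 := by
    have h1 : p ^ r ≤ p * p ^ 3 := by
      rw [c1]
      exact Nat.mul_le_mul hrle hkerle
    have h2 : p ^ r ≤ p ^ 4 := by
      calc p ^ r ≤ p * p ^ 3 := h1
        _ = p ^ 4 := by ring
    exact (Nat.pow_le_pow_iff_right hp.one_lt).mp h2
  -- now suppose r = 4 and derive a contradiction
  by_contra hr3
  have hr : r = 4 := by omega
  rw [hr] at c1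
  have hck : Nat.card π'.ker = p ^ 3 := by
    have hge : p ^ 3 ≤ Nat.card π'.ker := by
      have h1 : p * p ^ 3 ≤ p * Nat.card π'.ker := by
        calc p * p ^ 3 = p ^ 4 := by ring
          _ = Nat.card π'.range * Nat.card π'.ker := c1
          _ ≤ p * Nat.card π'.ker := Nat.mul_le_mul_right _ hrle
      exact Nat.le_of_mul_le_mul_left h1 hp.pos
    omega
  have hcr : Nat.card π'.range = p := by
    have h1 : Nat.card π'.range * (p ^ 3) = p * (p ^ 3) := by
      rw [← hck, ← c1, hck]
      ring
    exact Nat.eq_of_mul_eq_mul_right (pow_pos hp.pos 3) h1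
  -- the distinguished unipotent elements
  set q : R := ((p ^ (e - 1) : ℕ) : R) with hqdef
  have hqval : q.val = p ^ (e - 1) := by
    rw [hqdef, ZMod.val_cast_of_lt]
    exact Nat.pow_lt_pow_right hp.one_lt (by omega)
  have hdet1 : (!![1, q; 0, 1] : Matrix (Fin 2) (Fin 2) R).det = 1 := by
    rw [Matrix.det_fin_two_of]; ring
  have hdet2 : (!![1, 0; q, 1] : Matrix (Fin 2) (Fin 2) R).det = 1 := by
    rw [Matrix.det_fin_two_of]; ring
  set z1 : GG := ⟨!![1, q; 0, 1], hdet1⟩ with hz1def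
  set z2 : GG := ⟨!![1, 0; q, 1], hdet2⟩ with hz2def
  have hz1K : z1 ∈ π₂.ker := by
    rw [memK2]
    intro i j
    fin_cases i <;> fin_cases j <;>
      simp [hz1def, Matrix.sub_apply, Matrix.one_apply, hqval, ZMod.val_zero]
  have hz2K : z2 ∈ π₂.ker := by
    rw [memK2]
    intro i j
    fin_cases i <;> fin_cases j <;>
      simp [hz2def, Matrix.sub_apply, Matrix.one_apply, hqval, ZMod.val_zero]
  -- the image of ker π' in GG equals ker π₂
  have hTeq : (H.subtype '' (π'.ker : Set H) : Set GG) = (π₂.ker : Set GG) := by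
    apply Set.eq_of_subset_of_ncard_le
    · rintro x ⟨h, hh, rfl⟩
      exact hker_sub h hh
    · rw [Set.ncard_image_of_injective _ (Subgroup.subtype_injective H),
        ← Nat.card_coe_set_eq, ← Nat.card_coe_set_eq, SetLike.coe_sort_coe,
        SetLike.coe_sort_coe, hck]
      exact hK2le
    · exact Set.toFinite _
  have hz1T : z1 ∈ (H.subtype '' (π'.ker : Set H) : Set GG) := hTeq ▸ hz1K
  have hz2T : z2 ∈ (H.subtype '' (π'.ker : Set H) : Set GG) := hTeq ▸ hz2K
  obtain ⟨h1, _, hh1⟩ := hz1T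
  obtain ⟨h2, _, hh2⟩ := hz2T
  have hm1 : ((h1 : GG) : Matrix (Fin 2) (Fin 2) R) = !![1, q; 0, 1] :=
    congrArg (fun g : GG => (g : Matrix (Fin 2) (Fin 2) R)) hh1
  have hm2 : ((h2 : GG) : Matrix (Fin 2) (Fin 2) R) = !![1, 0; q, 1] :=
    congrArg (fun g : GG => (g : Matrix (Fin 2) (Fin 2) R)) hh2
  -- every element of H is ±1 mod p
  have dich : ∀ h : H, (((h : GG) : Matrix (Fin 2) (Fin 2) R)).map f1 = 1 ∨
      (((h : GG) : Matrix (Fin 2) (Fin 2) R)).map f1 = -1 := by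
    intro h
    have hcz1 : ((h : GG) : Matrix (Fin 2) (Fin 2) R) * !![1, q; 0, 1]
        = !![1, q; 0, 1] * ((h : GG) : Matrix (Fin 2) (Fin 2) R) := by
      have hcm := hcomm h h1
      have := congrArg (fun x : H => ((x : GG) : Matrix (Fin 2) (Fin 2) R)) hcm
      simp only [Subgroup.coe_mul, Matrix.SpecialLinearGroup.coe_mul] at this
      rw [hm1] at this
      exact this
    have hcz2 : ((h : GG) : Matrix (Fin 2) (Fin 2) R) * !![1, 0; q, 1]
        = !![1, 0; q, 1] * ((h : GG) : Matrix (Fin 2) (Fin 2) R) := by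
      have hcm := hcomm h h2
      have := congrArg (fun x : H => ((x : GG) : Matrix (Fin 2) (Fin 2) R)) hcm
      simp only [Subgroup.coe_mul, Matrix.SpecialLinearGroup.coe_mul] at this
      rw [hm2] at this
      exact this
    exact L3 hp he _ (h : GG).2 hcz1 hcz2
  by_cases hall : ∀ h : H, (((h : GG) : Matrix (Fin 2) (Fin 2) R)).map f1 = 1
  · -- then π' is trivial, contradicting card range = p
    have hbot : π'.range = ⊥ := by
      rw [eq_bot_iff]
      rintro x ⟨h, rfl⟩
      rw [Subgroup.mem_bot]
      apply Subtype.ext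
      rw [Matrix.SpecialLinearGroup.coe_one]
      show ((π ((h : GG)) : Matrix.SpecialLinearGroup (Fin 2) (ZMod p))
        : Matrix (Fin 2) (Fin 2) (ZMod p)) = 1
      rw [hπdef, Matrix.SpecialLinearGroup.map_apply_coe, RingHom.mapMatrix_apply]
      exact hall h
    rw [hbot, Subgroup.card_bot] at hcr
    omega
  · push_neg at hall
    obtain ⟨h, hh⟩ := hall
    have hneg : (((h : GG) : Matrix (Fin 2) (Fin 2) R)).map f1 = -1 := (dich h).resolve_left hh
    -- -h ≡ 1 mod p
    have hdvdneg : ∀ i j, p ∣ (((-((h : GG) : Matrix (Fin 2) (Fin 2) R)) - 1) i j).val := by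
      intro i j
      apply (cast_zero_iff p _ _).mp
      have hent := congrFun (congrFun hneg i) j
      rw [Matrix.map_apply] at hent
      rw [Matrix.sub_apply, Matrix.neg_apply, map_sub, map_neg, hent]
      have : f1 ((1 : Matrix (Fin 2) (Fin 2) R) i j) = (1 : Matrix (Fin 2) (Fin 2) (ZMod p)) i j := by
        rw [Matrix.one_apply, Matrix.one_apply, apply_ite f1, map_one, map_zero]
      rw [this, Matrix.neg_apply]
      ring
    obtain ⟨w, hw⟩ := exists_p_factor _ hdvdneg
    have hvaleq : 1 + (p : Matrix (Fin 2) (Fin 2) R) * w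
        = -((h : GG) : Matrix (Fin 2) (Fin 2) R) := by
      rw [← hw]; abel
    have hpodd : Odd p := hp.odd_of_ne_two (by omega)
    have hpow : (1 + (p : Matrix (Fin 2) (Fin 2) R) * w) ^ p = -1 := by
      rw [hvaleq, hpodd.neg_pow]
      have h1 : ((h : GG) : Matrix (Fin 2) (Fin 2) R) ^ p
          = (((h ^ p : H) : GG) : Matrix (Fin 2) (Fin 2) R) := by
        rw [SubgroupClass.coe_pow, Matrix.SpecialLinearGroup.coe_pow]
      rw [h1, hexp h]
      rfl
    exact L2 hp hp3 he w hpow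

noncomputable def lowerHom (p e : ℕ) (he : 2 ≤ e) [NeZero (p ^ e)] [NeZero p] :
    (Fin 3 → Multiplicative (ZMod p)) →* Matrix.SpecialLinearGroup (Fin 2) (ZMod (p ^ e)) where
  toFun v := ⟨lowerMat p e v, lowerMat_det he v⟩
  map_one' := Subtype.ext lowerMat_one
  map_mul' v w := Subtype.ext (lowerMat_mul he v w)

lemma lowerHom_injective (p e : ℕ) (hp : p.Prime) (he : 2 ≤ e) [NeZero (p ^ e)] [NeZero p] :
    Function.Injective (lowerHom p e he) := by
  intro v w h
  have hmat : lowerMat p e v = lowerMat p e w := Subtype.ext_iff.mp h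
  unfold lowerMat at hmat
  have e00 := congrFun (congrFun hmat 0) 0
  have e01 := congrFun (congrFun hmat 0) 1
  have e10 := congrFun (congrFun hmat 1) 0
  simp only [Matrix.cons_val', Matrix.cons_val_zero, Matrix.cons_val_one, Matrix.head_cons,
    Matrix.empty_val', Matrix.cons_val_fin_one, Matrix.head_fin_const, Matrix.of_apply] at e00 e01 e10
  have h0 : (v 0).toAdd = (w 0).toAdd := iota_inj hp he (by linear_combination e00)
  have h1 : (v 1).toAdd = (w 1).toAdd := iota_inj hp he e01
  have h2 : (v 2).toAdd = (w 2).toAdd := iota_inj hp he e10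
  funext i
  fin_cases i
  exacts [Multiplicative.toAdd.injective h0, Multiplicative.toAdd.injective h1,
    Multiplicative.toAdd.injective h2]

end Main

/-- For `p` an odd prime and `e ≥ 2`, `rank_p(SL_2(ℤ/p^eℤ)) = 3`. -/
theorem stmt_7 (p e : ℕ) (hp : p.Prime) (hodd : Odd p) (he : 2 ≤ e) :
    pRank p (Matrix.SpecialLinearGroup (Fin 2) (ZMod (p ^ e))) = 3 := by
  haveI : NeZero p := ⟨hp.pos.ne'⟩
  haveI : NeZero (p ^ e) := ⟨pow_ne_zero e hp.pos.ne'⟩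
  have hp3 : 3 ≤ p := by
    have hne2 : p ≠ 2 := by rintro rfl; exact (by decide : ¬ Odd 2) hodd
    have := hp.two_le
    omega
  have hmem : 3 ∈ {r : ℕ | ∃ H : Subgroup (Matrix.SpecialLinearGroup (Fin 2) (ZMod (p ^ e))),
      Nonempty (H ≃* (Fin r → Multiplicative (ZMod p)))} := by
    refine ⟨(lowerHom p e he).range, ⟨(MonoidHom.ofInjective (lowerHom_injective p e hp he)).symm⟩⟩
  have hub : ∀ r ∈ {r : ℕ | ∃ H : Subgroup (Matrix.SpecialLinearGroup (Fin 2) (ZMod (p ^ e))),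
      Nonempty (H ≃* (Fin r → Multiplicative (ZMod p)))}, r ≤ 3 := by
    rintro r ⟨H, ⟨phi⟩⟩
    exact upper_bound hp hp3 he r H phi
  unfold pRank
  exact le_antisymm (csSup_le ⟨3, hmem⟩ hub) (le_csSup ⟨3, hub⟩ hmem)
end

section
/- Let e ≥ 3. In SL_2(ℤ/2^eℤ), the set of elements M with M² = I forms a subgroup isomorphic to (ℤ/2ℤ)^4, namely the preimage of {±I} under the reduction map SL_2(ℤ/2^eℤ) → SL_2(ℤ/2^{e-1}ℤ). -/
namespace Stmt8

open Matrix

variable {e : ℕ}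

lemma pow_e_zero : (2 : ZMod (2^e))^e = 0 := by
  have : ((2^e : ℕ) : ZMod (2^e)) = 0 := ZMod.natCast_self _
  push_cast at this
  exact this

lemma two_mul_p (he : 1 ≤ e) : (2 : ZMod (2^e)) * 2^(e-1) = 0 := by
  have h : (2 : ZMod (2^e)) * 2^(e-1) = 2^(e-1+1) := by ring
  rw [h, Nat.sub_add_cancel he, pow_e_zero]

lemma p_mul_p (he : 2 ≤ e) : (2^(e-1) : ZMod (2^e)) * 2^(e-1) = 0 := by
  have h : (2^(e-1) : ZMod (2^e)) * 2^(e-1) = 2^e * 2^(e-2) := by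
    rw [← pow_add, ← pow_add]
    congr 1
    omega
  rw [h, pow_e_zero, zero_mul]

lemma eq_zero_or_p_of_dvd (he : 1 ≤ e) {x : ZMod (2^e)} (h : 2^(e-1) ∣ x.val) :
    x = 0 ∨ x = 2^(e-1) := by
  haveI : NeZero (2^e) := ⟨pow_ne_zero e two_ne_zero⟩
  obtain ⟨k, hk⟩ := h
  have hx : ((x.val : ℕ) : ZMod (2^e)) = x := ZMod.natCast_rightInverse x
  have hval : x.val < 2^e := ZMod.val_lt x
  have h2e : 2^e = 2^(e-1) * 2 := by rw [← pow_succ, Nat.sub_add_cancel he]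
  have hk2 : k < 2 := by
    by_contra h2
    push_neg at h2
    have : 2^(e-1) * 2 ≤ 2^(e-1) * k := Nat.mul_le_mul_left _ h2
    omega
  interval_cases k
  · left; rw [← hx, hk]; simp
  · right; rw [← hx, hk]; push_cast; ring

lemma p_mul_any (he : 1 ≤ e) (y : ZMod (2^e)) :
    (2^(e-1) : ZMod (2^e)) * y = 0 ∨ (2^(e-1) : ZMod (2^e)) * y = 2^(e-1) := by
  haveI : NeZero (2^e) := ⟨pow_ne_zero e two_ne_zero⟩
  have hy : ((y.val : ℕ) : ZMod (2^e)) = y := ZMod.natCast_rightInverse y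
  rcases Nat.even_or_odd y.val with ⟨k, hk⟩ | ⟨k, hk⟩
  · left
    have : (2^(e-1) : ZMod (2^e)) * y = (2 * 2^(e-1)) * (k : ZMod (2^e)) := by
      rw [← hy, hk]; push_cast; ring
    rw [this, two_mul_p he, zero_mul]
  · right
    have : (2^(e-1) : ZMod (2^e)) * y = (2 * 2^(e-1)) * (k : ZMod (2^e)) + 2^(e-1) := by
      rw [← hy, hk]; push_cast; ring
    rw [this, two_mul_p he, zero_mul, zero_add]

lemma two_mul_eq_zero_iff (he : 1 ≤ e) (x : ZMod (2^e)) :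
    2 * x = 0 ↔ x = 0 ∨ x = 2^(e-1) := by
  haveI : NeZero (2^e) := ⟨pow_ne_zero e two_ne_zero⟩
  constructor
  · intro h
    apply eq_zero_or_p_of_dvd he
    have hx : ((x.val : ℕ) : ZMod (2^e)) = x := ZMod.natCast_rightInverse x
    have h2 : ((2 * x.val : ℕ) : ZMod (2^e)) = 0 := by push_cast; rw [hx]; exact h
    rw [ZMod.natCast_eq_zero_iff] at h2
    have h2e : 2^e = 2 * 2^(e-1) := by rw [← pow_succ']; congr 1; omega
    have h3 : 2 * 2^(e-1) ∣ 2 * x.val := h2e ▸ h2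
    exact (mul_dvd_mul_iff_left (two_ne_zero)).mp h3
  · rintro (rfl | rfl)
    · rw [mul_zero]
    · exact two_mul_p he

lemma Tmul (he : 2 ≤ e) {x y : ZMod (2^e)} (hx : 2*x = 0) (hy : 2*y = 0) : x * y = 0 := by
  rcases (two_mul_eq_zero_iff (by omega) x).mp hx with rfl | rfl
  · rw [zero_mul]
  · rcases (two_mul_eq_zero_iff (by omega) y).mp hy with rfl | rfl
    · rw [mul_zero]
    · exact p_mul_p he

lemma prime_pow_dvd_of_coprime {p : ℤ} (hp : Prime p) {k : ℕ} {m n : ℤ}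
    (hc : IsCoprime m n) (h : p^k ∣ m*n) : p^k ∣ m ∨ p^k ∣ n := by
  by_cases hm : p ∣ m
  · have hn : ¬ p ∣ n := fun hn => hp.not_unit (hc.isUnit_of_dvd' hm hn)
    left
    exact (IsCoprime.pow_left ((hp.coprime_iff_not_dvd).mpr hn)).dvd_of_dvd_mul_right h
  · right
    exact (IsCoprime.pow_left ((hp.coprime_iff_not_dvd).mpr hm)).dvd_of_dvd_mul_left h

lemma sq_eq_one_back (he : 3 ≤ e) (x : ZMod (2^e))
    (h : x = 1 ∨ x = -1 ∨ x = 1 + 2^(e-1) ∨ x = -1 + 2^(e-1)) : x^2 = 1 := by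
  have h2p := two_mul_p (e := e) (by omega)
  have hpp := p_mul_p (e := e) (by omega)
  rcases h with rfl | rfl | rfl | rfl
  · rw [one_pow]
  · rw [neg_one_sq]
  · linear_combination h2p + hpp
  · linear_combination hpp - h2p

lemma sq_eq_one_iff (he : 3 ≤ e) (x : ZMod (2^e)) :
    x^2 = 1 ↔ (x = 1 ∨ x = -1 ∨ x = 1 + 2^(e-1) ∨ x = -1 + 2^(e-1)) := by
  haveI : NeZero (2^e) := ⟨pow_ne_zero e two_ne_zero⟩
  constructor
  · intro h
    set a : ℤ := (x.val : ℤ) with ha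
    have hxa : ((a : ℤ) : ZMod (2^e)) = x := by
      rw [ha]; push_cast; exact ZMod.natCast_rightInverse x
    have hdvd : ((2^e : ℕ) : ℤ) ∣ (a^2 - 1) := by
      rw [← ZMod.intCast_zmod_eq_zero_iff_dvd]
      push_cast
      rw [hxa, h, sub_self]
    push_cast at hdvd
    have hodd : Odd a := by
      rcases Int.even_or_odd a with ⟨j, hj⟩ | ho
      · exfalso
        have h2 : (2:ℤ) ∣ a^2 - 1 := dvd_trans (dvd_pow_self 2 (by omega : e ≠ 0)) hdvd
        have h3 : a^2 - 1 = 2*(2*j*j) - 1 := by rw [hj]; ring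
        obtain ⟨c, hc⟩ := h2
        omega
      · exact ho
    obtain ⟨j, hj⟩ := hodd
    have h4 : (2:ℤ)^e ∣ 4*(j*(j+1)) := by
      have : a^2 - 1 = 4*(j*(j+1)) := by rw [hj]; ring
      rwa [this] at hdvd
    have he2 : (2:ℤ)^e = 4 * 2^(e-2) := by
      have : (2:ℤ)^e = 2^(2 + (e-2)) := by congr 1; omega
      rw [this, pow_add]; norm_num
    have h5 : (2:ℤ)^(e-2) ∣ j*(j+1) := by
      rw [he2] at h4
      exact (mul_dvd_mul_iff_left (by norm_num : (4:ℤ) ≠ 0)).mp h4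
    have hc : IsCoprime j (j+1) := ⟨-1, 1, by ring⟩
    have hpow : ∀ t : ℤ, 2^(e-2) ∣ t → (2:ℤ)^(e-1) ∣ 2*t := by
      intro t ⟨u, hu⟩
      exact ⟨u, by rw [hu, ← mul_assoc, ← pow_succ']; congr 2; omega⟩
    have key : ∀ y : ZMod (2^e), (∃ t : ℤ, (2:ℤ)^(e-1) ∣ t ∧ ((t:ℤ) : ZMod (2^e)) = y) →
        y = 0 ∨ y = 2^(e-1) := by
      rintro y ⟨t, ⟨u, hu⟩, hty⟩
      have : y = (2^(e-1) : ZMod (2^e)) * ((u : ℤ) : ZMod (2^e)) := by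
        rw [← hty, hu]; push_cast; ring
      rw [this]
      exact p_mul_any (by omega) _
    rcases prime_pow_dvd_of_coprime Int.prime_two hc h5 with h6 | h6
    · have h7 : x - 1 = 0 ∨ x - 1 = 2^(e-1) := by
        apply key
        exact ⟨a - 1, by rw [hj, show 2*j+1-1 = 2*j by ring]; exact hpow j h6, by push_cast [hxa]; ring⟩
      rcases h7 with h7 | h7
      · left; linear_combination h7
      · right; right; left; linear_combination h7
    · have h7 : x + 1 = 0 ∨ x + 1 = 2^(e-1) := by
        apply key
        exact ⟨a + 1, by rw [hj, show 2*j+1+1 = 2*(j+1) by ring]; exact hpow (j+1) h6,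
          by push_cast [hxa]; ring⟩
      rcases h7 with h7 | h7
      · right; left; linear_combination h7
      · right; right; right; linear_combination h7
  · exact sq_eq_one_back he x

lemma pow_lt (he : 3 ≤ e) : 2^(e-1) < 2^e := Nat.pow_lt_pow_right one_lt_two (by omega)

lemma four_le (he : 3 ≤ e) : 4 ≤ 2^(e-1) := by
  calc 4 = 2^2 := by norm_num
  _ ≤ 2^(e-1) := Nat.pow_le_pow_right (by norm_num) (by omega)

lemma p_ne_zero (he : 3 ≤ e) : (2^(e-1) : ZMod (2^e)) ≠ 0 := by
  intro h
  have h2 : ((2^(e-1) : ℕ) : ZMod (2^e)) = 0 := by push_cast; exact h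
  rw [ZMod.natCast_eq_zero_iff] at h2
  have := Nat.le_of_dvd (by positivity) h2
  have := pow_lt he
  omega

lemma two_ne_zero' (he : 3 ≤ e) : (2 : ZMod (2^e)) ≠ 0 := by
  intro h
  have h2 : ((2 : ℕ) : ZMod (2^e)) = 0 := by push_cast; exact h
  rw [ZMod.natCast_eq_zero_iff] at h2
  have := Nat.le_of_dvd (by norm_num) h2
  have := pow_lt he
  have := four_le he
  omega

lemma p_ne_two (he : 3 ≤ e) : (2^(e-1) : ZMod (2^e)) ≠ 2 := by
  intro h
  have h4 := four_le he
  have h2 : ((2^(e-1) - 2 : ℕ) : ZMod (2^e)) = 0 := by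
    push_cast [Nat.cast_sub (by omega : 2 ≤ 2^(e-1))]
    rw [h]; ring
  rw [ZMod.natCast_eq_zero_iff] at h2
  have := Nat.le_of_dvd (by omega) h2
  have := pow_lt he
  omega

lemma p_ne_neg_two (he : 3 ≤ e) : (2^(e-1) : ZMod (2^e)) ≠ -2 := by
  intro h
  have h4 := four_le he
  have hlt := pow_lt he
  have h2 : ((2^(e-1) + 2 : ℕ) : ZMod (2^e)) = 0 := by
    push_cast
    rw [h]; ring
  rw [ZMod.natCast_eq_zero_iff] at h2
  have := Nat.le_of_dvd (by omega) h2
  have h2e : 2^e = 2^(e-1) * 2 := by rw [← pow_succ]; congr 1; omega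
  omega

lemma cast_p_eq_zero (he : 3 ≤ e) :
    (ZMod.castHom (pow_dvd_pow 2 (Nat.sub_le e 1)) (ZMod (2^(e-1)))) (2^(e-1)) = 0 := by
  rw [map_pow, map_ofNat]
  have : ((2^(e-1) : ℕ) : ZMod (2^(e-1))) = 0 := ZMod.natCast_self _
  push_cast at this
  exact this

lemma cast_eq_zero_iff (he : 3 ≤ e) (x : ZMod (2^e)) :
    (ZMod.castHom (pow_dvd_pow 2 (Nat.sub_le e 1)) (ZMod (2^(e-1)))) x = 0 ↔
      (x = 0 ∨ x = 2^(e-1)) := by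
  haveI : NeZero (2^e) := ⟨pow_ne_zero e two_ne_zero⟩
  constructor
  · intro h
    apply eq_zero_or_p_of_dvd (by omega : 1 ≤ e)
    have hx : ((x.val : ℕ) : ZMod (2^e)) = x := ZMod.natCast_rightInverse x
    have h2 : ((x.val : ℕ) : ZMod (2^(e-1))) = 0 := by
      rw [ZMod.natCast_val]
      rwa [ZMod.castHom_apply] at h
    rw [ZMod.natCast_eq_zero_iff] at h2
    exact h2
  · rintro (rfl | rfl)
    · exact map_zero _
    · exact cast_p_eq_zero he

lemma cast_eq_one_iff (he : 3 ≤ e) (x : ZMod (2^e)) :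
    (ZMod.castHom (pow_dvd_pow 2 (Nat.sub_le e 1)) (ZMod (2^(e-1)))) x = 1 ↔
      (x = 1 ∨ x = 1 + 2^(e-1)) := by
  have h := cast_eq_zero_iff he (x - 1)
  rw [map_sub, _root_.map_one, sub_eq_zero] at h
  constructor
  · intro hx
    rcases h.mp hx with h1 | h1
    · left; linear_combination h1
    · right; linear_combination h1
  · rintro (rfl | rfl)
    · exact h.mpr (by left; ring)
    · exact h.mpr (by right; ring)

lemma cast_eq_neg_one_iff (he : 3 ≤ e) (x : ZMod (2^e)) :
    (ZMod.castHom (pow_dvd_pow 2 (Nat.sub_le e 1)) (ZMod (2^(e-1)))) x = -1 ↔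
      (x = -1 ∨ x = -1 + 2^(e-1)) := by
  have h := cast_eq_zero_iff he (x + 1)
  rw [map_add, _root_.map_one] at h
  rw [show ((ZMod.castHom (pow_dvd_pow 2 (Nat.sub_le e 1)) (ZMod (2^(e-1)))) x = -1) ↔
      ((ZMod.castHom (pow_dvd_pow 2 (Nat.sub_le e 1)) (ZMod (2^(e-1)))) x + 1 = 0) by
    constructor <;> intro h' <;> linear_combination h']
  rw [h]
  constructor
  · rintro (h1 | h1)
    · left; linear_combination h1
    · right; linear_combination h1
  · rintro (rfl | rfl)
    · left; ring
    · right; ring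

def P (M : Matrix.SpecialLinearGroup (Fin 2) (ZMod (2^e))) : Prop :=
  2 * M.1 0 1 = 0 ∧ 2 * M.1 1 0 = 0 ∧ M.1 1 1 = M.1 0 0 ∧ (M.1 0 0)^2 = 1

lemma sq_one_iff_P (he : 3 ≤ e) (M : Matrix.SpecialLinearGroup (Fin 2) (ZMod (2^e))) :
    M^2 = 1 ↔ P M := by
  constructor
  · intro h
    have hinv : M⁻¹ = M := inv_eq_of_mul_eq_one_right (by rw [← sq]; exact h)
    rw [Matrix.SpecialLinearGroup.SL2_inv_expl M] at hinv
    have hcoe : (![![M.1 1 1, -M.1 0 1], ![-M.1 1 0, M.1 0 0]] :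
        Matrix (Fin 2) (Fin 2) (ZMod (2^e))) = M.1 := congrArg Subtype.val hinv
    have h00 : M.1 1 1 = M.1 0 0 := by
      have := congrFun (congrFun hcoe 0) 0; simpa using this
    have h01 : -M.1 0 1 = M.1 0 1 := by
      have := congrFun (congrFun hcoe 0) 1; simpa using this
    have h10 : -M.1 1 0 = M.1 1 0 := by
      have := congrFun (congrFun hcoe 1) 0; simpa using this
    have hb : 2 * M.1 0 1 = 0 := by linear_combination -h01
    have hc : 2 * M.1 1 0 = 0 := by linear_combination -h10
    have hdet : M.1 0 0 * M.1 1 1 - M.1 0 1 * M.1 1 0 = 1 := by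
      rw [← Matrix.det_fin_two]; exact M.2
    refine ⟨hb, hc, h00, ?_⟩
    have hbc : M.1 0 1 * M.1 1 0 = 0 := Tmul (by omega) hb hc
    linear_combination hdet + hbc - M.1 0 0 * h00
  · rintro ⟨hb, hc, hd, ha⟩
    have hbc : M.1 0 1 * M.1 1 0 = 0 := Tmul (by omega) hb hc
    have hm : M.1 * M.1 = 1 := by
      ext i j
      fin_cases i <;> fin_cases j <;>
        simp [Matrix.mul_apply, Fin.sum_univ_two, Matrix.one_apply]
      · linear_combination ha + hbc
      · linear_combination M.1 0 0 * hb + M.1 0 1 * hd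
      · linear_combination M.1 0 0 * hc + M.1 1 0 * hd
      · linear_combination hbc + ha + (M.1 1 1 + M.1 0 0) * hd
    ext i j
    rw [sq]
    have : ((M * M : Matrix.SpecialLinearGroup (Fin 2) (ZMod (2^e))) : Matrix (Fin 2) (Fin 2) (ZMod (2^e))) = M.1 * M.1 := rfl
    rw [show ((M * M : Matrix.SpecialLinearGroup (Fin 2) (ZMod (2^e))).1 : Matrix (Fin 2) (Fin 2) (ZMod (2^e))) = M.1 * M.1 from rfl, hm]
    rfl

lemma map_coe (M : Matrix.SpecialLinearGroup (Fin 2) (ZMod (2^e))) :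
    ((Matrix.SpecialLinearGroup.map (n := Fin 2)
        (ZMod.castHom (pow_dvd_pow 2 (Nat.sub_le e 1)) (ZMod (2 ^ (e - 1)))) M :
      Matrix (Fin 2) (Fin 2) (ZMod (2 ^ (e - 1))))) =
    M.1.map (ZMod.castHom (pow_dvd_pow 2 (Nat.sub_le e 1)) (ZMod (2 ^ (e - 1)))) := rfl

lemma P_iff_red (he : 3 ≤ e) (M : Matrix.SpecialLinearGroup (Fin 2) (ZMod (2^e))) :
    P M ↔
      ((Matrix.SpecialLinearGroup.map (n := Fin 2)
          (ZMod.castHom (pow_dvd_pow 2 (Nat.sub_le e 1)) (ZMod (2 ^ (e - 1)))) M :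
        Matrix (Fin 2) (Fin 2) (ZMod (2 ^ (e - 1)))) = 1 ∨
       (Matrix.SpecialLinearGroup.map (n := Fin 2)
          (ZMod.castHom (pow_dvd_pow 2 (Nat.sub_le e 1)) (ZMod (2 ^ (e - 1)))) M :
        Matrix (Fin 2) (Fin 2) (ZMod (2 ^ (e - 1)))) = -1) := by
  set f := ZMod.castHom (pow_dvd_pow 2 (Nat.sub_le e 1)) (ZMod (2 ^ (e - 1))) with hf
  constructor
  · rintro ⟨hb, hc, hd, ha⟩
    have hfb : f (M.1 0 1) = 0 := (cast_eq_zero_iff he _).mpr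
      ((two_mul_eq_zero_iff (by omega) _).mp hb)
    have hfc : f (M.1 1 0) = 0 := (cast_eq_zero_iff he _).mpr
      ((two_mul_eq_zero_iff (by omega) _).mp hc)
    rcases (sq_eq_one_iff he _).mp ha with h1 | h1 | h1 | h1
    · left
      have hfa : f (M.1 0 0) = 1 := (cast_eq_one_iff he _).mpr (Or.inl h1)
      rw [map_coe]
      ext i j
      simp only [hf, ZMod.castHom_apply] at hfa hfb hfc
      fin_cases i <;> fin_cases j <;>
        simp [Matrix.map_apply, Matrix.one_apply, hfa, hfb, hfc, hd]
    · right
      have hfa : f (M.1 0 0) = -1 := (cast_eq_neg_one_iff he _).mpr (Or.inl h1)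
      rw [map_coe]
      ext i j
      simp only [hf, ZMod.castHom_apply] at hfa hfb hfc
      fin_cases i <;> fin_cases j <;>
        simp [Matrix.map_apply, Matrix.one_apply, hfa, hfb, hfc, hd]
    · left
      have hfa : f (M.1 0 0) = 1 := (cast_eq_one_iff he _).mpr (Or.inr h1)
      rw [map_coe]
      ext i j
      simp only [hf, ZMod.castHom_apply] at hfa hfb hfc
      fin_cases i <;> fin_cases j <;>
        simp [Matrix.map_apply, Matrix.one_apply, hfa, hfb, hfc, hd]
    · right
      have hfa : f (M.1 0 0) = -1 := (cast_eq_neg_one_iff he _).mpr (Or.inr h1)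
      rw [map_coe]
      ext i j
      simp only [hf, ZMod.castHom_apply] at hfa hfb hfc
      fin_cases i <;> fin_cases j <;>
        simp [Matrix.map_apply, Matrix.one_apply, hfa, hfb, hfc, hd]
  · intro h
    have hdet : M.1 0 0 * M.1 1 1 - M.1 0 1 * M.1 1 0 = 1 := by
      rw [← Matrix.det_fin_two]; exact M.2
    have key : ∀ (hb : f (M.1 0 1) = 0) (hc : f (M.1 1 0) = 0)
        (ha : (M.1 0 0)^2 = 1) (hd : (M.1 1 1)^2 = 1), P M := by
      intro hb hc ha hd2
      have hb' : 2 * M.1 0 1 = 0 :=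
        (two_mul_eq_zero_iff (by omega) _).mpr ((cast_eq_zero_iff he _).mp hb)
      have hc' : 2 * M.1 1 0 = 0 :=
        (two_mul_eq_zero_iff (by omega) _).mpr ((cast_eq_zero_iff he _).mp hc)
      have hbc : M.1 0 1 * M.1 1 0 = 0 := Tmul (by omega) hb' hc'
      have had : M.1 0 0 * M.1 1 1 = 1 := by linear_combination hdet + hbc
      refine ⟨hb', hc', ?_, ha⟩
      linear_combination (-(M.1 1 1)) * ha + (M.1 0 0) * had
    rcases h with h | h
    · rw [map_coe] at h
      have h00 := congrFun (congrFun h 0) 0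
      have h01 := congrFun (congrFun h 0) 1
      have h10 := congrFun (congrFun h 1) 0
      have h11 := congrFun (congrFun h 1) 1
      simp [Matrix.map_apply, Matrix.one_apply] at h00 h01 h10 h11
      refine key h01 h10 ?_ ?_
      · exact sq_eq_one_back he _ (by
          rcases (cast_eq_one_iff he _).mp h00 with h1 | h1
          · exact Or.inl h1
          · exact Or.inr (Or.inr (Or.inl h1)))
      · exact sq_eq_one_back he _ (by
          rcases (cast_eq_one_iff he _).mp h11 with h1 | h1
          · exact Or.inl h1
          · exact Or.inr (Or.inr (Or.inl h1)))
    · rw [map_coe] at h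
      have h00 := congrFun (congrFun h 0) 0
      have h01 := congrFun (congrFun h 0) 1
      have h10 := congrFun (congrFun h 1) 0
      have h11 := congrFun (congrFun h 1) 1
      simp [Matrix.map_apply, Matrix.one_apply] at h00 h01 h10 h11
      refine key ?_ ?_ ?_ ?_
      · exact h01
      · exact h10
      · exact sq_eq_one_back he _ (by
          rcases (cast_eq_neg_one_iff he _).mp h00 with h1 | h1
          · exact Or.inr (Or.inl h1)
          · exact Or.inr (Or.inr (Or.inr h1)))
      · exact sq_eq_one_back he _ (by
          rcases (cast_eq_neg_one_iff he _).mp h11 with h1 | h1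
          · exact Or.inr (Or.inl h1)
          · exact Or.inr (Or.inr (Or.inr h1)))

def Hsub (e : ℕ) (he : 3 ≤ e) : Subgroup (Matrix.SpecialLinearGroup (Fin 2) (ZMod (2^e))) where
  carrier := {M | M ^ 2 = 1}
  one_mem' := by simp
  inv_mem' := by
    intro a ha
    show a⁻¹ ^ 2 = 1
    rw [inv_pow, ha, inv_one]
  mul_mem' := by
    intro a b ha hb
    show (a * b) ^ 2 = 1
    rw [sq_one_iff_P he, P_iff_red he]
    have ha' := (P_iff_red he a).mp ((sq_one_iff_P he a).mp ha)
    have hb' := (P_iff_red he b).mp ((sq_one_iff_P he b).mp hb)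
    have hmul : ((Matrix.SpecialLinearGroup.map (n := Fin 2)
        (ZMod.castHom (pow_dvd_pow 2 (Nat.sub_le e 1)) (ZMod (2 ^ (e - 1)))) (a * b) :
        Matrix (Fin 2) (Fin 2) (ZMod (2 ^ (e - 1))))) =
        (Matrix.SpecialLinearGroup.map (n := Fin 2)
          (ZMod.castHom (pow_dvd_pow 2 (Nat.sub_le e 1)) (ZMod (2 ^ (e - 1)))) a :
          Matrix (Fin 2) (Fin 2) (ZMod (2 ^ (e - 1)))) *
        (Matrix.SpecialLinearGroup.map (n := Fin 2)
          (ZMod.castHom (pow_dvd_pow 2 (Nat.sub_le e 1)) (ZMod (2 ^ (e - 1)))) b :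
          Matrix (Fin 2) (Fin 2) (ZMod (2 ^ (e - 1)))) := by
      rw [_root_.map_mul]; rfl
    rcases ha' with h1 | h1 <;> rcases hb' with h2 | h2 <;>
      rw [hmul, h1, h2] <;> simp

lemma mem_Hsub_iff (he : 3 ≤ e) (M : Matrix.SpecialLinearGroup (Fin 2) (ZMod (2^e))) :
    M ∈ Hsub e he ↔ M ^ 2 = 1 := Iff.rfl

lemma card_S (he : 3 ≤ e) : Nat.card {a : ZMod (2^e) // a^2 = 1} = 4 := by
  haveI : NeZero (2^e) := ⟨pow_ne_zero e two_ne_zero⟩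
  have hA : (1 : ZMod (2^e)) ≠ -1 := fun h => two_ne_zero' he (by linear_combination h)
  have hB : (1 : ZMod (2^e)) ≠ 1 + 2^(e-1) := fun h => p_ne_zero he (by linear_combination -h)
  have hC : (1 : ZMod (2^e)) ≠ -1 + 2^(e-1) := fun h => p_ne_two he (by linear_combination -h)
  have hD : (-1 : ZMod (2^e)) ≠ 1 + 2^(e-1) := fun h => p_ne_neg_two he (by linear_combination -h)
  have hE : (-1 : ZMod (2^e)) ≠ -1 + 2^(e-1) := fun h => p_ne_zero he (by linear_combination -h)
  have hF : (1 + 2^(e-1) : ZMod (2^e)) ≠ -1 + 2^(e-1) := fun h => two_ne_zero' he (by linear_combination h)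
  have h1 : Nat.card {a : ZMod (2^e) // a^2 = 1} =
      Nat.card (({1, -1, 1 + 2^(e-1), -1 + 2^(e-1)} : Set (ZMod (2^e)))) := by
    apply Nat.card_congr
    apply Equiv.subtypeEquivRight
    intro x
    rw [sq_eq_one_iff he]
    simp [Set.mem_insert_iff]
  rw [h1, Nat.card_coe_set_eq]
  rw [Set.ncard_insert_of_notMem (by simp [hA, hB, hC]),
    Set.ncard_insert_of_notMem (by simp [hD, hE]),
    Set.ncard_insert_of_notMem (by simp [hF]), Set.ncard_singleton]

lemma card_T (he : 3 ≤ e) : Nat.card {b : ZMod (2^e) // 2*b = 0} = 2 := by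
  haveI : NeZero (2^e) := ⟨pow_ne_zero e two_ne_zero⟩
  have h1 : Nat.card {b : ZMod (2^e) // 2*b = 0} =
      Nat.card (({0, 2^(e-1)} : Set (ZMod (2^e)))) := by
    apply Nat.card_congr
    apply Equiv.subtypeEquivRight
    intro x
    rw [two_mul_eq_zero_iff (by omega : 1 ≤ e)]
    simp [Set.mem_insert_iff]
  rw [h1, Nat.card_coe_set_eq,
    Set.ncard_insert_of_notMem (by simp [(p_ne_zero he).symm, Ne, eq_comm]),
    Set.ncard_singleton]

def Hequiv (he : 3 ≤ e) : (Hsub e he) ≃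
    ({a : ZMod (2^e) // a^2 = 1} × {b : ZMod (2^e) // 2*b = 0} × {b : ZMod (2^e) // 2*b = 0}) where
  toFun x := ⟨⟨x.1.1 0 0, ((sq_one_iff_P he x.1).mp x.2).2.2.2⟩,
    ⟨x.1.1 0 1, ((sq_one_iff_P he x.1).mp x.2).1⟩,
    ⟨x.1.1 1 0, ((sq_one_iff_P he x.1).mp x.2).2.1⟩⟩
  invFun y := ⟨⟨!![y.1.1, y.2.1.1; y.2.2.1, y.1.1], by
      rw [Matrix.det_fin_two_of]
      have hbc := Tmul (show 2 ≤ e by omega) y.2.1.2 y.2.2.2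
      linear_combination y.1.2 - hbc⟩, by
      refine (mem_Hsub_iff he _).mpr ((sq_one_iff_P he _).mpr ?_)
      refine ⟨?_, ?_, ?_, ?_⟩
      · show 2 * (!![y.1.1, y.2.1.1; y.2.2.1, y.1.1] 0 1) = 0
        simpa using y.2.1.2
      · show 2 * (!![y.1.1, y.2.1.1; y.2.2.1, y.1.1] 1 0) = 0
        simpa using y.2.2.2
      · show (!![y.1.1, y.2.1.1; y.2.2.1, y.1.1] 1 1) = _
        simp
      · show (!![y.1.1, y.2.1.1; y.2.2.1, y.1.1] 0 0)^2 = 1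
        simpa using y.1.2⟩
  left_inv x := by
    apply Subtype.ext
    apply Subtype.ext
    have hd := ((sq_one_iff_P he x.1).mp x.2).2.2.1
    show (!![x.1.1 0 0, x.1.1 0 1; x.1.1 1 0, x.1.1 0 0] : Matrix _ _ _) = x.1.1
    conv_rhs => rw [Matrix.eta_fin_two x.1.1]
    rw [hd]
  right_inv y := by
    refine Prod.ext ?_ (Prod.ext ?_ ?_) <;> apply Subtype.ext <;> simp

lemma card_Hsub (he : 3 ≤ e) : Nat.card (Hsub e he) = 16 := by
  rw [Nat.card_congr (Hequiv he), Nat.card_prod, Nat.card_prod, card_S he, card_T he]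

lemma iso_Hsub (he : 3 ≤ e) :
    Nonempty ((Hsub e he) ≃* (Fin 4 → Multiplicative (ZMod 2))) := by
  haveI : NeZero (2^e) := ⟨pow_ne_zero e two_ne_zero⟩
  haveI : Fact (Nat.Prime 2) := ⟨Nat.prime_two⟩
  have hsq : ∀ x : Hsub e he, x * x = 1 := by
    intro x
    have hx : (x : Matrix.SpecialLinearGroup (Fin 2) (ZMod (2^e)))^2 = 1 := x.2
    apply Subtype.ext
    have h1 : ((x*x : Hsub e he) : Matrix.SpecialLinearGroup (Fin 2) (ZMod (2^e))) =
        (x : Matrix.SpecialLinearGroup (Fin 2) (ZMod (2^e))) * x := rfl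
    rw [h1, ← sq, hx]
    rfl
  letI cg : CommGroup (Hsub e he) :=
    { (inferInstance : Group (Hsub e he)) with
      mul_comm := fun a b => by
        have h1 : a⁻¹ = a := inv_eq_of_mul_eq_one_right (hsq a)
        have h2 : b⁻¹ = b := inv_eq_of_mul_eq_one_right (hsq b)
        have h3 : (a*b)⁻¹ = a*b := inv_eq_of_mul_eq_one_right (hsq (a*b))
        calc a * b = (a*b)⁻¹ := h3.symm
        _ = b⁻¹ * a⁻¹ := mul_inv_rev a b
        _ = b * a := by rw [h1, h2] }
  letI : Module (ZMod 2) (Additive (Hsub e he)) := AddCommGroup.zmodModule (by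
    intro x
    show (2 : ℕ) • x = 0
    rw [two_nsmul]
    exact hsq x)
  letI : Fintype (Additive (Hsub e he)) := Fintype.ofFinite _
  have hrank : Module.finrank (ZMod 2) (Additive (Hsub e he)) = 4 := by
    have hc := Module.card_eq_pow_finrank (K := ZMod 2) (V := Additive (Hsub e he))
    have hc2 : Fintype.card (Additive (Hsub e he)) = 16 := by
      rw [Fintype.card_eq_nat_card]
      rw [Nat.card_congr (Additive.toMul (α := (Hsub e he)))]
      exact card_Hsub he
    have hq : Fintype.card (ZMod 2) = 2 := ZMod.card 2
    rw [hc2, hq] at hc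
    have h16 : (2:ℕ)^4 = 2 ^ Module.finrank (ZMod 2) (Additive (Hsub e he)) := by
      rw [← hc]; norm_num
    exact (Nat.pow_right_injective (le_refl 2) h16).symm
  let b := Module.finBasisOfFinrankEq (ZMod 2) (Additive (Hsub e he)) hrank
  exact ⟨(MulEquiv.multiplicativeAdditive (Hsub e he)).symm.trans
    ((AddEquiv.toMultiplicative b.equivFun.toAddEquiv).trans
      (MulEquiv.piMultiplicative fun _ => ZMod 2))⟩

end Stmt8

/-- For `e ≥ 3`, the set of elements `M ∈ SL_2(ℤ/2^eℤ)` with `M² = I` forms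
a subgroup isomorphic to `(ℤ/2ℤ)⁴`, namely the preimage of `{±I}` under the reduction
map `SL_2(ℤ/2^eℤ) → SL_2(ℤ/2^(e-1)ℤ)`. -/
theorem stmt_8 (e : ℕ) (he : 3 ≤ e) :
    ∃ H : Subgroup (Matrix.SpecialLinearGroup (Fin 2) (ZMod (2 ^ e))),
      (∀ M, M ∈ H ↔ M ^ 2 = 1) ∧
      (∀ M, M ∈ H ↔
        ((Matrix.SpecialLinearGroup.map (n := Fin 2)
            (ZMod.castHom (pow_dvd_pow 2 (Nat.sub_le e 1)) (ZMod (2 ^ (e - 1)))) M :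
          Matrix (Fin 2) (Fin 2) (ZMod (2 ^ (e - 1)))) = 1 ∨
         (Matrix.SpecialLinearGroup.map (n := Fin 2)
            (ZMod.castHom (pow_dvd_pow 2 (Nat.sub_le e 1)) (ZMod (2 ^ (e - 1)))) M :
          Matrix (Fin 2) (Fin 2) (ZMod (2 ^ (e - 1)))) = -1)) ∧
      Nonempty (H ≃* (Fin 4 → Multiplicative (ZMod 2))) := by
  refine ⟨Stmt8.Hsub e he, fun M => Iff.rfl, fun M => ?_, Stmt8.iso_Hsub he⟩
  exact (Stmt8.mem_Hsub_iff he M).trans ((Stmt8.sq_one_iff_P he M).trans (Stmt8.P_iff_red he M))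
end

section
/- Let e ≥ 3 and let M ∈ SL_2(ℤ/2^eℤ) satisfy M² = I. Then 2M = tr(M)·I in M_2(ℤ/2^eℤ), and the reduction of M modulo 2^{e-1} equals u·I for some unit u with u² = 1 in ℤ/2^{e-1}ℤ. -/
lemma zmod_cast_eq_zero_of_two_mul (e : ℕ) (he : 1 ≤ e) (b : ZMod (2 ^ e))
    (hb : 2 * b = 0) :
    (ZMod.castHom (pow_dvd_pow 2 (Nat.sub_le e 1)) (ZMod (2 ^ (e - 1)))) b = 0 := by
  have hb' : ((2 * b.val : ℕ) : ZMod (2 ^ e)) = 0 := by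
    push_cast
    rw [ZMod.natCast_val, ZMod.cast_id]
    exact hb
  have hdvd : (2 : ℕ) ^ e ∣ 2 * b.val := by
    rwa [ZMod.natCast_eq_zero_iff] at hb'
  have hdvd' : (2 : ℕ) ^ (e - 1) ∣ b.val := by
    obtain ⟨k, hk⟩ := hdvd
    refine ⟨k, ?_⟩
    have h2 : 2 * b.val = 2 * (2 ^ (e - 1) * k) := by
      rw [hk, ← mul_assoc, ← pow_succ']
      congr 2
      omega
    exact Nat.eq_of_mul_eq_mul_left two_pos h2
  have : b = ((b.val : ℕ) : ZMod (2 ^ e)) := by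
    rw [ZMod.natCast_val, ZMod.cast_id]
  rw [this, map_natCast, ZMod.natCast_eq_zero_iff]
  exact hdvd'

/-- Let `e ≥ 3` and `M ∈ SL_2(ℤ/2^eℤ)` with `M² = I`. Then
`2M = tr(M)·I` in `M_2(ℤ/2^eℤ)`, and the reduction of `M` modulo `2^(e-1)` equals
`u·I` for some unit `u` with `u² = 1` in `ℤ/2^(e-1)ℤ`. -/
theorem stmt_9 (e : ℕ) (he : 3 ≤ e)
    (M : Matrix.SpecialLinearGroup (Fin 2) (ZMod (2 ^ e)))
    (hM : M ^ 2 = 1) :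
    (2 : ZMod (2 ^ e)) • (M : Matrix (Fin 2) (Fin 2) (ZMod (2 ^ e)))
      = Matrix.trace (M : Matrix (Fin 2) (Fin 2) (ZMod (2 ^ e))) •
          (1 : Matrix (Fin 2) (Fin 2) (ZMod (2 ^ e))) ∧
    ∃ u : (ZMod (2 ^ (e - 1)))ˣ, (u : ZMod (2 ^ (e - 1))) ^ 2 = 1 ∧
      (Matrix.SpecialLinearGroup.map (n := Fin 2)
          (ZMod.castHom (pow_dvd_pow 2 (Nat.sub_le e 1)) (ZMod (2 ^ (e - 1)))) M :
        Matrix (Fin 2) (Fin 2) (ZMod (2 ^ (e - 1))))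
        = (u : ZMod (2 ^ (e - 1))) • (1 : Matrix (Fin 2) (Fin 2) (ZMod (2 ^ (e - 1)))) := by
  set A : Matrix (Fin 2) (Fin 2) (ZMod (2 ^ e)) := (M : Matrix (Fin 2) (Fin 2) (ZMod (2 ^ e)))
  have hinv : M⁻¹ = M := by
    have := hM
    rw [sq] at this
    exact inv_eq_of_mul_eq_one_left this
  have hadj : A.adjugate = A := by
    rw [← Matrix.SpecialLinearGroup.coe_inv, hinv]
  have hA : A = !![A 0 0, A 0 1; A 1 0, A 1 1] := by
    ext i j; fin_cases i <;> fin_cases j <;> rfl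
  rw [hA, Matrix.adjugate_fin_two_of] at hadj
  have h00 : A 1 1 = A 0 0 := by
    have := congrFun (congrFun hadj 0) 0; simpa using this
  have h01 : 2 * A 0 1 = 0 := by
    have := congrFun (congrFun hadj 0) 1
    simp at this
    linear_combination -this
  have h10 : 2 * A 1 0 = 0 := by
    have := congrFun (congrFun hadj 1) 0
    simp at this
    linear_combination -this
  have hdet : A 0 0 * A 1 1 - A 0 1 * A 1 0 = 1 := by
    have := M.property
    rw [show M.val = A from rfl, hA, Matrix.det_fin_two_of] at this
    linear_combination this
  constructor
  · ext i j
    fin_cases i <;> fin_cases j <;>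
      simp [Matrix.trace_fin_two, h00, Matrix.one_apply] <;> ring_nf
    · linear_combination h01
    · linear_combination h10
  · -- b*c = 0 in ZMod (2^e)
    have hbc : A 0 1 * A 1 0 = 0 := by
      have hb : ((2:ℕ) ^ e) ∣ 2 * (A 0 1).val := by
        rw [← ZMod.natCast_eq_zero_iff]
        push_cast
        rw [ZMod.natCast_val, ZMod.cast_id]
        exact h01
      have hc : ((2:ℕ) ^ e) ∣ 2 * (A 1 0).val := by
        rw [← ZMod.natCast_eq_zero_iff]
        push_cast
        rw [ZMod.natCast_val, ZMod.cast_id]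
        exact h10
      have hb' : (2:ℕ) ^ (e-1) ∣ (A 0 1).val := by
        obtain ⟨k, hk⟩ := hb
        refine ⟨k, ?_⟩
        have h2 : 2 * (A 0 1).val = 2 * (2^(e-1) * k) := by
          rw [hk, ← mul_assoc, ← pow_succ']; congr 2; omega
        exact Nat.eq_of_mul_eq_mul_left two_pos h2
      have hc' : (2:ℕ) ^ (e-1) ∣ (A 1 0).val := by
        obtain ⟨k, hk⟩ := hc
        refine ⟨k, ?_⟩
        have h2 : 2 * (A 1 0).val = 2 * (2^(e-1) * k) := by
          rw [hk, ← mul_assoc, ← pow_succ']; congr 2; omega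
        exact Nat.eq_of_mul_eq_mul_left two_pos h2
      have : ((2:ℕ)^e) ∣ (A 0 1).val * (A 1 0).val := by
        obtain ⟨k, hk⟩ := hb'; obtain ⟨l, hl⟩ := hc'
        refine ⟨2^(e-2) * k * l, ?_⟩
        rw [hk, hl]
        have : (2:ℕ)^(e-1) * 2^(e-1) = 2^e * 2^(e-2) := by
          rw [← pow_add, ← pow_add]; congr 1; omega
        calc 2^(e-1)*k*(2^(e-1)*l) = 2^(e-1)*2^(e-1)*(k*l) := by ring
        _ = 2^e * (2^(e-2)*k*l) := by rw [this]; ring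
      have h0 : (((A 0 1).val * (A 1 0).val : ℕ) : ZMod (2^e)) = 0 := by
        rwa [ZMod.natCast_eq_zero_iff]
      push_cast at h0
      rwa [ZMod.natCast_val, ZMod.cast_id, ZMod.natCast_val, ZMod.cast_id] at h0
    have ha2 : A 0 0 * A 0 0 = 1 := by
      rw [h00] at hdet
      linear_combination hdet + hbc
    set f := ZMod.castHom (pow_dvd_pow 2 (Nat.sub_le e 1)) (ZMod (2 ^ (e - 1)))
    have ha2' : f (A 0 0) * f (A 0 0) = 1 := by
      rw [← map_mul, ha2, map_one]
    refine ⟨Units.mkOfMulEqOne _ _ ha2', by rw [Units.val_mkOfMulEqOne, sq]; exact ha2', ?_⟩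
    have he1 : 1 ≤ e := by omega
    have hb0 : f (A 0 1) = 0 := zmod_cast_eq_zero_of_two_mul e he1 _ h01
    have hc0 : f (A 1 0) = 0 := zmod_cast_eq_zero_of_two_mul e he1 _ h10
    have hmap : ((Matrix.SpecialLinearGroup.map (n := Fin 2) f M :
        Matrix (Fin 2) (Fin 2) (ZMod (2 ^ (e - 1))))) = A.map f := rfl
    rw [hmap]
    ext i j
    fin_cases i <;> fin_cases j <;>
        simp [Matrix.map_apply, Matrix.one_apply, Units.val_mkOfMulEqOne, hb0, hc0]
    exact congrArg f h00
end

section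
/- Let e ≥ 2 and let M ∈ SL_2(ℤ/2^eℤ) satisfy M² = I. Then the reduction of M in SL_2(ℤ/2^{e-1}ℤ) is a scalar matrix u·I with u² = 1. -/
/-- If `2 * x = 0` in `ZMod (2^e)` with `e ≥ 1`, then `x` maps to `0` in `ZMod (2^(e-1))`. -/
lemma key_two (e : ℕ) (he : 1 ≤ e) (x : ZMod (2^e)) (h : 2 * x = 0) :
    ZMod.castHom (pow_dvd_pow 2 (Nat.sub_le e 1)) (ZMod (2^(e-1))) x = 0 := by
  have hx : (2^(e-1) : ℕ) ∣ x.val := by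
    have h2 : ((2 * x.val : ℕ) : ZMod (2^e)) = 0 := by
      push_cast
      rw [ZMod.natCast_val, ZMod.cast_id]
      exact h
    rw [ZMod.natCast_eq_zero_iff] at h2
    obtain ⟨k, hk⟩ := h2
    have h2e : 2^e = 2 * 2^(e-1) := by
      rw [← pow_succ']
      congr 1; omega
    have hk2 : 2 * x.val = 2 * (2^(e-1) * k) := by rw [hk, h2e]; ring
    exact ⟨k, by omega⟩
  have hcast : (x.val : ZMod (2^(e-1))) = 0 :=
    (ZMod.natCast_eq_zero_iff _ _).mpr hx
  rw [ZMod.castHom_apply]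
  rwa [ZMod.natCast_val] at hcast

/-- Let `e ≥ 2` and `M ∈ SL_2(ℤ/2^eℤ)` with `M² = I`. Then the reduction
of `M` in `SL_2(ℤ/2^(e-1)ℤ)` is a scalar matrix `u·I` with `u² = 1`. -/
theorem stmt_11 (e : ℕ) (he : 2 ≤ e)
    (M : Matrix.SpecialLinearGroup (Fin 2) (ZMod (2 ^ e)))
    (hM : M ^ 2 = 1) :
    ∃ u : (ZMod (2 ^ (e - 1)))ˣ, (u : ZMod (2 ^ (e - 1))) ^ 2 = 1 ∧
      (Matrix.SpecialLinearGroup.map (n := Fin 2)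
          (ZMod.castHom (pow_dvd_pow 2 (Nat.sub_le e 1)) (ZMod (2 ^ (e - 1)))) M :
        Matrix (Fin 2) (Fin 2) (ZMod (2 ^ (e - 1))))
        = (u : ZMod (2 ^ (e - 1))) • (1 : Matrix (Fin 2) (Fin 2) (ZMod (2 ^ (e - 1)))) := by
  have hene : e ≠ 0 := by omega
  set R := ZMod (2^e)
  set S := ZMod (2^(e-1))
  set φ := ZMod.castHom (pow_dvd_pow 2 (Nat.sub_le e 1)) S with hφ
  set a := (M : Matrix (Fin 2) (Fin 2) R) 0 0 with ha
  set b := (M : Matrix (Fin 2) (Fin 2) R) 0 1 with hb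
  set c := (M : Matrix (Fin 2) (Fin 2) R) 1 0 with hc
  set d := (M : Matrix (Fin 2) (Fin 2) R) 1 1 with hd
  have h2 : (M : Matrix (Fin 2) (Fin 2) R) * M = 1 := by
    have := congrArg (fun N : Matrix.SpecialLinearGroup (Fin 2) R =>
      (N : Matrix (Fin 2) (Fin 2) R)) hM
    simpa [pow_two] using this
  have e00 : a * a + b * c = 1 := by
    have := congrFun (congrFun h2 0) 0
    simpa [Matrix.mul_apply, Fin.sum_univ_two, Matrix.one_apply] using this
  have e01 : a * b + b * d = 0 := by
    have := congrFun (congrFun h2 0) 1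
    simpa [Matrix.mul_apply, Fin.sum_univ_two, Matrix.one_apply] using this
  have e10 : c * a + d * c = 0 := by
    have := congrFun (congrFun h2 1) 0
    simpa [Matrix.mul_apply, Fin.sum_univ_two, Matrix.one_apply] using this
  have e11 : c * b + d * d = 1 := by
    have := congrFun (congrFun h2 1) 1
    simpa [Matrix.mul_apply, Fin.sum_univ_two, Matrix.one_apply] using this
  have hdet : a * d - b * c = 1 := by
    have := M.2
    rwa [Matrix.det_fin_two] at this
  set t : R := a + d with ht
  have hta : t * a = 2 := by rw [ht]; linear_combination e00 + hdet
  have htd : t * d = 2 := by rw [ht]; linear_combination e11 + hdet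
  have htb : t * b = 0 := by rw [ht]; linear_combination e01
  have htc : t * c = 0 := by rw [ht]; linear_combination e10
  -- t is even
  have hteven : (2 : ℕ) ∣ t.val := by
    have h4 : t * t = 4 := by linear_combination hta + htd
    have hz := congrArg (ZMod.castHom (dvd_pow_self 2 hene) (ZMod 2)) h4
    rw [map_mul] at hz
    have h40 : (ZMod.castHom (dvd_pow_self 2 hene) (ZMod 2)) (4 : R) = 0 := by
      have : (4 : R) = ((4 : ℕ) : R) := by norm_cast
      rw [this, map_natCast]
      decide
    rw [h40] at hz
    have hψt : (ZMod.castHom (dvd_pow_self 2 hene) (ZMod 2)) t = 0 := by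
      have key : ∀ z : ZMod 2, z * z = 0 → z = 0 := by decide
      exact key _ hz
    have : (t.val : ZMod 2) = 0 := by
      rw [ZMod.natCast_val]
      rw [ZMod.castHom_apply] at hψt
      exact hψt
    rwa [ZMod.natCast_eq_zero_iff] at this
  set s : R := ((t.val / 2 : ℕ) : R) with hs
  have hts : t = 2 * s := by
    rw [hs]
    have hvt : (t.val : R) = t := by rw [ZMod.natCast_val, ZMod.cast_id]
    have h' : 2 * (t.val / 2) = t.val := by omega
    have h2' : (2 : R) * ((t.val / 2 : ℕ) : R) = ((2 * (t.val / 2) : ℕ) : R) := by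
      rw [Nat.cast_mul]; norm_num
    rw [h2', h', hvt]
  -- φ(s) * φ(a) = 1
  have hsa : φ s * φ a = 1 := by
    have h0 : 2 * (s * a - 1) = 0 := by
      have h1 : (2 * s) * a = 2 := by rw [← hts]; exact hta
      linear_combination h1
    have := key_two e (by omega) _ h0
    rw [map_sub, map_mul, map_one, sub_eq_zero] at this
    exact this
  have hb0 : φ b = 0 := by
    have h0 : 2 * (s * b) = 0 := by
      have h1 : (2 * s) * b = 0 := by rw [← hts]; exact htb
      linear_combination h1
    have h' := key_two e (by omega) _ h0
    rw [map_mul] at h'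
    calc φ b = (φ s * φ a) * φ b := by rw [hsa, one_mul]
    _ = φ a * (φ s * φ b) := by ring
    _ = 0 := by rw [h', mul_zero]
  have hc0 : φ c = 0 := by
    have h0 : 2 * (s * c) = 0 := by
      have h1 : (2 * s) * c = 0 := by rw [← hts]; exact htc
      linear_combination h1
    have h' := key_two e (by omega) _ h0
    rw [map_mul] at h'
    calc φ c = (φ s * φ a) * φ c := by rw [hsa, one_mul]
    _ = φ a * (φ s * φ c) := by ring
    _ = 0 := by rw [h', mul_zero]
  have had : φ a = φ d := by
    have h0 : 2 * (s * (a - d)) = 0 := by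
      have h1 : (2 * s) * (a - d) = 0 := by rw [← hts]; linear_combination hta - htd
      linear_combination h1
    have h' := key_two e (by omega) _ h0
    rw [map_mul] at h'
    have hz : φ a - φ d = 0 := by
      calc φ a - φ d = (φ s * φ a) * (φ a - φ d) := by rw [hsa, one_mul]
      _ = φ a * (φ s * φ (a - d)) := by rw [map_sub]; ring
      _ = 0 := by rw [h', mul_zero]
    linear_combination hz
  have hasq : φ a * φ a = 1 := by
    have hφdet := congrArg φ hdet
    rw [map_sub, map_mul, map_mul, map_one, hb0, zero_mul, sub_zero, ← had] at hφdet
    exact hφdet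
  refine ⟨⟨φ a, φ a, hasq, hasq⟩, by simpa [pow_two] using hasq, ?_⟩
  have hcoe : ((Matrix.SpecialLinearGroup.map (n := Fin 2) φ M :
      Matrix.SpecialLinearGroup (Fin 2) S) : Matrix (Fin 2) (Fin 2) S)
      = ((M : Matrix (Fin 2) (Fin 2) R)).map φ := rfl
  rw [hcoe]
  ext i j
  fin_cases i <;> fin_cases j <;>
    simp [Matrix.map_apply, Matrix.smul_apply, Matrix.one_apply, ← ha, ← hb, ← hc, ← hd,
      hb0, hc0, had]
end

section
/- Let p be an odd prime, g ≥ 1, and e ≥ 1. Then rank_p(SL_{2g}(ℤ/p^eℤ)) ≤ (4g² - 1) + rank_p(SL_{2g}(ℤ/pℤ)). In particular, if rank_p(SL_{2g}(ℤ/pℤ)) = g², then rank_p(SL_{2g}(ℤ/p^eℤ)) ≤ 5g² - 1. -/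
/-! Auxiliary lemmas -/

lemma zmod_dvd_of_dvd_val {N : ℕ} [NeZero N] (d : ℕ) (u : ZMod N) (h : d ∣ u.val) :
    (d : ZMod N) ∣ u := by
  obtain ⟨t, ht⟩ := h
  refine ⟨(t : ZMod N), ?_⟩
  rw [← u.natCast_zmod_val, ht]
  push_cast
  rfl

lemma dvd_val_of_eq_mul {N : ℕ} [NeZero N] (d : ℕ) (hd : d ∣ N) (u w : ZMod N)
    (h : u = (d : ZMod N) * w) : d ∣ u.val := by
  have : u = ((d * w.val : ℕ) : ZMod N) := by
    rw [h]; push_cast [w.natCast_zmod_val]; ring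
  rw [this, ZMod.val_natCast]
  exact (Nat.dvd_mod_iff hd).mpr ⟨w.val, rfl⟩

/-- Finite `ZMod p`-vector spaces are `(ZMod p)^d` with cardinality `p^d`. -/
lemma zmodVec_struct (p : ℕ) (hp : p.Prime) (M : Type*) [AddCommGroup M]
    [Module (ZMod p) M] [Finite M] :
    ∃ d : ℕ, Nonempty (M ≃+ (Fin d → ZMod p)) ∧ Nat.card M = p ^ d := by
  haveI : Fact p.Prime := ⟨hp⟩
  haveI : Module.Finite (ZMod p) M := Module.Finite.of_finite
  let d := Module.finrank (ZMod p) M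
  let b : Module.Basis (Fin d) (ZMod p) M := Module.finBasis (ZMod p) M
  refine ⟨d, ⟨b.equivFun.toAddEquiv⟩, ?_⟩
  rw [Nat.card_congr b.equivFun.toAddEquiv.toEquiv]
  simp [Nat.card_pi, Nat.card_eq_fintype_card]

/-- Every finite group in which all elements commute and satisfy `x^p = 1` is
isomorphic to `(Fin d → Multiplicative (ZMod p))` with `p^d` its cardinality. -/
lemma elemAbelian_struct (p : ℕ) (hp : p.Prime) (G : Type*) [grp : Group G] [Finite G]
    (hc : ∀ a b : G, a * b = b * a) (hord : ∀ a : G, a ^ p = 1) :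
    ∃ d : ℕ, Nonempty (G ≃* (Fin d → Multiplicative (ZMod p))) ∧ Nat.card G = p ^ d := by
  letI cg : CommGroup G := { grp with mul_comm := hc }
  letI acg : AddCommGroup (Additive G) := Additive.addCommGroup
  letI mod : Module (ZMod p) (Additive G) := AddCommGroup.zmodModule (fun x => hord x.toMul)
  haveI fin : Finite (Additive G) := inferInstanceAs (Finite G)
  obtain ⟨d, ⟨ae⟩, hcard⟩ := zmodVec_struct p hp (Additive G)
  let me0 : Multiplicative (Additive G) ≃* Multiplicative (Fin d → ZMod p) :=
    AddEquiv.toMultiplicative ae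
  let me1 : G ≃* Multiplicative (Additive G) := MulEquiv.refl G
  let me2 : Multiplicative (Fin d → ZMod p) ≃* (Fin d → Multiplicative (ZMod p)) :=
    MulEquiv.piMultiplicative _
  refine ⟨d, ⟨(me1.trans me0).trans me2⟩, ?_⟩
  rw [← hcard]
  exact (Nat.card_congr (MulEquiv.refl G).toEquiv)

/-- Binomial expansion: `(1 + p^k A)^p = 1 + p^(k+1) A + p^(k+2) C` for integer matrices,
`p` an odd prime, `k ≥ 1`. -/
lemma pow_p_expand (p k : ℕ) (hp : p.Prime) (hodd : Odd p) (hk : 1 ≤ k)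
    {n : Type*} [DecidableEq n] [Fintype n] (A : Matrix n n ℤ) :
    ∃ C : Matrix n n ℤ,
      (1 + (p : ℤ) ^ k • A) ^ p = 1 + (p : ℤ) ^ (k + 1) • A + (p : ℤ) ^ (k + 2) • C := by
  have hp2 : 2 ≤ p := hp.two_le
  have hpne2 : p ≠ 2 := by rintro rfl; simp [Nat.odd_iff] at hodd
  have hp3 : 3 ≤ p := by omega
  set x : Matrix n n ℤ := (p : ℤ) ^ k • A with hx
  have hcomm : Commute x (1 : Matrix n n ℤ) := Commute.one_right _
  have hexp := hcomm.add_pow p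
  have key : ∀ m : ℕ, x ^ m * 1 ^ (p - m) * ((p.choose m : ℕ) : Matrix n n ℤ)
      = ((p ^ (k * m) * p.choose m : ℕ) : ℤ) • A ^ m := by
    intro m
    rw [one_pow, mul_one, hx, smul_pow, ← pow_mul,
      ← (Nat.cast_commute (p.choose m) ((p : ℤ) ^ (k * m) • A ^ m)).eq,
      ← nsmul_eq_mul, ← Nat.cast_smul_eq_nsmul ℤ, smul_smul]
    push_cast
    ring_nf
  have hdvd : ∀ m ∈ Finset.Ico 2 (p + 1), p ^ (k + 2) ∣ p ^ (k * m) * p.choose m := by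
    intro m hm
    simp only [Finset.mem_Ico] at hm
    rcases eq_or_lt_of_le (Nat.lt_succ_iff.mp hm.2) with hmp | hmp
    · exact dvd_mul_of_dvd_left (pow_dvd_pow p (by rw [hmp]; nlinarith [hm.1])) _
    · have h1 : p ∣ p.choose m := hp.dvd_choose_self (by omega) hmp
      have h2 : p ^ (k + 1) ∣ p ^ (k * m) := pow_dvd_pow p (by nlinarith [hm.1])
      calc p ^ (k + 2) = p ^ (k + 1) * p := by ring
      _ ∣ p ^ (k * m) * p.choose m := mul_dvd_mul h2 h1
  refine ⟨∑ m ∈ Finset.Ico 2 (p + 1), ((p ^ (k * m) * p.choose m / p ^ (k + 2) : ℕ) : ℤ) • A ^ m, ?_⟩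
  have hsplit : Finset.range (p + 1) = insert 0 (insert 1 (Finset.Ico 2 (p + 1))) := by
    ext m; simp [Finset.mem_range, Finset.mem_Ico]; omega
  rw [add_comm (1 : Matrix n n ℤ) x, hexp, hsplit,
    Finset.sum_insert (by simp), Finset.sum_insert (by simp)]
  simp only [key]
  rw [Finset.smul_sum]
  have e0 : ((p ^ (k * 0) * p.choose 0 : ℕ) : ℤ) • A ^ 0 = (1 : Matrix n n ℤ) := by simp
  have e1 : ((p ^ (k * 1) * p.choose 1 : ℕ) : ℤ) • A ^ 1 = (p : ℤ) ^ (k + 1) • A := by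
    simp [Nat.choose_one_right, pow_succ]
  rw [e0, e1, add_assoc]
  congr 1
  congr 1
  refine Finset.sum_congr rfl fun m hm => ?_
  rw [smul_smul]
  congr 1
  rw [← Nat.cast_pow, ← Nat.cast_mul]
  norm_cast
  exact (Nat.mul_div_cancel' (hdvd m hm)).symm

/-- If `x ≡ 1 mod p^k` (entrywise) and `x^p = 1`, then `x ≡ 1 mod p^(k+1)`, as long
as `k + 2 ≤ e`. -/
lemma order_p_step (p e k : ℕ) (hp : p.Prime) (hodd : Odd p) (hk : 1 ≤ k) (hke : k + 2 ≤ e)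
    {n : Type*} [DecidableEq n] [Fintype n] (x : Matrix n n (ZMod (p ^ e)))
    (hxp : x ^ p = 1) (hdiv : ∀ i j, p ^ k ∣ ((x - 1) i j).val) :
    ∀ i j, p ^ (k + 1) ∣ ((x - 1) i j).val := by
  haveI : NeZero (p ^ e) := ⟨pow_ne_zero e hp.ne_zero⟩
  let Z : Matrix n n ℤ := fun i j => ((((x - 1) i j).val / p ^ k : ℕ) : ℤ)
  let φ : Matrix n n ℤ →+* Matrix n n (ZMod (p ^ e)) := (Int.castRingHom (ZMod (p ^ e))).mapMatrix
  have hφ : ∀ (M : Matrix n n ℤ) i j, φ M i j = ((M i j : ℤ) : ZMod (p ^ e)) := fun M i j => rfl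
  have hentry : ∀ i j, (x - 1) i j = (p : ZMod (p ^ e)) ^ k * ((Z i j : ℤ) : ZMod (p ^ e)) := by
    intro i j
    show (x - 1) i j
      = (p : ZMod (p ^ e)) ^ k * (((((x - 1) i j).val / p ^ k : ℕ) : ℤ) : ZMod (p ^ e))
    rw [Int.cast_natCast, ← Nat.cast_pow, ← Nat.cast_mul, Nat.mul_div_cancel' (hdiv i j),
      ZMod.natCast_zmod_val]
  have hxeq : x = φ (1 + (p : ℤ) ^ k • Z) := by
    have hsub : φ ((p : ℤ) ^ k • Z) = x - 1 := by
      ext i j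
      rw [hφ, Matrix.smul_apply, smul_eq_mul, hentry i j]
      push_cast
      ring
    rw [map_add, map_one, hsub]
    abel
  obtain ⟨C, hC⟩ := pow_p_expand p k hp hodd hk Z
  have hone : (1 : Matrix n n (ZMod (p ^ e))) = φ ((1 + (p : ℤ) ^ k • Z) ^ p) := by
    rw [map_pow, ← hxeq, hxp]
  rw [hC, map_add, map_add, map_one] at hone
  have h0m : φ ((p : ℤ) ^ (k + 1) • Z) + φ ((p : ℤ) ^ (k + 2) • C) = 0 := by
    calc φ ((p : ℤ) ^ (k + 1) • Z) + φ ((p : ℤ) ^ (k + 2) • C)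
        = (1 + φ ((p : ℤ) ^ (k + 1) • Z) + φ ((p : ℤ) ^ (k + 2) • C)) - 1 := by abel
    _ = 0 := by rw [← hone]; exact sub_self 1
  intro i j
  have hz0 := congrArg (fun M => M i j) h0m
  simp only [Matrix.add_apply, Matrix.zero_apply, hφ, Matrix.smul_apply, smul_eq_mul] at hz0
  set zZ : ZMod (p ^ e) := ((Z i j : ℤ) : ZMod (p ^ e)) with hzZ
  set zC : ZMod (p ^ e) := ((C i j : ℤ) : ZMod (p ^ e)) with hzC
  have hz : (p : ZMod (p ^ e)) ^ (k + 1) * (zZ + (p : ZMod (p ^ e)) * zC) = 0 := by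
    push_cast at hz0
    linear_combination hz0
  set z : ZMod (p ^ e) := zZ + (p : ZMod (p ^ e)) * zC with hzdef
  have hdvd_e : p ^ e ∣ p ^ (k + 1) * z.val := by
    rw [← ZMod.natCast_eq_zero_iff]
    push_cast [z.natCast_zmod_val]
    exact hz
  have h1 : p ^ (k + 1) * p ^ (e - (k + 1)) ∣ p ^ (k + 1) * z.val := by
    rw [← pow_add, show k + 1 + (e - (k + 1)) = e by omega]
    exact hdvd_e
  have h1' : p ^ (e - (k + 1)) ∣ z.val :=
    (Nat.mul_dvd_mul_iff_left (pow_pos hp.pos (k + 1))).mp h1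
  have h2 : p ∣ z.val := dvd_trans (dvd_pow_self p (by omega : e - (k + 1) ≠ 0)) h1'
  have h3 : (p : ZMod (p ^ e)) ∣ z := zmod_dvd_of_dvd_val p z h2
  have h4 : (p : ZMod (p ^ e)) ∣ zZ := by
    have hzz : zZ = z - (p : ZMod (p ^ e)) * zC := by rw [hzdef]; ring
    rw [hzz]
    exact dvd_sub h3 (Dvd.intro _ rfl)
  obtain ⟨w, hw⟩ := h4
  have h5 : (x - 1) i j = ((p ^ (k + 1) : ℕ) : ZMod (p ^ e)) * w := by
    rw [hentry i j, ← hzZ, hw]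
    push_cast
    ring
  exact dvd_val_of_eq_mul (p ^ (k + 1)) (pow_dvd_pow p (by omega)) _ w h5

/-- An element of order dividing `p` in the congruence kernel lies in the last layer. -/
lemma order_p_last (p e : ℕ) (hp : p.Prime) (hodd : Odd p) (he : 2 ≤ e)
    {n : Type*} [DecidableEq n] [Fintype n] (x : Matrix n n (ZMod (p ^ e)))
    (hxp : x ^ p = 1) (hbase : ∀ i j, p ∣ ((x - 1) i j).val) :
    ∀ i j, p ^ (e - 1) ∣ ((x - 1) i j).val := by
  have main : ∀ k, 1 ≤ k → k ≤ e - 1 → ∀ i j, p ^ k ∣ ((x - 1) i j).val := by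
    intro k
    induction k with
    | zero => omega
    | succ m ih =>
      intro _ hle i j
      rcases Nat.eq_zero_or_pos m with rfl | hm
      · simpa [pow_one] using hbase i j
      · exact order_p_step p e m hp hodd hm (by omega) x hxp (ih hm (by omega)) i j
  exact main (e - 1) (by omega) le_rfl

/-- Trace of the "last layer coordinate" of a determinant-one matrix vanishes mod `p`. -/
lemma trace_layer_zero (p e : ℕ) (hp : p.Prime) (he : 2 ≤ e) {m : ℕ}
    (x : Matrix (Fin m) (Fin m) (ZMod (p ^ e))) (hdet : x.det = 1)
    (hdiv : ∀ i j, p ^ (e - 1) ∣ ((x - 1) i j).val) :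
    ∑ i : Fin m, ((((x - 1) i i).val / p ^ (e - 1) : ℕ) : ZMod p) = 0 := by
  haveI : NeZero (p ^ e) := ⟨pow_ne_zero e hp.ne_zero⟩
  let B : Matrix (Fin m) (Fin m) (ZMod (p ^ e)) := fun i j => ((((x - 1) i j).val / p ^ (e - 1) : ℕ) : ZMod (p ^ e))
  have hentry : ∀ i j, (x - 1) i j = (p : ZMod (p ^ e)) ^ (e - 1) * B i j := by
    intro i j
    show (x - 1) i j = (p : ZMod (p ^ e)) ^ (e - 1) * ((((x - 1) i j).val / p ^ (e - 1) : ℕ) : ZMod (p ^ e))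
    rw [← Nat.cast_pow, ← Nat.cast_mul, Nat.mul_div_cancel' (hdiv i j), ZMod.natCast_zmod_val]
  have hxB : x = 1 + (p : ZMod (p ^ e)) ^ (e - 1) • B := by
    ext i j
    have := hentry i j
    rw [Matrix.sub_apply] at this
    rw [Matrix.add_apply, Matrix.smul_apply, smul_eq_mul]
    linear_combination this
  have hpe : (p : ZMod (p ^ e)) ^ e = 0 := by
    rw [← Nat.cast_pow, ZMod.natCast_self]
  have hr2 : ((p : ZMod (p ^ e)) ^ (e - 1)) ^ 2 = 0 := by
    rw [← pow_mul, show (e - 1) * 2 = e + (e - 2) by omega, pow_add, hpe, zero_mul]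
  have hdet2 := Matrix.det_one_add_smul ((p : ZMod (p ^ e)) ^ (e - 1)) B
  rw [← hxB, hdet, hr2, mul_zero, add_zero] at hdet2
  have htr : (p : ZMod (p ^ e)) ^ (e - 1) * B.trace = 0 := by linear_combination -hdet2
  have hdvd_e : p ^ e ∣ p ^ (e - 1) * B.trace.val := by
    rw [← ZMod.natCast_eq_zero_iff]
    push_cast [B.trace.natCast_zmod_val]
    exact htr
  have h1 : p ^ (e - 1) * p ∣ p ^ (e - 1) * B.trace.val := by
    rw [← pow_succ, show e - 1 + 1 = e by omega]
    exact hdvd_e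
  have h2 : p ∣ B.trace.val := (Nat.mul_dvd_mul_iff_left (pow_pos hp.pos (e - 1))).mp h1
  have hdd : (p : ℕ) ∣ p ^ e := dvd_pow_self p (by omega)
  have hcast : (ZMod.castHom hdd (ZMod p)) B.trace = 0 := by
    rw [ZMod.castHom_apply, ← ZMod.natCast_val, ZMod.natCast_eq_zero_iff]
    exact h2
  calc ∑ i : Fin m, ((((x - 1) i i).val / p ^ (e - 1) : ℕ) : ZMod p)
      = (ZMod.castHom hdd (ZMod p)) B.trace := by
        rw [Matrix.trace, map_sum]
        refine Finset.sum_congr rfl fun i _ => ?_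
        rw [Matrix.diag_apply, show B i i = ((((x - 1) i i).val / p ^ (e - 1) : ℕ) : ZMod (p ^ e)) from rfl,
          map_natCast]
  _ = 0 := hcast

lemma torsion_layer_card (p e : ℕ) (hp : p.Prime) (hodd : Odd p) (he : 2 ≤ e) {m : ℕ} (hm : 0 < m) :
    Nat.card {x : Matrix.SpecialLinearGroup (Fin m) (ZMod (p ^ e)) //
      x ^ p = 1 ∧ ∀ i j, p ∣ (((x : Matrix (Fin m) (Fin m) (ZMod (p ^ e))) - 1) i j).val}
      ≤ p ^ (m * m - 1) := by
  haveI : NeZero (p ^ e) := ⟨pow_ne_zero e hp.ne_zero⟩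
  haveI : NeZero p := ⟨hp.ne_zero⟩
  set q0 : Fin m × Fin m := (⟨0, hm⟩, ⟨0, hm⟩) with hq0
  set Φ : {x : Matrix.SpecialLinearGroup (Fin m) (ZMod (p ^ e)) //
      x ^ p = 1 ∧ ∀ i j, p ∣ (((x : Matrix (Fin m) (Fin m) (ZMod (p ^ e))) - 1) i j).val} →
      ({q : Fin m × Fin m // q ≠ q0} → ZMod p) :=
    fun x q => (((((x.1 : Matrix (Fin m) (Fin m) (ZMod (p ^ e))) - 1) q.1.1 q.1.2).val
      / p ^ (e - 1) : ℕ) : ZMod p) with hΦ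
  -- facts about elements of the subtype
  have hlast : ∀ x : {x : Matrix.SpecialLinearGroup (Fin m) (ZMod (p ^ e)) //
      x ^ p = 1 ∧ ∀ i j, p ∣ (((x : Matrix (Fin m) (Fin m) (ZMod (p ^ e))) - 1) i j).val},
      ∀ i j, p ^ (e - 1) ∣ (((x.1 : Matrix (Fin m) (Fin m) (ZMod (p ^ e))) - 1) i j).val := by
    intro x
    have hpow : (x.1 : Matrix (Fin m) (Fin m) (ZMod (p ^ e))) ^ p = 1 := by
      have := congrArg (fun y : Matrix.SpecialLinearGroup (Fin m) (ZMod (p ^ e)) =>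
        (y : Matrix (Fin m) (Fin m) (ZMod (p ^ e)))) x.2.1
      simpa using this
    exact order_p_last p e hp hodd he _ hpow x.2.2
  have hquotlt : ∀ (u : ZMod (p ^ e)), u.val / p ^ (e - 1) < p := by
    intro u
    rw [Nat.div_lt_iff_lt_mul (pow_pos hp.pos (e - 1))]
    calc u.val < p ^ e := ZMod.val_lt u
    _ = p * p ^ (e - 1) := by rw [← pow_succ']; congr 1; omega
  have htraces : ∀ x : {x : Matrix.SpecialLinearGroup (Fin m) (ZMod (p ^ e)) //
      x ^ p = 1 ∧ ∀ i j, p ∣ (((x : Matrix (Fin m) (Fin m) (ZMod (p ^ e))) - 1) i j).val},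
      ∑ i : Fin m, (((((x.1 : Matrix (Fin m) (Fin m) (ZMod (p ^ e))) - 1) i i).val
        / p ^ (e - 1) : ℕ) : ZMod p) = 0 := by
    intro x
    exact trace_layer_zero p e hp he _ x.1.2 (hlast x)
  have hinj : Function.Injective Φ := by
    intro x y h
    -- componentwise mod-p equality for all entries
    have key : ∀ i j,
        ((((x.1 : Matrix (Fin m) (Fin m) (ZMod (p ^ e))) - 1) i j).val / p ^ (e - 1) : ℕ)
        = ((((y.1 : Matrix (Fin m) (Fin m) (ZMod (p ^ e))) - 1) i j).val / p ^ (e - 1) : ℕ) := by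
      have castkey : ∀ i j,
          (((((x.1 : Matrix (Fin m) (Fin m) (ZMod (p ^ e))) - 1) i j).val / p ^ (e - 1) : ℕ)
            : ZMod p)
          = (((((y.1 : Matrix (Fin m) (Fin m) (ZMod (p ^ e))) - 1) i j).val / p ^ (e - 1) : ℕ)
            : ZMod p) := by
        intro i j
        rcases eq_or_ne (i, j) q0 with hq | hq
        · -- the (0,0) entry: use the trace relation
          rw [hq0, Prod.ext_iff] at hq
          obtain ⟨hi, hj⟩ := hq
          simp only at hi hj
          subst hi; subst hj
          have hxs := htraces x
          have hys := htraces y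
          rw [← Finset.add_sum_erase Finset.univ _ (Finset.mem_univ (⟨0, hm⟩ : Fin m))]
            at hxs hys
          have hrest : ∑ i ∈ Finset.univ.erase (⟨0, hm⟩ : Fin m),
              (((((x.1 : Matrix (Fin m) (Fin m) (ZMod (p ^ e))) - 1) i i).val
                / p ^ (e - 1) : ℕ) : ZMod p)
              = ∑ i ∈ Finset.univ.erase (⟨0, hm⟩ : Fin m),
              (((((y.1 : Matrix (Fin m) (Fin m) (ZMod (p ^ e))) - 1) i i).val
                / p ^ (e - 1) : ℕ) : ZMod p) := by
            refine Finset.sum_congr rfl fun i hi => ?_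
            have hine : i ≠ (⟨0, hm⟩ : Fin m) := (Finset.mem_erase.mp hi).1
            have hne : ((i, i) : Fin m × Fin m) ≠ q0 := by
              rw [hq0]
              simp only [ne_eq, Prod.mk.injEq, not_and]
              intro hcon
              exact absurd hcon hine
            exact congrFun h ⟨(i, i), hne⟩
          linear_combination hxs - hys - hrest
        · exact congrFun h ⟨(i, j), hq⟩
      intro i j
      have hc := castkey i j
      have hxlt := hquotlt (((x.1 : Matrix (Fin m) (Fin m) (ZMod (p ^ e))) - 1) i j)
      have hylt := hquotlt (((y.1 : Matrix (Fin m) (Fin m) (ZMod (p ^ e))) - 1) i j)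
      have := congrArg ZMod.val hc
      rwa [ZMod.val_cast_of_lt hxlt, ZMod.val_cast_of_lt hylt] at this
    -- recover equality of matrices
    apply Subtype.ext
    apply Subtype.ext
    ext i j
    have hvx := hlast x i j
    have hvy := hlast y i j
    have hveq : (((x.1 : Matrix (Fin m) (Fin m) (ZMod (p ^ e))) - 1) i j).val
        = (((y.1 : Matrix (Fin m) (Fin m) (ZMod (p ^ e))) - 1) i j).val := by
      rw [← Nat.div_mul_cancel hvx, ← Nat.div_mul_cancel hvy, key i j]
    have hentry : ((x.1 : Matrix (Fin m) (Fin m) (ZMod (p ^ e))) - 1) i j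
        = ((y.1 : Matrix (Fin m) (Fin m) (ZMod (p ^ e))) - 1) i j :=
      ZMod.val_injective _ hveq
    rw [Matrix.sub_apply, Matrix.sub_apply] at hentry
    linear_combination hentry
  calc Nat.card {x : Matrix.SpecialLinearGroup (Fin m) (ZMod (p ^ e)) //
      x ^ p = 1 ∧ ∀ i j, p ∣ (((x : Matrix (Fin m) (Fin m) (ZMod (p ^ e))) - 1) i j).val}
      ≤ Nat.card ({q : Fin m × Fin m // q ≠ q0} → ZMod p) :=
        Nat.card_le_card_of_injective Φ hinj
  _ = p ^ (m * m - 1) := by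
      rw [Nat.card_eq_fintype_card, Fintype.card_fun]
      congr 1
      · exact ZMod.card p
      · rw [Fintype.card_subtype_compl, Fintype.card_subtype_eq]
        simp [Fintype.card_prod]

lemma mult_zmod_pow (p : ℕ) (z : Multiplicative (ZMod p)) : z ^ p = 1 := by
  apply Multiplicative.toAdd.injective
  rw [toAdd_pow, toAdd_one, nsmul_eq_mul, ZMod.natCast_self, zero_mul]

/-- cardinality of a subgroup isomorphic to `(ZMod p)^r`. -/
lemma card_of_iso {p r : ℕ} {G : Type*} [Group G] (H : Subgroup G)
    (φ : H ≃* (Fin r → Multiplicative (ZMod p))) : Nat.card H = p ^ r := by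
  have hm : Nat.card (Multiplicative (ZMod p)) = p := by
    rw [Nat.card_congr Multiplicative.toAdd, Nat.card_zmod]
  rw [Nat.card_congr φ.toEquiv, Nat.card_pi]
  simp [hm]

lemma pRank_le_main (p g e : ℕ) (hp : p.Prime) (hodd : Odd p) (hg : 1 ≤ g) (he2 : 2 ≤ e) :
    pRank p (Matrix.SpecialLinearGroup (Fin (2 * g)) (ZMod (p ^ e)))
      ≤ (4 * g ^ 2 - 1) + pRank p (Matrix.SpecialLinearGroup (Fin (2 * g)) (ZMod p)) := by
  haveI : Fact p.Prime := ⟨hp⟩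
  haveI : NeZero (p ^ e) := ⟨pow_ne_zero e hp.ne_zero⟩
  haveI : NeZero p := ⟨hp.ne_zero⟩
  let G := Matrix.SpecialLinearGroup (Fin (2 * g)) (ZMod (p ^ e))
  let G1 := Matrix.SpecialLinearGroup (Fin (2 * g)) (ZMod p)
  refine csSup_le ⟨0, ⊥, ⟨MulEquiv.ofUnique⟩⟩ ?_
  rintro r ⟨H, ⟨φ⟩⟩
  -- H is elementary abelian of rank r
  have hHcomm : ∀ a b : H, a * b = b * a := fun a b =>
    φ.injective (by rw [map_mul, map_mul, mul_comm])
  have hHord : ∀ a : H, a ^ p = 1 := fun a =>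
    φ.injective (by rw [map_pow, map_one]; funext i; exact mult_zmod_pow p (φ a i))
  have hcardH : Nat.card H = p ^ r := card_of_iso H φ
  -- the reduction homomorphism
  let f : ZMod (p ^ e) →+* ZMod p := ZMod.castHom (dvd_pow_self p (by omega : e ≠ 0)) (ZMod p)
  let π : G →* G1 := Matrix.SpecialLinearGroup.map f
  let ψ : H →* G1 := π.comp H.subtype
  -- the range of ψ is elementary abelian; get its rank d
  obtain ⟨d, ⟨ι⟩, hdcard⟩ := elemAbelian_struct p hp ψ.range
    (by
      rintro ⟨a, ha⟩ ⟨b, hb⟩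
      obtain ⟨a', rfl⟩ := ha
      obtain ⟨b', rfl⟩ := hb
      apply Subtype.ext
      show ψ a' * ψ b' = ψ b' * ψ a'
      rw [← map_mul, ← map_mul, hHcomm])
    (by
      rintro ⟨a, ha⟩
      obtain ⟨a', rfl⟩ := ha
      apply Subtype.ext
      show ψ a' ^ p = 1
      rw [← map_pow, hHord, map_one])
  -- d is at most the p-rank of SL over ZMod p
  have hd_le : d ≤ pRank p G1 := by
    apply le_csSup
    · refine ⟨Nat.card G1, ?_⟩
      rintro r' ⟨H', ⟨φ'⟩⟩
      have h1 : Nat.card H' = p ^ r' := card_of_iso H' φ'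
      have h2 : Nat.card H' ≤ Nat.card G1 := Subgroup.card_le_card_group H'
      have h3 : r' < p ^ r' := Nat.lt_pow_self hp.one_lt
      omega
    · exact ⟨ψ.range, ⟨ι⟩⟩
  -- the kernel of ψ injects into the p-torsion of the congruence kernel
  have hker_le : Nat.card ψ.ker ≤ p ^ (2 * g * (2 * g) - 1) := by
    refine le_trans (Nat.card_le_card_of_injective
      (fun k : ψ.ker => (⟨k.1.1, ?_, ?_⟩ : {x : G //
        x ^ p = 1 ∧ ∀ i j, p ∣ (((x : Matrix (Fin (2 * g)) (Fin (2 * g)) (ZMod (p ^ e))) - 1) i j).val}))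
      ?_) (torsion_layer_card p e hp hodd he2 (by omega))
    · have := hHord k.1
      have := congrArg (Subgroup.subtype H) this
      simpa using this
    · intro i j
      have hk : ψ k.1 = 1 := k.2
      have hmat : f.mapMatrix ((k.1.1 : Matrix (Fin (2 * g)) (Fin (2 * g)) (ZMod (p ^ e))))
          = (1 : Matrix (Fin (2 * g)) (Fin (2 * g)) (ZMod p)) := by
        have := congrArg (fun y : G1 => (y : Matrix (Fin (2 * g)) (Fin (2 * g)) (ZMod p))) hk
        exact this
      have hentry : f ((((k.1.1 : G) : Matrix (Fin (2 * g)) (Fin (2 * g)) (ZMod (p ^ e))) - 1) i j) = 0 := by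
        rw [Matrix.sub_apply, map_sub]
        have h1 := congrArg (fun M : Matrix (Fin (2 * g)) (Fin (2 * g)) (ZMod p) => M i j) hmat
        simp only [RingHom.mapMatrix_apply, Matrix.map_apply] at h1
        rw [show f ((1 : Matrix (Fin (2 * g)) (Fin (2 * g)) (ZMod (p ^ e))) i j)
          = (1 : Matrix (Fin (2 * g)) (Fin (2 * g)) (ZMod p)) i j by
            rcases eq_or_ne i j with rfl | hij
            · simp [Matrix.one_apply_eq]
            · simp [Matrix.one_apply_ne hij]]
        rw [h1]
        exact sub_self _
      rwa [ZMod.castHom_apply, ← ZMod.natCast_val, ZMod.natCast_eq_zero_iff] at hentry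
    · intro a b hab
      simp only [Subtype.mk.injEq] at hab
      exact Subtype.ext (Subtype.ext hab)
  -- first isomorphism theorem and counting
  have h1iso : Nat.card H = Nat.card (H ⧸ ψ.ker) * Nat.card ψ.ker :=
    Subgroup.card_eq_card_quotient_mul_card_subgroup _
  have h2iso : Nat.card (H ⧸ ψ.ker) = Nat.card ψ.range :=
    Nat.card_congr (QuotientGroup.quotientKerEquivRange ψ).toEquiv
  have hkerdvd : Nat.card ψ.ker ∣ p ^ r := ⟨Nat.card (H ⧸ ψ.ker), by rw [← hcardH, h1iso]; ring⟩
  obtain ⟨s, hs_le, hs⟩ := (Nat.dvd_prime_pow hp).mp hkerdvd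
  have hrds : p ^ r = p ^ (d + s) := by
    rw [← hcardH, h1iso, h2iso, hdcard, hs, pow_add]
  have hr_eq : r = d + s := Nat.pow_right_injective hp.two_le hrds
  have hs_le' : s ≤ 2 * g * (2 * g) - 1 := by
    have := hs ▸ hker_le
    exact (Nat.pow_le_pow_iff_right hp.one_lt).mp this
  have hgg : 2 * g * (2 * g) - 1 = 4 * g ^ 2 - 1 := by ring_nf
  rw [hr_eq, add_comm d s]
  rw [hgg] at hs_le'
  exact add_le_add hs_le' hd_le


/-- Let `p` be an odd prime, `g ≥ 1`, `e ≥ 1`. Then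
`rank_p(SL_{2g}(ℤ/p^eℤ)) ≤ (4g² - 1) + rank_p(SL_{2g}(ℤ/pℤ))`. In particular, if
`rank_p(SL_{2g}(ℤ/pℤ)) = g²`, then `rank_p(SL_{2g}(ℤ/p^eℤ)) ≤ 5g² - 1`. -/
theorem stmt_13 (p g e : ℕ) (hp : p.Prime) (hodd : Odd p) (hg : 1 ≤ g) (he : 1 ≤ e) :
    pRank p (Matrix.SpecialLinearGroup (Fin (2 * g)) (ZMod (p ^ e)))
      ≤ (4 * g ^ 2 - 1) + pRank p (Matrix.SpecialLinearGroup (Fin (2 * g)) (ZMod p)) ∧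
    (pRank p (Matrix.SpecialLinearGroup (Fin (2 * g)) (ZMod p)) = g ^ 2 →
      pRank p (Matrix.SpecialLinearGroup (Fin (2 * g)) (ZMod (p ^ e))) ≤ 5 * g ^ 2 - 1) := by
  have hg2 : 1 ≤ g ^ 2 := Nat.one_le_pow 2 g (by omega)
  have hmain : pRank p (Matrix.SpecialLinearGroup (Fin (2 * g)) (ZMod (p ^ e)))
      ≤ (4 * g ^ 2 - 1) + pRank p (Matrix.SpecialLinearGroup (Fin (2 * g)) (ZMod p)) := by
    rcases eq_or_lt_of_le he with he1 | he2
    · rw [← he1, pow_one]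
      exact Nat.le_add_left _ _
    · exact pRank_le_main p g e hp hodd hg he2
  refine ⟨hmain, fun hEq => ?_⟩
  rw [hEq] at hmain
  set t := g ^ 2 with ht
  omega
end
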